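/- arXiv:1509.07007 — 5 statements merged into one kernel-verified Lean document; each statement's English description precedes it below -/
import Mathlib

section
/- Let r ≥ 2 and let H = (A, B, E) be an r-uniform bipartite hypergraph. If τ(E_S) > (2r − 3)(|S| − 1) for every subset S ⊆ A, then H admits a perfect matching. -/
open Finset

variable {V : Type*} [DecidableEq V]

/-- The `A`-vertices covered by a set of edges: `A(F) = ⋃ e ∈ F, e ∩ A`. -/
def AVerts (A : Finset V) (F : Finset (Finset V)) : Finset V :=
  F.biUnion fun e => e ∩ A

/-- The `B`-vertices covered by a set of edges: `B(F) = ⋃ e ∈ F, e ∩ B`. -/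
def BVerts (B : Finset V) (F : Finset (Finset V)) : Finset V :=
  F.biUnion fun e => e ∩ B

/-- `H = (A, B, E)` is an `r`-uniform bipartite hypergraph: `A` and `B` are disjoint,
and every edge `e ∈ E` satisfies `e ⊆ A ∪ B`, `|e ∩ A| = 1` and `|e ∩ B| = r - 1`. -/
def IsBipHypergraph (r : ℕ) (A B : Finset V) (E : Finset (Finset V)) : Prop :=
  Disjoint A B ∧ ∀ e ∈ E, e ⊆ A ∪ B ∧ (e ∩ A).card = 1 ∧ (e ∩ B).card = r - 1

/-- A partial matching: a set of pairwise disjoint edges of `E`. -/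
def IsPartialMatching (E M : Finset (Finset V)) : Prop :=
  M ⊆ E ∧ ∀ e ∈ M, ∀ f ∈ M, e ≠ f → Disjoint e f

/-- A perfect matching: a partial matching covering every vertex of `A`. -/
def IsPerfectMatching (A : Finset V) (E M : Finset (Finset V)) : Prop :=
  IsPartialMatching E M ∧ ∀ a ∈ A, ∃ e ∈ M, a ∈ e

/-- `E_S`: the edges of `E` meeting `S` in exactly one vertex. -/
def edgesOn (E : Finset (Finset V)) (S : Finset V) : Finset (Finset V) :=
  E.filter fun e => (e ∩ S).card = 1

/-- `τ(F)`: the minimum cardinality of a subset of `B` intersecting every edge of `F`. -/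
noncomputable def tau (B : Finset V) (F : Finset (Finset V)) : ℕ :=
  sInf {n : ℕ | ∃ T ⊆ B, T.card = n ∧ ∀ e ∈ F, (e ∩ T).Nonempty}

/-- `e` is immediately addable w.r.t. the matching `M`: it has no blocking edges. -/
def ImmAddable (B : Finset V) (M : Finset (Finset V)) (e : Finset V) : Prop :=
  ∀ f ∈ M, f ∩ e ∩ B = ∅

/-- A layer `(X, Y)` w.r.t. the matching `M`. -/
def IsLayer (B : Finset V) (E M X Y : Finset (Finset V)) : Prop :=
  X ⊆ E \ M ∧
  (∀ e ∈ X, ∀ f ∈ X, e ≠ f → e ∩ f ∩ B = ∅) ∧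
  (∀ f, f ∈ Y ↔ f ∈ M ∧ ∃ e ∈ X, (f ∩ e ∩ B).Nonempty) ∧
  (∀ f ∈ Y, ∃! e, e ∈ X ∧ (f ∩ e ∩ B).Nonempty)

/-- An alternating tree `T = (L_0, …, L_ℓ)` w.r.t. `M`, rooted at the unmatched vertex
`a0 ∈ A`. Layer `0` is `(∅, {{a0}})`, so that `A(Y_0) = {a0}` and `B(Y_0) = ∅`. -/
def IsAltTree (A B : Finset V) (E M : Finset (Finset V)) (a0 : V)
    (ℓ : ℕ) (X Y : ℕ → Finset (Finset V)) : Prop :=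
  a0 ∈ A ∧ (∀ e ∈ M, a0 ∉ e) ∧
  X 0 = ∅ ∧ Y 0 = {{a0}} ∧
  (∀ i, 1 ≤ i → i ≤ ℓ → IsLayer B E M (X i) (Y i)) ∧
  (∀ i, 1 ≤ i → i ≤ ℓ → AVerts A (X i) ⊆ AVerts A (Y (i - 1))) ∧
  (∀ i j, i ≤ ℓ → j ≤ ℓ → i ≠ j →
    Disjoint (BVerts B (X i ∪ Y i)) (BVerts B (X j ∪ Y j)))

/-- `F_{≤t} = F_0 ∪ … ∪ F_t`. -/
def upTo (F : ℕ → Finset (Finset V)) (t : ℕ) : Finset (Finset V) :=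
  (Finset.range (t + 1)).biUnion F

/-- `F_a ∪ … ∪ F_b`. -/
def unionIcc (F : ℕ → Finset (Finset V)) (a b : ℕ) : Finset (Finset V) :=
  (Finset.Icc a b).biUnion F

set_option linter.unusedSectionVars false
set_option maxHeartbeats 1000000

namespace HaxP

/-- Fold a list of digits into a number, base `b`, most significant first. -/
def lval (b : ℕ) : ℕ → List ℕ → ℕ
  | acc, [] => acc
  | acc, d :: l => lval b (acc * b + d) l

lemma lval_append (b acc l1 l2) : lval b acc (l1 ++ l2) = lval b (lval b acc l1) l2 := by
  induction l1 generalizing acc <;> simp [lval, *]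

lemma lval_ge (b acc) (l : List ℕ) : acc * b ^ l.length ≤ lval b acc l := by
  induction l generalizing acc with
  | nil => simp [lval]
  | cons d t ih =>
    have h1 : acc * b ^ (d :: t).length ≤ (acc * b + d) * b ^ t.length := by
      have : acc * b ^ (d :: t).length = (acc * b) * b ^ t.length := by
        simp [pow_succ]; ring
      rw [this]
      exact Nat.mul_le_mul_right _ (Nat.le_add_right _ d)
    exact le_trans h1 (ih (acc * b + d))

lemma lval_lt (b acc) (l : List ℕ) (h : ∀ d ∈ l, d < b) :
    lval b acc l < (acc + 1) * b ^ l.length := by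
  induction l generalizing acc with
  | nil => simp [lval]
  | cons d t ih =>
    have hd : d < b := h d (by simp)
    have h1 : lval b (acc * b + d) t < (acc * b + d + 1) * b ^ t.length :=
      ih _ (fun x hx => h x (by simp [hx]))
    have h2 : (acc * b + d + 1) * b ^ t.length ≤ (acc + 1) * b ^ (d :: t).length := by
      have : (acc + 1) * b ^ (d :: t).length = ((acc + 1) * b) * b ^ t.length := by
        simp [pow_succ]; ring
      rw [this]
      exact Nat.mul_le_mul_right _ (by rw [add_mul, one_mul]; omega)
    calc lval b (acc * b + d) t < (acc * b + d + 1) * b ^ t.length := h1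
      _ ≤ (acc + 1) * b ^ (d :: t).length := h2

lemma lval_lex (b : ℕ) (pre t1 t2 : List ℕ) (x y acc : ℕ) (hxy : x < y)
    (ht1 : ∀ d ∈ t1, d < b) (hx : x < b) (hlen : t1.length ≤ t2.length) :
    lval b acc (pre ++ x :: t1) < lval b acc (pre ++ y :: t2) := by
  have hb : 0 < b := lt_of_le_of_lt (Nat.zero_le x) hx
  rw [lval_append, lval_append]
  set v := lval b acc pre with hv
  show lval b (v * b + x) t1 < lval b (v * b + y) t2
  calc lval b (v * b + x) t1 < (v * b + x + 1) * b ^ t1.length := lval_lt _ _ _ ht1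
    _ ≤ (v * b + y) * b ^ t1.length := Nat.mul_le_mul_right _ (by omega)
    _ ≤ (v * b + y) * b ^ t2.length :=
        Nat.mul_le_mul_left _ (Nat.pow_le_pow_right hb hlen)
    _ ≤ lval b (v * b + y) t2 := lval_ge _ _ _

variable {V : Type*} [DecidableEq V]

/-- Digit list of a tree (head of `l` = newest layer): digits oldest-first, padded to
length `c+1` with pad digit `c+1`, base `c+2`. -/
def tmu (c : ℕ) (l : List (Finset V × Finset (Finset V))) : ℕ :=
  lval (c + 2) 0 ((l.reverse.map fun p => p.2.card) ++ List.replicate (c + 1 - l.length) (c + 1))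

lemma tmu_grow (c) (p : Finset V × Finset (Finset V)) (l) (hl : l.length ≤ c)
    (hp : p.2.card ≤ c) : tmu c (p :: l) < tmu c l := by
  unfold tmu
  have h1 : ((p :: l).reverse.map fun q => q.2.card) = (l.reverse.map fun q => q.2.card) ++ [p.2.card] := by
    simp
  have h2 : c + 1 - (p :: l).length = c - l.length := by
    simp only [List.length_cons]; omega
  have h3 : c + 1 - l.length = (c - l.length) + 1 := by omega
  rw [h1, h2, h3, List.replicate_succ, List.append_assoc, List.singleton_append]
  exact lval_lex _ _ _ _ _ _ _ (by omega : p.2.card < c + 1) (fun d hd => by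
      rw [List.eq_of_mem_replicate hd]; omega) (by omega) le_rfl

lemma tmu_swap (c) (l₁ : List (Finset V × Finset (Finset V))) (eo : Finset V)
    (Yo Y' : Finset (Finset V)) (l₂ : List (Finset V × Finset (Finset V)))
    (h : Y'.card < Yo.card) (hYo : Yo.card ≤ c)
    (hlen : (l₁ ++ (eo, Yo) :: l₂).length ≤ c) :
    tmu c ((eo, Y') :: l₂) < tmu c (l₁ ++ (eo, Yo) :: l₂) := by
  unfold tmu
  have hl2 : l₂.length ≤ c := by
    simp only [List.length_append, List.length_cons] at hlen; omega
  have h1 : (((eo, Y') :: l₂).reverse.map fun q => q.2.card)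
      = (l₂.reverse.map fun q => q.2.card) ++ [Y'.card] := by simp
  have h2 : c + 1 - ((eo, Y') :: l₂).length = c - l₂.length := by
    simp only [List.length_cons]; omega
  have h3 : ((l₁ ++ (eo, Yo) :: l₂).reverse.map fun q => q.2.card)
      = ((l₂.reverse.map fun q => q.2.card) ++ [Yo.card]) ++ (l₁.reverse.map fun q => q.2.card) := by
    simp
  rw [h1, h2, h3]
  rw [List.append_assoc, List.singleton_append, List.append_assoc, List.append_assoc,
    List.singleton_append]
  apply lval_lex _ _ _ _ _ _ _ h
  · intro d hd
    rw [List.eq_of_mem_replicate hd]; omega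
  · omega
  · simp only [List.length_replicate, List.length_append, List.length_map,
      List.length_reverse, List.length_cons] at hlen ⊢
    omega

/-! ### Alternating trees (as lists of layers, newest layer first) -/

variable {V : Type*} [DecidableEq V]

/-- `A`-vertices of a tree: `a0` together with the `A`-vertices of all blocking layers. -/
def tS (A : Finset V) (a0 : V) : List (Finset V × Finset (Finset V)) → Finset V
  | [] => {a0}
  | p :: l => AVerts A p.2 ∪ tS A a0 l

/-- `B`-vertices of a tree. -/
def tBv (B : Finset V) : List (Finset V × Finset (Finset V)) → Finset V
  | [] => ∅
  | p :: l => (p.1 ∩ B ∪ BVerts B p.2) ∪ tBv B l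

/-- Union of all blocking layers of a tree. -/
def uY : List (Finset V × Finset (Finset V)) → Finset (Finset V)
  | [] => ∅
  | p :: l => p.2 ∪ uY l

/-- Validity of a tree w.r.t. the matching `M` and root `a0`. -/
def VT (A B : Finset V) (a0 : V) (E M : Finset (Finset V)) :
    List (Finset V × Finset (Finset V)) → Prop
  | [] => True
  | p :: l => VT A B a0 E M l ∧ p.1 ∈ E ∧ p.1 ∉ M ∧ p.1 ∩ A ⊆ tS A a0 l ∧
      (p.1 ∩ B) ∩ tBv B l = ∅ ∧ p.2 = M.filter (fun f => (f ∩ p.1 ∩ B).Nonempty) ∧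
      p.2.Nonempty

section Main

variable {k : ℕ} {A B : Finset V} {E M : Finset (Finset V)} {a0 : V}
  {e f g : Finset V} {l : List (Finset V × Finset (Finset V))}

lemma mem_AVerts {N : Finset (Finset V)} {a : V} :
    a ∈ AVerts A N ↔ ∃ f ∈ N, a ∈ f ∧ a ∈ A := by
  simp [AVerts, Finset.mem_biUnion, Finset.mem_inter]

lemma mem_BVerts {N : Finset (Finset V)} {x : V} :
    x ∈ BVerts B N ↔ ∃ f ∈ N, x ∈ f ∧ x ∈ B := by
  simp [BVerts, Finset.mem_biUnion, Finset.mem_inter]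

lemma eB_card (hH : IsBipHypergraph (k+2) A B E) (he : e ∈ E) : (e ∩ B).card = k + 1 := by
  have h := (hH.2 e he).2.2; omega

lemma eB_ne (hH : IsBipHypergraph (k+2) A B E) (he : e ∈ E) : (e ∩ B).Nonempty :=
  Finset.card_pos.mp (by rw [eB_card hH he]; omega)

lemma eA_single (hH : IsBipHypergraph (k+2) A B E) (he : e ∈ E) : ∃ a, e ∩ A = {a} :=
  Finset.card_eq_one.mp (hH.2 e he).2.1

lemma edge_inter_split (hH : IsBipHypergraph (k+2) A B E) (he : e ∈ E) (f : Finset V) :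
    e ∩ f = (e ∩ f ∩ A) ∪ (e ∩ f ∩ B) := by
  have hsub := (hH.2 e he).1
  ext x
  simp only [Finset.mem_inter, Finset.mem_union]
  constructor
  · rintro ⟨hx, hf⟩
    rcases Finset.mem_union.mp (hsub hx) with h | h
    · exact Or.inl ⟨⟨hx, hf⟩, h⟩
    · exact Or.inr ⟨⟨hx, hf⟩, h⟩
  · rintro (⟨⟨hx, hf⟩, _⟩ | ⟨⟨hx, hf⟩, _⟩) <;> exact ⟨hx, hf⟩

lemma matching_eq_of_inter (hM : IsPartialMatching E M) (he : e ∈ M) (hf : f ∈ M)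
    (hx : (e ∩ f).Nonempty) : e = f := by
  by_contra hne
  obtain ⟨x, hx⟩ := hx
  have := hM.2 e he f hf hne
  exact (Finset.disjoint_left.mp this (Finset.mem_inter.mp hx).1) (Finset.mem_inter.mp hx).2

lemma AVerts_card (hH : IsBipHypergraph (k+2) A B E) (hM : IsPartialMatching E M)
    {N : Finset (Finset V)} (hN : N ⊆ M) : (AVerts A N).card = N.card := by
  unfold AVerts
  rw [Finset.card_biUnion]
  · calc ∑ f ∈ N, (f ∩ A).card = ∑ _f ∈ N, 1 :=
        Finset.sum_congr rfl fun f hf => (hH.2 f (hM.1 (hN hf))).2.1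
      _ = N.card := by simp
  · intro x hx y hy hxy
    exact (hM.2 x (hN hx) y (hN hy) hxy).mono Finset.inter_subset_left
      Finset.inter_subset_left

lemma tS_subset (ha0A : a0 ∈ A) (l : List (Finset V × Finset (Finset V))) :
    tS A a0 l ⊆ A := by
  induction l with
  | nil => simpa [tS] using ha0A
  | cons p t ih =>
    exact Finset.union_subset (Finset.biUnion_subset.mpr fun e _ => Finset.inter_subset_right) ih

lemma tBv_subset (l : List (Finset V × Finset (Finset V))) : tBv B l ⊆ B := by
  induction l with
  | nil => simp [tBv]
  | cons p t ih =>
    refine Finset.union_subset (Finset.union_subset Finset.inter_subset_right ?_) ih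
    exact Finset.biUnion_subset.mpr fun e _ => Finset.inter_subset_right

lemma layer_sub (hVT : VT A B a0 E M l) : ∀ p ∈ l, p.2 ⊆ M := by
  induction l with
  | nil => simp
  | cons p t ih =>
    intro q hq
    rcases List.mem_cons.mp hq with rfl | hq
    · rw [hVT.2.2.2.2.2.1]; exact Finset.filter_subset _ _
    · exact ih hVT.1 q hq

lemma uY_sub (hVT : VT A B a0 E M l) : uY l ⊆ M := by
  induction l with
  | nil => simp [uY]
  | cons p t ih =>
    exact Finset.union_subset (layer_sub hVT p (by simp)) (ih hVT.1)

lemma mem_uY_Bsub (hVT : VT A B a0 E M l) (hf : f ∈ uY l) : f ∩ B ⊆ tBv B l := by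
  induction l with
  | nil => simp [uY] at hf
  | cons p t ih =>
    rcases Finset.mem_union.mp hf with h | h
    · refine Finset.Subset.trans ?_ Finset.subset_union_left
      refine Finset.Subset.trans ?_ Finset.subset_union_right
      intro x hx
      exact mem_BVerts.mpr ⟨f, h, (Finset.mem_inter.mp hx).1, (Finset.mem_inter.mp hx).2⟩
    · exact (ih hVT.1 h).trans Finset.subset_union_right

lemma blocker_mem_uY (hM : IsPartialMatching E M) (hVT : VT A B a0 E M l) (hf : f ∈ M)
    (hne : ((f ∩ B) ∩ tBv B l).Nonempty) : f ∈ uY l := by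
  induction l with
  | nil => simp [tBv] at hne
  | cons p t ih =>
    obtain ⟨x, hx⟩ := hne
    have hxfB := (Finset.mem_inter.mp hx).1
    have hxf := (Finset.mem_inter.mp hxfB).1
    have hxB := (Finset.mem_inter.mp hxfB).2
    rcases Finset.mem_union.mp (Finset.mem_inter.mp hx).2 with h | h
    · rcases Finset.mem_union.mp h with h | h
      · -- x ∈ p.1 ∩ B : f blocks p.1
        have : f ∈ p.2 := by
          rw [hVT.2.2.2.2.2.1]
          refine Finset.mem_filter.mpr ⟨hf, ⟨x, ?_⟩⟩
          simp only [Finset.mem_inter]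
          exact ⟨⟨hxf, (Finset.mem_inter.mp h).1⟩, hxB⟩
        exact Finset.mem_union_left _ this
      · -- x ∈ BVerts B p.2
        obtain ⟨g, hg, hxg, _⟩ := mem_BVerts.mp h
        have hgM : g ∈ M := layer_sub hVT p (by simp) hg
        have : f = g := matching_eq_of_inter hM hf hgM ⟨x, Finset.mem_inter.mpr ⟨hxf, hxg⟩⟩
        exact Finset.mem_union_left _ (this ▸ hg)
    · exact Finset.mem_union_right _ (ih hVT.1 ⟨x, Finset.mem_inter.mpr ⟨hxfB, h⟩⟩)

lemma uY_card (hM : IsPartialMatching E M) (hVT : VT A B a0 E M l) :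
    (uY l).card = (l.map fun p => p.2.card).sum := by
  induction l with
  | nil => simp [uY]
  | cons p t ih =>
    have hdisj : Disjoint p.2 (uY t) := by
      rw [Finset.disjoint_left]
      intro g hg hg'
      have hgB : g ∩ B ⊆ tBv B t := mem_uY_Bsub hVT.1 hg'
      have hblock : (g ∩ p.1 ∩ B).Nonempty := by
        have := hVT.2.2.2.2.2.1 ▸ hg
        exact (Finset.mem_filter.mp this).2
      obtain ⟨x, hx⟩ := hblock
      simp only [Finset.mem_inter] at hx
      have : x ∈ (p.1 ∩ B) ∩ tBv B t := by
        refine Finset.mem_inter.mpr ⟨Finset.mem_inter.mpr ⟨hx.1.2, hx.2⟩, ?_⟩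
        exact hgB (Finset.mem_inter.mpr ⟨hx.1.1, hx.2⟩)
      rw [hVT.2.2.2.2.1] at this
      simp at this
    show (p.2 ∪ uY t).card = _
    rw [Finset.card_union_of_disjoint hdisj, ih hVT.1]
    simp

lemma tS_eq (hVT : VT A B a0 E M l) : tS A a0 l = insert a0 (AVerts A (uY l)) := by
  induction l with
  | nil => simp [tS, uY, AVerts]
  | cons p t ih =>
    show AVerts A p.2 ∪ tS A a0 t = insert a0 (AVerts A (p.2 ∪ uY t))
    rw [ih hVT.1]
    ext x
    simp only [Finset.mem_union, Finset.mem_insert, AVerts, Finset.mem_biUnion]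
    constructor
    · rintro (h | h | h)
      · obtain ⟨g, hg, hx⟩ := h; exact Or.inr ⟨g, Or.inl hg, hx⟩
      · exact Or.inl h
      · obtain ⟨g, hg, hx⟩ := h; exact Or.inr ⟨g, Or.inr hg, hx⟩
    · rintro (h | ⟨g, hg, hx⟩)
      · exact Or.inr (Or.inl h)
      · rcases hg with h | h
        · exact Or.inl ⟨g, h, hx⟩
        · exact Or.inr (Or.inr ⟨g, h, hx⟩)

lemma tS_card (hH : IsBipHypergraph (k+2) A B E) (hM : IsPartialMatching E M)
    (ha0 : ∀ f ∈ M, a0 ∉ f) (hVT : VT A B a0 E M l) :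
    (tS A a0 l).card = 1 + (l.map fun p => p.2.card).sum := by
  rw [tS_eq hVT, Finset.card_insert_of_notMem, AVerts_card hH hM (uY_sub hVT),
    uY_card hM hVT]
  · omega
  · intro h
    obtain ⟨g, hg, hag, _⟩ := mem_AVerts.mp h
    exact ha0 g (uY_sub hVT hg) hag

lemma BVerts_card_le (hH : IsBipHypergraph (k+2) A B E) {Y : Finset (Finset V)}
    (hY : Y ⊆ E) : (BVerts B Y).card ≤ (k+1) * Y.card := by
  unfold BVerts
  refine le_trans (Finset.card_biUnion_le) ?_
  rw [Finset.sum_congr rfl fun f hf => eB_card hH (hY hf), Finset.sum_const,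
    smul_eq_mul, mul_comm]

lemma tBv_card (hH : IsBipHypergraph (k+2) A B E) (hM : IsPartialMatching E M)
    (hVT : VT A B a0 E M l) :
    (tBv B l).card ≤ (2*k+1) * (l.map fun p => p.2.card).sum := by
  induction l with
  | nil => simp [tBv]
  | cons p t ih =>
    obtain ⟨hVTt, hpE, _, _, _, hfil, hne⟩ := hVT
    obtain ⟨g, hg⟩ := hne
    have hblock : (g ∩ p.1 ∩ B).Nonempty := by
      have hg' := hg; rw [hfil] at hg'
      exact (Finset.mem_filter.mp hg').2
    obtain ⟨x, hx⟩ := hblock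
    simp only [Finset.mem_inter] at hx
    have hx1 : x ∈ p.1 ∩ B := Finset.mem_inter.mpr ⟨hx.1.2, hx.2⟩
    have hx2 : x ∈ BVerts B p.2 := mem_BVerts.mpr ⟨g, hg, hx.1.1, hx.2⟩
    have hsub : p.1 ∩ B ∪ BVerts B p.2 ⊆ (p.1 ∩ B).erase x ∪ BVerts B p.2 := by
      intro y hy
      rcases Finset.mem_union.mp hy with h | h
      · by_cases hyx : y = x
        · exact Finset.mem_union_right _ (hyx ▸ hx2)
        · exact Finset.mem_union_left _ (Finset.mem_erase.mpr ⟨hyx, h⟩)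
      · exact Finset.mem_union_right _ h
    have h1 : (p.1 ∩ B ∪ BVerts B p.2).card ≤ k + (k+1) * p.2.card := by
      refine le_trans (Finset.card_le_card hsub) (le_trans (Finset.card_union_le _ _) ?_)
      have he : ((p.1 ∩ B).erase x).card = k := by
        rw [Finset.card_erase_of_mem hx1, eB_card hH hpE]
        omega
      rw [he]
      have hp2E : p.2 ⊆ E := by
        rw [hfil]; exact (Finset.filter_subset _ _).trans hM.1
      exact Nat.add_le_add_left (BVerts_card_le hH hp2E) k
    have hy1 : 1 ≤ p.2.card := Finset.card_pos.mpr ⟨g, hg⟩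
    have h2 := ih hVTt
    show ((p.1 ∩ B ∪ BVerts B p.2) ∪ tBv B t).card ≤ _
    refine le_trans (Finset.card_union_le _ _) ?_
    have : (List.map (fun p => p.2.card) (p :: t)).sum
        = p.2.card + (List.map (fun p => p.2.card) t).sum := by simp
    rw [this]
    nlinarith [hy1, h1, h2]

lemma len_le_sum (hVT : VT A B a0 E M l) :
    l.length ≤ (l.map fun p => p.2.card).sum := by
  induction l with
  | nil => simp
  | cons p t ih =>
    have hy1 : 1 ≤ p.2.card := Finset.card_pos.mpr hVT.2.2.2.2.2.2
    have := ih hVT.1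
    simp only [List.length_cons, List.map_cons, List.sum_cons]
    omega

lemma sum_le_E (hM : IsPartialMatching E M) (hVT : VT A B a0 E M l) :
    (l.map fun p => p.2.card).sum ≤ E.card := by
  rw [← uY_card hM hVT]
  exact Finset.card_le_card ((uY_sub hVT).trans hM.1)

end Main

section Main2

variable {k : ℕ} {A B : Finset V} {E M : Finset (Finset V)} {a0 : V}
  {e f g : Finset V} {a : V} {l : List (Finset V × Finset (Finset V))}

lemma VT_swap (hH : IsBipHypergraph (k+2) A B E) (hM : IsPartialMatching E M)
    (he : e ∈ E) (hf : f ∈ M)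
    (heB : (e ∩ B) ∩ tBv B l = ∅) (hfB : (f ∩ B) ∩ tBv B l = ∅)
    (hVT : VT A B a0 E M l) : VT A B a0 E (insert e (M.erase f)) l := by
  induction l with
  | nil => trivial
  | cons p t ih =>
    obtain ⟨hVTt, hpE, hpM, hpA, hpB, hfil, hne⟩ := hVT
    have htsub : tBv B t ⊆ tBv B (p :: t) := Finset.subset_union_right
    have heBt : (e ∩ B) ∩ tBv B t = ∅ :=
      Finset.subset_empty.mp (heB ▸ Finset.inter_subset_inter (Finset.Subset.refl _) htsub)
    have hfBt : (f ∩ B) ∩ tBv B t = ∅ :=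
      Finset.subset_empty.mp (hfB ▸ Finset.inter_subset_inter (Finset.Subset.refl _) htsub)
    have hp1tBv : p.1 ∩ B ⊆ tBv B (p :: t) :=
      Finset.Subset.trans Finset.subset_union_left Finset.subset_union_left
    have hpe : ¬ (e ∩ p.1 ∩ B).Nonempty := by
      rintro ⟨x, hx⟩
      simp only [Finset.mem_inter] at hx
      have : x ∈ (e ∩ B) ∩ tBv B (p :: t) :=
        Finset.mem_inter.mpr ⟨Finset.mem_inter.mpr ⟨hx.1.1, hx.2⟩,
          hp1tBv (Finset.mem_inter.mpr ⟨hx.1.2, hx.2⟩)⟩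
      rw [heB] at this; simp at this
    have hpf : ¬ (f ∩ p.1 ∩ B).Nonempty := by
      rintro ⟨x, hx⟩
      simp only [Finset.mem_inter] at hx
      have : x ∈ (f ∩ B) ∩ tBv B (p :: t) :=
        Finset.mem_inter.mpr ⟨Finset.mem_inter.mpr ⟨hx.1.1, hx.2⟩,
          hp1tBv (Finset.mem_inter.mpr ⟨hx.1.2, hx.2⟩)⟩
      rw [hfB] at this; simp at this
    refine ⟨ih heBt hfBt hVTt, hpE, ?_, hpA, hpB, ?_, hne⟩
    · -- p.1 ∉ insert e (M.erase f)
      intro h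
      rcases Finset.mem_insert.mp h with rfl | h
      · obtain ⟨x, hx⟩ := eB_ne hH hpE
        have : x ∈ (p.1 ∩ B) ∩ tBv B (p :: t) :=
          Finset.mem_inter.mpr ⟨hx, hp1tBv hx⟩
        rw [heB] at this; simp at this
      · exact hpM (Finset.mem_of_mem_erase h)
    · -- filter equation
      rw [hfil]
      ext g'
      simp only [Finset.mem_filter, Finset.mem_insert, Finset.mem_erase]
      constructor
      · rintro ⟨hg, hpred⟩
        exact ⟨Or.inr ⟨fun h => hpf (h ▸ hpred), hg⟩, hpred⟩
      · rintro ⟨(rfl | ⟨hgf, hg⟩), hpred⟩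
        · exact absurd hpred hpe
        · exact ⟨hg, hpred⟩

lemma blocker_B_disj (hM : IsPartialMatching E M) (hVT : VT A B a0 E M l)
    (heh : (e ∩ B) ∩ tBv B l = ∅) (hf : f ∈ M) (hblock : (f ∩ e ∩ B).Nonempty) :
    (f ∩ B) ∩ tBv B l = ∅ := by
  by_contra h
  rw [← ne_eq, ← Finset.nonempty_iff_ne_empty] at h
  have hfu : f ∈ uY l := blocker_mem_uY hM hVT hf h
  have hfB : f ∩ B ⊆ tBv B l := mem_uY_Bsub hVT hfu
  obtain ⟨x, hx⟩ := hblock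
  simp only [Finset.mem_inter] at hx
  have : x ∈ (e ∩ B) ∩ tBv B l :=
    Finset.mem_inter.mpr ⟨Finset.mem_inter.mpr ⟨hx.1.2, hx.2⟩,
      hfB (Finset.mem_inter.mpr ⟨hx.1.1, hx.2⟩)⟩
  rw [heh] at this; simp at this

lemma insert_matching (hH : IsBipHypergraph (k+2) A B E) (hM : IsPartialMatching E M)
    (he : e ∈ E) (himm : ∀ g ∈ M, g ∩ e ∩ B = ∅) (heA : e ∩ A = {a})
    {N : Finset (Finset V)} (hN : N ⊆ M) (haN : ∀ g ∈ N, a ∉ g) :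
    IsPartialMatching E (insert e N) := by
  constructor
  · exact Finset.insert_subset he (hN.trans hM.1)
  · have key : ∀ g ∈ N, Disjoint e g := by
      intro g hg
      rw [Finset.disjoint_iff_inter_eq_empty, edge_inter_split hH he g]
      have h1 : e ∩ g ∩ A = ∅ := by
        refine Finset.eq_empty_of_forall_notMem fun x hx => ?_
        simp only [Finset.mem_inter] at hx
        have : x ∈ e ∩ A := Finset.mem_inter.mpr ⟨hx.1.1, hx.2⟩
        rw [heA] at this
        rw [Finset.mem_singleton.mp this] at hx
        exact haN g hg hx.1.2
      have h2 : e ∩ g ∩ B = ∅ := by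
        rw [Finset.inter_comm e g]
        exact himm g (hN hg)
      rw [h1, h2]; simp
    intro g1 hg1 g2 hg2 hne
    rcases Finset.mem_insert.mp hg1 with rfl | hg1 <;>
      rcases Finset.mem_insert.mp hg2 with h | hg2
    · exact absurd h.symm hne
    · exact key g2 hg2
    · exact h ▸ (key g1 hg1).symm
    · exact hM.2 g1 (hN hg1) g2 (hN hg2) hne

lemma extract (hH : IsBipHypergraph (k+2) A B E) (hM : IsPartialMatching E M)
    (ha0 : ∀ f ∈ M, a0 ∉ f) (ha0A : a0 ∈ A) (hVT : VT A B a0 E M l)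
    (hHax : ∀ S ⊆ A,
      (2 * ((k+2) : ℤ) - 3) * ((S.card : ℤ) - 1) < (tau B (edgesOn E S) : ℤ)) :
    ∃ e a, e ∈ E ∧ e ∉ M ∧ e ∩ A = {a} ∧ a ∈ tS A a0 l ∧ (e ∩ B) ∩ tBv B l = ∅ := by
  set S := tS A a0 l with hS
  set C := tBv B l with hC
  have hSA : S ⊆ A := tS_subset ha0A l
  have hCB : C ⊆ B := tBv_subset l
  have hScard : S.card = 1 + (l.map fun p => p.2.card).sum := tS_card hH hM ha0 hVT
  have hCcard : C.card ≤ (2*k+1) * (l.map fun p => p.2.card).sum := tBv_card hH hM hVT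
  have hne : ∃ e ∈ edgesOn E S, e ∩ C = ∅ := by
    by_contra h
    push_neg at h
    have hmem : C.card ∈ {n : ℕ | ∃ T ⊆ B, T.card = n ∧ ∀ e ∈ edgesOn E S, (e ∩ T).Nonempty} :=
      ⟨C, hCB, rfl, fun e he => h e he⟩
    have htau : tau B (edgesOn E S) ≤ C.card := Nat.sInf_le hmem
    have hHS := hHax S hSA
    have h1 : ((2*k+1) * (l.map fun p => p.2.card).sum : ℤ)
        < ((2*k+1) * (l.map fun p => p.2.card).sum : ℤ) := by
      calc ((2*k+1) * (l.map fun p => p.2.card).sum : ℤ)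
          = (2 * ((k+2) : ℤ) - 3) * ((S.card : ℤ) - 1) := by
            rw [hScard]; push_cast; ring
        _ < (tau B (edgesOn E S) : ℤ) := hHS
        _ ≤ (C.card : ℤ) := by exact_mod_cast htau
        _ ≤ ((2*k+1) * (l.map fun p => p.2.card).sum : ℤ) := by exact_mod_cast hCcard
    omega
  obtain ⟨e, heES, heC⟩ := hne
  have he : e ∈ E := (Finset.mem_filter.mp heES).1
  have hcard1 : (e ∩ S).card = 1 := (Finset.mem_filter.mp heES).2
  obtain ⟨a, ha⟩ := Finset.card_eq_one.mp hcard1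
  have haS : a ∈ S := (Finset.mem_inter.mp (ha ▸ Finset.mem_singleton_self a)).2
  have hae : a ∈ e := (Finset.mem_inter.mp (ha ▸ Finset.mem_singleton_self a)).1
  have heA : e ∩ A = {a} := by
    obtain ⟨b, hb⟩ := eA_single hH he
    have : a ∈ e ∩ A := Finset.mem_inter.mpr ⟨hae, hSA haS⟩
    rw [hb] at this ⊢
    rw [Finset.mem_singleton.mp this]
  have heM : e ∉ M := by
    intro h
    rw [hS, tS_eq hVT] at haS
    rcases Finset.mem_insert.mp haS with rfl | haS
    · exact ha0 e h hae
    · obtain ⟨g, hg, hag, _⟩ := mem_AVerts.mp haS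
      have hgM : g ∈ M := uY_sub hVT hg
      have heg : e = g := matching_eq_of_inter hM h hgM ⟨a, Finset.mem_inter.mpr ⟨hae, hag⟩⟩
      have hgB : g ∩ B ⊆ tBv B l := mem_uY_Bsub hVT hg
      obtain ⟨x, hx⟩ := eB_ne hH he
      have hxe : x ∈ e := (Finset.mem_inter.mp hx).1
      have hxC : x ∈ C := hgB (heg ▸ hx)
      have : x ∈ e ∩ C := Finset.mem_inter.mpr ⟨hxe, hxC⟩
      rw [heC] at this; simp at this
  refine ⟨e, a, he, heM, heA, haS, ?_⟩
  refine Finset.eq_empty_of_forall_notMem fun x hx => ?_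
  simp only [Finset.mem_inter] at hx
  have : x ∈ e ∩ C := Finset.mem_inter.mpr ⟨hx.1.1, hx.2⟩
  rw [heC] at this; simp at this

end Main2

section Main3

variable {k : ℕ} {A B : Finset V} {E : Finset (Finset V)} {a0 : V}

lemma swapStep (hH : IsBipHypergraph (k+2) A B E) (ha0A : a0 ∈ A)
    (l : List (Finset V × Finset (Finset V))) :
    ∀ (M : Finset (Finset V)) (e : Finset V) (a : V),
    IsPartialMatching E M → (∀ f ∈ M, a0 ∉ f) → VT A B a0 E M l →
    e ∈ E → e ∉ M → e ∩ A = {a} → a ∈ tS A a0 l → (e ∩ B) ∩ tBv B l = ∅ →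
    (∀ f ∈ M, f ∩ e ∩ B = ∅) →
    (∃ M', IsPartialMatching E M' ∧ AVerts A M ∪ {a0} ⊆ AVerts A M') ∨
    (∃ M' l₁ eo Yo f l₂, l = l₁ ++ (eo, Yo) :: l₂ ∧ f ∈ Yo ∧
      IsPartialMatching E M' ∧ (∀ g ∈ M', a0 ∉ g) ∧ AVerts A M ⊆ AVerts A M' ∧
      (Yo.erase f).Nonempty ∧ VT A B a0 E M' ((eo, Yo.erase f) :: l₂)) := by
  induction l with
  | nil =>
    intro M e a hM ha0 _hVT he heM heA haS _heB himm
    have haa0 : a = a0 := by simpa [tS] using haS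
    subst haa0
    refine Or.inl ⟨insert e M, insert_matching hH hM he himm heA subset_rfl ha0, ?_⟩
    intro x hx
    rcases Finset.mem_union.mp hx with hx | hx
    · obtain ⟨g, hg, hxg, hxA⟩ := mem_AVerts.mp hx
      exact mem_AVerts.mpr ⟨g, Finset.mem_insert_of_mem hg, hxg, hxA⟩
    · rw [Finset.mem_singleton.mp hx]
      have hae : a ∈ e := (Finset.mem_inter.mp (heA ▸ Finset.mem_singleton_self a)).1
      exact mem_AVerts.mpr ⟨e, Finset.mem_insert_self _ _, hae, ha0A⟩
  | cons p t ih =>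
    intro M e a hM ha0 hVT he heM heA haS heB himm
    obtain ⟨hVTt, hpE, hpM, hpA, hpB, hfil, hYne⟩ := hVT
    have hae : a ∈ e := (Finset.mem_inter.mp (heA ▸ Finset.mem_singleton_self a)).1
    have htsub : tBv B t ⊆ tBv B (p :: t) := Finset.subset_union_right
    have heBt : (e ∩ B) ∩ tBv B t = ∅ :=
      Finset.subset_empty.mp (heB ▸ Finset.inter_subset_inter (Finset.Subset.refl _) htsub)
    have hp1tBv : p.1 ∩ B ⊆ tBv B (p :: t) :=
      Finset.Subset.trans Finset.subset_union_left Finset.subset_union_left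
    by_cases hay : a ∈ AVerts A p.2
    · -- a is matched by a blocker f in the head layer
      obtain ⟨f, hfY, haf, haA⟩ := mem_AVerts.mp hay
      have hfY' := hfY
      rw [hfil] at hfY'
      have hfM : f ∈ M := (Finset.mem_filter.mp hfY').1
      have hfblock : (f ∩ p.1 ∩ B).Nonempty := (Finset.mem_filter.mp hfY').2
      have ha0e : a0 ∉ e := by
        intro h
        have : a0 ∈ e ∩ A := Finset.mem_inter.mpr ⟨h, ha0A⟩
        rw [heA, Finset.mem_singleton] at this
        exact ha0 f hfM (this ▸ haf)
      have haN : ∀ g ∈ M.erase f, a ∉ g := by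
        intro g hg hag
        obtain ⟨hgf, hgM⟩ := Finset.mem_erase.mp hg
        exact hgf (matching_eq_of_inter hM hgM hfM ⟨a, Finset.mem_inter.mpr ⟨hag, haf⟩⟩)
      have hM' : IsPartialMatching E (insert e (M.erase f)) :=
        insert_matching hH hM he himm heA (Finset.erase_subset _ _) haN
      have ha0' : ∀ g ∈ insert e (M.erase f), a0 ∉ g := by
        intro g hg
        rcases Finset.mem_insert.mp hg with rfl | hg
        · exact ha0e
        · exact ha0 g (Finset.mem_of_mem_erase hg)
      have hfA : f ∩ A = {a} := by
        obtain ⟨b, hb⟩ := eA_single hH (hM.1 hfM)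
        have : a ∈ f ∩ A := Finset.mem_inter.mpr ⟨haf, haA⟩
        rw [hb] at this ⊢
        rw [Finset.mem_singleton.mp this]
      have hcov : AVerts A M ⊆ AVerts A (insert e (M.erase f)) := by
        intro x hx
        obtain ⟨g, hgM, hxg, hxA⟩ := mem_AVerts.mp hx
        by_cases hgf : g = f
        · subst hgf
          have : x ∈ g ∩ A := Finset.mem_inter.mpr ⟨hxg, hxA⟩
          rw [hfA, Finset.mem_singleton] at this
          subst this
          exact mem_AVerts.mpr ⟨e, Finset.mem_insert_self _ _, hae, hxA⟩
        · exact mem_AVerts.mpr ⟨g, Finset.mem_insert_of_mem (Finset.mem_erase.mpr ⟨hgf, hgM⟩),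
            hxg, hxA⟩
      have hfBt : (f ∩ B) ∩ tBv B t = ∅ := blocker_B_disj hM hVTt hpB hfM hfblock
      have hVTt' : VT A B a0 E (insert e (M.erase f)) t := VT_swap hH hM he hfM heBt hfBt hVTt
      have hp1ne : p.1 ≠ e := by
        intro hcontra
        obtain ⟨x, hx⟩ := eB_ne hH hpE
        have : x ∈ (e ∩ B) ∩ tBv B (p :: t) :=
          Finset.mem_inter.mpr ⟨hcontra ▸ hx, hp1tBv hx⟩
        rw [heB] at this; simp at this
      have hp1M' : p.1 ∉ insert e (M.erase f) := by
        intro h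
        rcases Finset.mem_insert.mp h with h | h
        · exact hp1ne h
        · exact hpM (Finset.mem_of_mem_erase h)
      have hpe : ¬ (e ∩ p.1 ∩ B).Nonempty := by
        rintro ⟨x, hx⟩
        simp only [Finset.mem_inter] at hx
        have : x ∈ (e ∩ B) ∩ tBv B (p :: t) :=
          Finset.mem_inter.mpr ⟨Finset.mem_inter.mpr ⟨hx.1.1, hx.2⟩,
            hp1tBv (Finset.mem_inter.mpr ⟨hx.1.2, hx.2⟩)⟩
        rw [heB] at this; simp at this
      have hfil' : p.2.erase f =
          (insert e (M.erase f)).filter (fun g => (g ∩ p.1 ∩ B).Nonempty) := by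
        ext g'
        simp only [Finset.mem_erase, Finset.mem_filter, Finset.mem_insert]
        constructor
        · rintro ⟨hne, hg⟩
          rw [hfil] at hg
          obtain ⟨hgM, hpred⟩ := Finset.mem_filter.mp hg
          exact ⟨Or.inr ⟨hne, hgM⟩, hpred⟩
        · rintro ⟨(rfl | ⟨hne, hgM⟩), hpred⟩
          · exact absurd hpred hpe
          · exact ⟨hne, by rw [hfil]; exact Finset.mem_filter.mpr ⟨hgM, hpred⟩⟩
      by_cases hYe : (p.2.erase f).Nonempty
      · refine Or.inr ⟨insert e (M.erase f), [], p.1, p.2, f, t, by simp, hfY, hM', ha0',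
          hcov, hYe, ?_⟩
        exact ⟨hVTt', hpE, hp1M', hpA, hpB, hfil', hYe⟩
      · -- the head layer loses its last blocker; p.1 becomes immediately addable
        rw [Finset.not_nonempty_iff_eq_empty] at hYe
        have hpimm : ∀ g ∈ insert e (M.erase f), g ∩ p.1 ∩ B = ∅ := by
          intro g hg
          by_contra hcon
          rw [← ne_eq, ← Finset.nonempty_iff_ne_empty] at hcon
          rcases Finset.mem_insert.mp hg with rfl | hg
          · exact hpe hcon
          · obtain ⟨hgf, hgM⟩ := Finset.mem_erase.mp hg
            have : g ∈ p.2 := by rw [hfil]; exact Finset.mem_filter.mpr ⟨hgM, hcon⟩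
            have : g ∈ p.2.erase f := Finset.mem_erase.mpr ⟨hgf, this⟩
            rw [hYe] at this; simp at this
        obtain ⟨b, hbA⟩ := eA_single hH hpE
        have hbS : b ∈ tS A a0 t := hpA (hbA ▸ Finset.mem_singleton_self b)
        rcases ih (insert e (M.erase f)) p.1 b hM' ha0' hVTt' hpE hp1M' hbA hbS hpB hpimm with
          ⟨M'', hM'', hcov''⟩ | ⟨M'', l₁, eo, Yo, f', l₂, hdec, hf', hM'', ha0'', hcov'', hYe'', hVT''⟩
        · refine Or.inl ⟨M'', hM'', ?_⟩
          intro x hx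
          rcases Finset.mem_union.mp hx with hx | hx
          · exact hcov'' (Finset.mem_union_left _ (hcov hx))
          · exact hcov'' (Finset.mem_union_right _ hx)
        · exact Or.inr ⟨M'', p :: l₁, eo, Yo, f', l₂, by rw [hdec]; rfl, hf', hM'', ha0'',
            hcov.trans hcov'', hYe'', hVT''⟩
    · -- a belongs to an older layer
      have haS' : a ∈ tS A a0 t := by
        rcases Finset.mem_union.mp haS with h | h
        · exact absurd h hay
        · exact h
      rcases ih M e a hM ha0 hVTt he heM heA haS' heBt himm with
        ⟨M'', hM'', hcov''⟩ | ⟨M'', l₁, eo, Yo, f', l₂, hdec, hf', hM'', ha0'', hcov'', hYe'', hVT''⟩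
      · exact Or.inl ⟨M'', hM'', hcov''⟩
      · exact Or.inr ⟨M'', p :: l₁, eo, Yo, f', l₂, by rw [hdec]; rfl, hf', hM'', ha0'',
          hcov'', hYe'', hVT''⟩

end Main3

section Main4

variable {k : ℕ} {A B : Finset V} {E : Finset (Finset V)} {a0 : V}

lemma master (hH : IsBipHypergraph (k+2) A B E) (ha0A : a0 ∈ A)
    (hHax : ∀ S ⊆ A,
      (2 * ((k+2) : ℤ) - 3) * ((S.card : ℤ) - 1) < (tau B (edgesOn E S) : ℤ)) :
    ∀ (n : ℕ) (M : Finset (Finset V)) (l : List (Finset V × Finset (Finset V))),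
    IsPartialMatching E M → (∀ f ∈ M, a0 ∉ f) → VT A B a0 E M l →
    tmu E.card l < n →
    ∃ M', IsPartialMatching E M' ∧ AVerts A M ∪ {a0} ⊆ AVerts A M' := by
  intro n
  induction n with
  | zero => intro M l _ _ _ h; omega
  | succ n ihn =>
    intro M l hM ha0 hVT hmu
    obtain ⟨e, a, he, heM, heA, haS, heB⟩ := extract hH hM ha0 ha0A hVT hHax
    by_cases himm : ∀ f ∈ M, f ∩ e ∩ B = ∅
    · rcases swapStep hH ha0A l M e a hM ha0 hVT he heM heA haS heB himm with
        ⟨M', hM', hcov⟩ | ⟨M', l₁, eo, Yo, f, l₂, hdec, hf, hM', ha0', hcov, hYe, hVT'⟩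
      · exact ⟨M', hM', hcov⟩
      · have hlen : (l₁ ++ (eo, Yo) :: l₂).length ≤ E.card := by
          rw [← hdec]; exact (len_le_sum hVT).trans (sum_le_E hM hVT)
        have hYoE : Yo.card ≤ E.card := by
          have hsub : Yo ⊆ M := layer_sub hVT (eo, Yo) (by rw [hdec]; simp)
          exact Finset.card_le_card (hsub.trans hM.1)
        have hmu' : tmu E.card ((eo, Yo.erase f) :: l₂) < n := by
          have hlt := tmu_swap E.card l₁ eo Yo (Yo.erase f) l₂
            (by rw [Finset.card_erase_of_mem hf]
                have := Finset.card_pos.mpr ⟨f, hf⟩; omega)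
            hYoE hlen
          rw [← hdec] at hlt
          omega
        obtain ⟨M'', hM'', hcov''⟩ := ihn M' ((eo, Yo.erase f) :: l₂) hM' ha0' hVT' hmu'
        refine ⟨M'', hM'', ?_⟩
        intro x hx
        rcases Finset.mem_union.mp hx with hx | hx
        · exact hcov'' (Finset.mem_union_left _ (hcov hx))
        · exact hcov'' (Finset.mem_union_right _ hx)
    · -- grow the tree by one layer
      push_neg at himm
      obtain ⟨f0, hf0M, hf0⟩ := himm
      set Y := M.filter (fun f => (f ∩ e ∩ B).Nonempty) with hY
      have hYne : Y.Nonempty :=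
        ⟨f0, Finset.mem_filter.mpr ⟨hf0M, hf0⟩⟩
      have heAS : e ∩ A ⊆ tS A a0 l := by
        rw [heA]; simpa using haS
      have hVT' : VT A B a0 E M ((e, Y) :: l) := ⟨hVT, he, heM, heAS, heB, hY, hYne⟩
      have hmu' : tmu E.card ((e, Y) :: l) < n := by
        have hb := (len_le_sum hVT').trans (sum_le_E hM hVT')
        simp only [List.length_cons] at hb
        have hYc : Y.card ≤ E.card :=
          Finset.card_le_card ((Finset.filter_subset _ _).trans hM.1)
        have hlt := tmu_grow E.card (e, Y) l (by omega) hYc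
        omega
      obtain ⟨M'', hM'', hcov''⟩ := ihn M ((e, Y) :: l) hM ha0 hVT' hmu'
      exact ⟨M'', hM'', hcov''⟩

lemma top (hH : IsBipHypergraph (k+2) A B E)
    (hHax : ∀ S ⊆ A,
      (2 * ((k+2) : ℤ) - 3) * ((S.card : ℤ) - 1) < (tau B (edgesOn E S) : ℤ)) :
    ∀ (n : ℕ) (M : Finset (Finset V)), IsPartialMatching E M →
    (A \ AVerts A M).card ≤ n → ∃ M', IsPerfectMatching A E M' := by
  intro n
  induction n with
  | zero =>
    intro M hM hc
    refine ⟨M, hM, fun a ha => ?_⟩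
    have hsub : A ⊆ AVerts A M := by
      rw [← Finset.sdiff_eq_empty_iff_subset]
      exact Finset.card_eq_zero.mp (Nat.le_zero.mp hc)
    obtain ⟨e, heM, hae, _⟩ := mem_AVerts.mp (hsub ha)
    exact ⟨e, heM, hae⟩
  | succ n ihn =>
    intro M hM hc
    by_cases hcov : A ⊆ AVerts A M
    · refine ⟨M, hM, fun a ha => ?_⟩
      obtain ⟨e, heM, hae, _⟩ := mem_AVerts.mp (hcov ha)
      exact ⟨e, heM, hae⟩
    · obtain ⟨a0, ha0A, ha0n⟩ := Finset.not_subset.mp hcov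
      have ha0 : ∀ f ∈ M, a0 ∉ f := fun f hf h => ha0n (mem_AVerts.mpr ⟨f, hf, h, ha0A⟩)
      obtain ⟨M', hM', hcov'⟩ := master hH ha0A hHax
        (tmu E.card ([] : List (Finset V × Finset (Finset V))) + 1) M [] hM ha0 trivial
        (Nat.lt_succ_self _)
      apply ihn M' hM'
      have hsub : A \ AVerts A M' ⊆ (A \ AVerts A M).erase a0 := by
        intro x hx
        obtain ⟨hxA, hxn⟩ := Finset.mem_sdiff.mp hx
        refine Finset.mem_erase.mpr ⟨?_, Finset.mem_sdiff.mpr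
          ⟨hxA, fun h => hxn (hcov' (Finset.mem_union_left _ h))⟩⟩
        rintro rfl
        exact hxn (hcov' (Finset.mem_union_right _ (Finset.mem_singleton_self _)))
      have h1 : a0 ∈ A \ AVerts A M := Finset.mem_sdiff.mpr ⟨ha0A, ha0n⟩
      have h2 := Finset.card_le_card hsub
      rw [Finset.card_erase_of_mem h1] at h2
      have h3 := Finset.card_pos.mpr ⟨a0, h1⟩
      omega

end Main4

end HaxP

/-- **Haxell's theorem.** If `τ(E_S) > (2r − 3)(|S| − 1)` for every `S ⊆ A`,
then the `r`-uniform bipartite hypergraph `H = (A, B, E)` admits a perfect matching. -/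
theorem haxell_perfect_matching {V : Type*} [DecidableEq V]
    (r : ℕ) (hr : 2 ≤ r) (A B : Finset V) (E : Finset (Finset V))
    (hH : IsBipHypergraph r A B E)
    (hHax : ∀ S ⊆ A,
      (2 * (r : ℤ) - 3) * ((S.card : ℤ) - 1) < (tau B (edgesOn E S) : ℤ)) :
    ∃ M, IsPerfectMatching A E M := by
  obtain ⟨k, rfl⟩ : ∃ k, r = k + 2 := ⟨r - 2, by omega⟩
  have hHax' : ∀ S ⊆ A,
      (2 * ((k+2) : ℤ) - 3) * ((S.card : ℤ) - 1) < (tau B (edgesOn E S) : ℤ) := by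
    intro S hS
    have h := hHax S hS
    push_cast at h ⊢
    linarith
  refine HaxP.top hH hHax' (A \ AVerts A ∅).card ∅ ⟨Finset.empty_subset _, by simp⟩ le_rfl
end

section
/- For every ε > 0, every r ≥ 2, and every r-uniform bipartite hypergraph H = (A, B, E), at least one of the following holds: H admits a perfect matching, or there exists a set S ⊆ A such that τ(E_S) ≤ (2r − 3 + ε)(|S| − 1). -/
open Finset

variable {V : Type*} [DecidableEq V]

namespace Haxell

variable {V : Type*} [DecidableEq V]

lemma mem_AVerts {A : Finset V} {F : Finset (Finset V)} {a : V} :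
    a ∈ AVerts A F ↔ ∃ e ∈ F, a ∈ e ∧ a ∈ A := by
  simp [AVerts, Finset.mem_biUnion, Finset.mem_inter]

lemma mem_BVerts {B : Finset V} {F : Finset (Finset V)} {b : V} :
    b ∈ BVerts B F ↔ ∃ e ∈ F, b ∈ e ∧ b ∈ B := by
  simp [BVerts, Finset.mem_biUnion, Finset.mem_inter]

lemma AVerts_mono {A : Finset V} {F G : Finset (Finset V)} (h : F ⊆ G) :
    AVerts A F ⊆ AVerts A G := by
  intro a ha; rw [mem_AVerts] at *; obtain ⟨e, he, h1, h2⟩ := ha; exact ⟨e, h he, h1, h2⟩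

lemma BVerts_mono {B : Finset V} {F G : Finset (Finset V)} (h : F ⊆ G) :
    BVerts B F ⊆ BVerts B G := by
  intro a ha; rw [mem_BVerts] at *; obtain ⟨e, he, h1, h2⟩ := ha; exact ⟨e, h he, h1, h2⟩

lemma BVerts_subset_B {B : Finset V} {F : Finset (Finset V)} : BVerts B F ⊆ B := by
  intro b hb; exact (mem_BVerts.mp hb).choose_spec.2.2

lemma BVerts_union {B : Finset V} {F G : Finset (Finset V)} :
    BVerts B (F ∪ G) = BVerts B F ∪ BVerts B G := by
  ext b; simp only [mem_BVerts, Finset.mem_union]; aesop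

lemma BVerts_insert {B : Finset V} {g : Finset V} {F : Finset (Finset V)} :
    BVerts B (insert g F) = (g ∩ B) ∪ BVerts B F := by
  ext b; simp only [mem_BVerts, Finset.mem_union, Finset.mem_insert, Finset.mem_inter]; aesop

lemma AVerts_insert {A : Finset V} {g : Finset V} {F : Finset (Finset V)} :
    AVerts A (insert g F) = (g ∩ A) ∪ AVerts A F := by
  ext b; simp only [mem_AVerts, Finset.mem_union, Finset.mem_insert, Finset.mem_inter]; aesop

lemma BVerts_empty {B : Finset V} : BVerts B (∅ : Finset (Finset V)) = ∅ := rfl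

lemma AVerts_singleton_root {A : Finset V} {a0 : V} (h : a0 ∈ A) :
    AVerts A ({({a0} : Finset V)} : Finset (Finset V)) = {a0} := by
  ext a; rw [mem_AVerts]; simp only [Finset.mem_singleton]; aesop

lemma inter_BVerts_nonempty_iff {B : Finset V} {f : Finset V} {F : Finset (Finset V)} :
    (f ∩ BVerts B F).Nonempty ↔ ∃ e ∈ F, (f ∩ e ∩ B).Nonempty := by
  constructor
  · rintro ⟨b, hb⟩
    rw [Finset.mem_inter] at hb
    obtain ⟨e, he, h1, h2⟩ := mem_BVerts.mp hb.2
    exact ⟨e, he, b, by simp [Finset.mem_inter, hb.1, h1, h2]⟩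
  · rintro ⟨e, he, b, hb⟩
    simp only [Finset.mem_inter] at hb
    exact ⟨b, Finset.mem_inter.mpr ⟨hb.1.1, mem_BVerts.mpr ⟨e, he, hb.1.2, hb.2⟩⟩⟩

end Haxell
namespace Haxell

variable {V : Type*} [DecidableEq V]

/-! ### Lexicographic measure machinery -/

lemma geom_bound (c : ℕ → ℕ) (Cv : ℕ) (hC : 1 ≤ Cv) :
    ∀ K : ℕ, (∀ k < K, c k < Cv) → ∑ k ∈ Finset.range K, c k * Cv ^ k < Cv ^ K := by
  intro K
  induction K with
  | zero => intro _; simpa using hC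
  | succ K ih =>
      intro hc
      rw [Finset.sum_range_succ, pow_succ]
      have h1 : ∑ k ∈ Finset.range K, c k * Cv ^ k < Cv ^ K := ih (fun k hk => hc k (by omega))
      have h2 : c K ≤ Cv - 1 := by have := hc K (by omega); omega
      have h3 : c K * Cv ^ K ≤ (Cv - 1) * Cv ^ K := Nat.mul_le_mul_right _ h2
      have h4 : Cv ^ K + (Cv - 1) * Cv ^ K = Cv ^ K * Cv := by
        have : 1 + (Cv - 1) = Cv := by omega
        calc Cv ^ K + (Cv - 1) * Cv ^ K = (1 + (Cv - 1)) * Cv ^ K := by ring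
        _ = Cv * Cv ^ K := by rw [this]
        _ = Cv ^ K * Cv := by ring
      omega

lemma lex_lt (c c' : ℕ → ℕ) (Cv K w : ℕ) (hC : 1 ≤ Cv)
    (hcb : ∀ k < K, c' k < Cv) (hw : w < K)
    (heq : ∀ k, w < k → k < K → c' k = c k) (hlt : c' w < c w) :
    ∑ k ∈ Finset.range K, c' k * Cv ^ k < ∑ k ∈ Finset.range K, c k * Cv ^ k := by
  have hsplit : ∀ d : ℕ → ℕ, ∑ k ∈ Finset.range K, d k * Cv ^ k =
      (∑ k ∈ Finset.range (w+1), d k * Cv ^ k) + ∑ k ∈ Finset.Ico (w+1) K, d k * Cv ^ k := by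
    intro d
    rw [Finset.range_eq_Ico, ← Finset.sum_Ico_consecutive _ (by omega : 0 ≤ w+1) (by omega : w+1 ≤ K),
      ← Finset.range_eq_Ico]
  rw [hsplit c, hsplit c']
  have htail : ∑ k ∈ Finset.Ico (w+1) K, c' k * Cv ^ k = ∑ k ∈ Finset.Ico (w+1) K, c k * Cv ^ k := by
    apply Finset.sum_congr rfl
    intro k hk
    rw [Finset.mem_Ico] at hk
    rw [heq k (by omega) hk.2]
  rw [htail]
  have hhead : ∑ k ∈ Finset.range (w+1), c' k * Cv ^ k < ∑ k ∈ Finset.range (w+1), c k * Cv ^ k := by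
    rw [Finset.sum_range_succ, Finset.sum_range_succ]
    have h1 : ∑ k ∈ Finset.range w, c' k * Cv ^ k < Cv ^ w :=
      geom_bound c' Cv hC w (fun k hk => hcb k (by omega))
    have h2 : Cv ^ w + c' w * Cv ^ w ≤ c w * Cv ^ w := by
      have : (1 + c' w) * Cv ^ w ≤ c w * Cv ^ w :=
        Nat.mul_le_mul_right _ (by omega)
      calc Cv ^ w + c' w * Cv ^ w = (1 + c' w) * Cv ^ w := by ring
      _ ≤ c w * Cv ^ w := this
    have h3 : 0 ≤ ∑ k ∈ Finset.range w, c k * Cv ^ k := Nat.zero_le _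
    omega
  omega

/-- Number of layers we consider. -/
def NN (E : Finset (Finset V)) : ℕ := E.card + 2
/-- Base for digits. -/
def CC (E : Finset (Finset V)) : ℕ := E.card + 2

/-- The digit of the measure corresponding to weight `q` (layer `NN - q`). -/
def coordF (E : Finset (Finset V)) (X Y : ℕ → Finset (Finset V)) (q : ℕ) : ℕ :=
  (E.card + 1 - (X (NN E - q)).card) * CC E + (Y (NN E - q)).card

/-- The termination measure. -/
def meas (E : Finset (Finset V)) (X Y : ℕ → Finset (Finset V)) : ℕ :=
  ∑ q ∈ Finset.range (NN E), coordF E X Y q * (CC E * CC E) ^ q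

lemma coordF_lt {E : Finset (Finset V)} {X Y : ℕ → Finset (Finset V)} {q : ℕ}
    (hY : (Y (NN E - q)).card ≤ E.card) : coordF E X Y q < CC E * CC E := by
  unfold coordF CC
  have h1 : E.card + 1 - (X (NN E - q)).card ≤ E.card + 1 := by omega
  have h2 : (E.card + 1 - (X (NN E - q)).card) * (E.card + 2) ≤ (E.card + 1) * (E.card + 2) :=
    Nat.mul_le_mul_right _ h1
  nlinarith

lemma meas_decrease {E : Finset (Finset V)} {X Y X' Y' : ℕ → Finset (Finset V)} (p : ℕ)
    (hp1 : 1 ≤ p) (hpN : p ≤ NN E - 1)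
    (hlow : ∀ m, 1 ≤ m → m < p → X' m = X m ∧ Y' m = Y m)
    (hYb : ∀ m, 1 ≤ m → (Y' m).card ≤ E.card)
    (hstrict : coordF E X' Y' (NN E - p) < coordF E X Y (NN E - p)) :
    meas E X' Y' < meas E X Y := by
  have hN : 2 ≤ NN E := by unfold NN; omega
  apply lex_lt (coordF E X Y) (coordF E X' Y') (CC E * CC E) (NN E) (NN E - p)
  · have : 2 ≤ CC E := by unfold CC; omega
    nlinarith
  · intro k hk
    exact coordF_lt (hYb _ (by omega))
  · omega
  · intro k hk1 hk2
    have hm1 : 1 ≤ NN E - k := by omega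
    have hm2 : NN E - k < p := by omega
    obtain ⟨hX, hY⟩ := hlow _ hm1 hm2
    unfold coordF
    rw [hX, hY]
  · exact hstrict

end Haxell
namespace Haxell

variable {V : Type*} [DecidableEq V]

open Finset

/-- The invariant of the alternating-tree process. -/
structure Valid (r : ℕ) (A B : Finset V) (E : Finset (Finset V)) (a0 : V)
    (M : Finset (Finset V)) (X Y : ℕ → Finset (Finset V)) : Prop where
  msub : M ⊆ E
  mdisj : ∀ e ∈ M, ∀ f ∈ M, e ≠ f → Disjoint e f
  root : a0 ∈ A
  rootfree : ∀ f ∈ M, a0 ∉ f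
  x0 : X 0 = ∅
  y0 : Y 0 = {({a0} : Finset V)}
  xsub : ∀ j, X j ⊆ E
  xnm : ∀ j, ∀ x ∈ X j, x ∉ M
  xbdisj : ∀ j, ∀ x ∈ X j, ∀ x' ∈ X j, x ≠ x' → x ∩ x' ∩ B = ∅
  ydef : ∀ j, 1 ≤ j → Y j = M.filter (fun f => (f ∩ BVerts B (X j)).Nonempty)
  yuniq : ∀ j, 1 ≤ j → ∀ f ∈ Y j, ∀ x ∈ X j, ∀ x' ∈ X j,
      (f ∩ x ∩ B).Nonempty → (f ∩ x' ∩ B).Nonempty → x = x'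
  xanchor : ∀ j, 1 ≤ j → AVerts A (X j) ⊆ AVerts A (Y (j - 1))
  cross : ∀ i j, i ≠ j → Disjoint (BVerts B (X i ∪ Y i)) (BVerts B (X j ∪ Y j))

section
variable {r : ℕ} {A B : Finset V} {E : Finset (Finset V)} {a0 : V}
  {M : Finset (Finset V)} {X Y : ℕ → Finset (Finset V)}
variable (hr : 2 ≤ r) (hAB : Disjoint A B)
  (hE : ∀ e ∈ E, e ⊆ A ∪ B ∧ (e ∩ A).card = 1 ∧ (e ∩ B).card = r - 1)

include hE in
lemma edge_A_singleton {e : Finset V} (he : e ∈ E) : ∃ a, e ∩ A = {a} :=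
  Finset.card_eq_one.mp (hE e he).2.1

include hE hr in
lemma edge_B_nonempty {e : Finset V} (he : e ∈ E) : (e ∩ B).Nonempty := by
  rw [← Finset.card_pos, (hE e he).2.2]; omega

include hE in
lemma disjoint_of_parts {e f : Finset V} (he : e ∈ E)
    (hA : e ∩ f ∩ A = ∅) (hB : e ∩ f ∩ B = ∅) : Disjoint e f := by
  rw [Finset.disjoint_left]
  intro x hx hxf
  rcases Finset.mem_union.mp ((hE e he).1 hx) with h | h
  · exact Finset.notMem_empty x (hA ▸ Finset.mem_inter.mpr ⟨Finset.mem_inter.mpr ⟨hx, hxf⟩, h⟩)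
  · exact Finset.notMem_empty x (hB ▸ Finset.mem_inter.mpr ⟨Finset.mem_inter.mpr ⟨hx, hxf⟩, h⟩)

/-- Two matching edges sharing a vertex are equal. -/
lemma matching_eq_of_shared (hv : Valid r A B E a0 M X Y) {f f' : Finset V} {x : V}
    (hf : f ∈ M) (hf' : f' ∈ M) (h1 : x ∈ f) (h2 : x ∈ f') : f = f' := by
  by_contra hne
  exact Finset.disjoint_left.mp (hv.mdisj f hf f' hf' hne) h1 h2

lemma ysubM (hv : Valid r A B E a0 M X Y) {j : ℕ} (hj : 1 ≤ j) : Y j ⊆ M := by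
  rw [hv.ydef j hj]; exact Finset.filter_subset _ _

lemma mem_Y_iff (hv : Valid r A B E a0 M X Y) {j : ℕ} (hj : 1 ≤ j) {f : Finset V} :
    f ∈ Y j ↔ f ∈ M ∧ ∃ e ∈ X j, (f ∩ e ∩ B).Nonempty := by
  rw [hv.ydef j hj, Finset.mem_filter, inter_BVerts_nonempty_iff]

include hr hE in
/-- A matching edge in two distinct `Y`-layers is impossible. -/
lemma y_layers_disjoint (hv : Valid r A B E a0 M X Y) {j k : ℕ}
    (hj : 1 ≤ j) (hk : 1 ≤ k) (hjk : j ≠ k) {f : Finset V} (h1 : f ∈ Y j) (h2 : f ∈ Y k) :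
    False := by
  obtain ⟨b, hb⟩ := edge_B_nonempty hr hE (hv.msub (ysubM hv hj h1))
  rw [Finset.mem_inter] at hb
  have hbj : b ∈ BVerts B (X j ∪ Y j) :=
    mem_BVerts.mpr ⟨f, Finset.mem_union_right _ h1, hb.1, hb.2⟩
  have hbk : b ∈ BVerts B (X k ∪ Y k) :=
    mem_BVerts.mpr ⟨f, Finset.mem_union_right _ h2, hb.1, hb.2⟩
  exact Finset.disjoint_left.mp (hv.cross j k hjk) hbj hbk

include hr hE in
/-- A tree edge in two distinct `X`-layers is impossible. -/
lemma x_layers_disjoint (hv : Valid r A B E a0 M X Y) {j k : ℕ}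
    (hjk : j ≠ k) {e : Finset V} (h1 : e ∈ X j) (h2 : e ∈ X k) : False := by
  obtain ⟨b, hb⟩ := edge_B_nonempty hr hE (hv.xsub j h1)
  rw [Finset.mem_inter] at hb
  have hbj : b ∈ BVerts B (X j ∪ Y j) :=
    mem_BVerts.mpr ⟨e, Finset.mem_union_left _ h1, hb.1, hb.2⟩
  have hbk : b ∈ BVerts B (X k ∪ Y k) :=
    mem_BVerts.mpr ⟨e, Finset.mem_union_left _ h2, hb.1, hb.2⟩
  exact Finset.disjoint_left.mp (hv.cross j k hjk) hbj hbk

include hE in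
lemma x_nonempty_of_y (hv : Valid r A B E a0 M X Y) {j : ℕ} (hj : 1 ≤ j)
    (hY : (Y j).Nonempty) : (X j).Nonempty := by
  obtain ⟨f, hf⟩ := hY
  obtain ⟨_, e, he, _⟩ := (mem_Y_iff hv hj).mp hf
  exact ⟨e, he⟩

include hE in
lemma y_nonempty_of_x (hv : Valid r A B E a0 M X Y) {j : ℕ} (hj : 1 ≤ j)
    (hX : (X j).Nonempty) : (Y (j-1)).Nonempty := by
  obtain ⟨e, he⟩ := hX
  obtain ⟨a, ha⟩ := edge_A_singleton hE (hv.xsub j he)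
  have haa : a ∈ AVerts A (X j) := by
    rw [mem_AVerts]
    have : a ∈ e ∩ A := ha ▸ Finset.mem_singleton_self a
    rw [Finset.mem_inter] at this
    exact ⟨e, he, this.1, this.2⟩
  obtain ⟨f, hf, _⟩ := mem_AVerts.mp (hv.xanchor j hj haa)
  exact ⟨f, hf⟩

include hr hE in
lemma y_chain (hv : Valid r A B E a0 M X Y) :
    ∀ d k, 1 ≤ k → (Y (k + d)).Nonempty → (Y k).Nonempty := by
  intro d
  induction d with
  | zero => intro k _ h; exact h
  | succ d ih =>
      intro k hk h
      apply ih k hk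
      by_cases hkd : k + d = 0
      · omega
      · have h1 : 1 ≤ k + d + 1 := by omega
        have hX : (X (k + d + 1)).Nonempty := x_nonempty_of_y hE hv h1 h
        have := y_nonempty_of_x hE hv h1 hX
        simpa using this

include hr hE in
lemma y_layer_bound (hv : Valid r A B E a0 M X Y) {j : ℕ} (hj : 1 ≤ j)
    (hY : (Y j).Nonempty) : j ≤ M.card := by
  classical
  have hne : ∀ k ∈ Finset.Icc 1 j, (Y k).Nonempty := by
    intro k hk
    rw [Finset.mem_Icc] at hk
    have : (Y (k + (j - k))).Nonempty := by
      have : k + (j - k) = j := by omega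
      rw [this]; exact hY
    exact y_chain hr hE hv (j - k) k hk.1 this
  have hsub : (Finset.Icc 1 j).biUnion Y ⊆ M := by
    intro f hf
    obtain ⟨k, hk, hfk⟩ := Finset.mem_biUnion.mp hf
    rw [Finset.mem_Icc] at hk
    exact ysubM hv hk.1 hfk
  have hdisj : ∀ k ∈ Finset.Icc 1 j, ∀ k' ∈ Finset.Icc 1 j, k ≠ k' →
      Disjoint (Y k) (Y k') := by
    intro k hk k' hk' hne'
    rw [Finset.mem_Icc] at hk hk'
    rw [Finset.disjoint_left]
    intro f h1 h2
    exact y_layers_disjoint hr hE hv hk.1 hk'.1 hne' h1 h2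
  have hcard : ((Finset.Icc 1 j).biUnion Y).card = ∑ k ∈ Finset.Icc 1 j, (Y k).card :=
    Finset.card_biUnion hdisj
  have h1 : ∀ k ∈ Finset.Icc 1 j, 1 ≤ (Y k).card := by
    intro k hk; exact Finset.card_pos.mpr (hne k hk)
  have h2 : j ≤ ∑ k ∈ Finset.Icc 1 j, (Y k).card := by
    calc j = ∑ _k ∈ Finset.Icc 1 j, 1 := by simp [Nat.Icc_eq_range', mul_one]
    _ ≤ _ := Finset.sum_le_sum h1
  calc j ≤ ((Finset.Icc 1 j).biUnion Y).card := by omega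
  _ ≤ M.card := Finset.card_le_card hsub

include hr hE in
lemma support_X (hv : Valid r A B E a0 M X Y) {j : ℕ} (hj : NN E ≤ j) : X j = ∅ := by
  by_contra h
  obtain ⟨e, he⟩ := Finset.nonempty_iff_ne_empty.mpr h
  have hj1 : 1 ≤ j := by unfold NN at hj; omega
  have hY : (Y (j-1)).Nonempty := y_nonempty_of_x hE hv hj1 ⟨e, he⟩
  by_cases hj2 : j - 1 = 0
  · unfold NN at hj; omega
  · have := y_layer_bound hr hE hv (by omega : 1 ≤ j - 1) hY
    have hM : M.card ≤ E.card := Finset.card_le_card hv.msub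
    unfold NN at hj; omega

include hr hE in
lemma support_Y (hv : Valid r A B E a0 M X Y) {j : ℕ} (hj : NN E ≤ j) : Y j = ∅ := by
  have hj1 : 1 ≤ j := by unfold NN at hj; omega
  rw [hv.ydef j hj1, support_X hr hE hv hj]
  apply Finset.filter_false_of_mem
  intro f _
  rw [BVerts_empty, Finset.inter_empty]
  simp

include hAB in
lemma BV_layer0 (hv : Valid r A B E a0 M X Y) : BVerts B (X 0 ∪ Y 0) = ∅ := by
  rw [hv.x0, hv.y0]
  ext b
  simp only [mem_BVerts, Finset.notMem_empty, iff_false, Finset.empty_union]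
  rintro ⟨e, he, h1, h2⟩
  rw [Finset.mem_singleton] at he
  subst he
  rw [Finset.mem_singleton] at h1
  subst h1
  exact Finset.disjoint_left.mp hAB hv.root h2

include hr hE in
lemma yb_card (hv : Valid r A B E a0 M X Y) : ∀ m, 1 ≤ m → (Y m).card ≤ E.card := by
  intro m hm
  exact Finset.card_le_card (fun f hf => hv.msub (ysubM hv hm hf))

end
end Haxell
namespace Haxell

variable {V : Type*} [DecidableEq V]

open Finset

section
variable {r : ℕ} {A B : Finset V} {E : Finset (Finset V)} {a0 : V}
  {M : Finset (Finset V)} {X Y : ℕ → Finset (Finset V)}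
variable (hr : 2 ≤ r) (hAB : Disjoint A B)
  (hE : ∀ e ∈ E, e ⊆ A ∪ B ∧ (e ∩ A).card = 1 ∧ (e ∩ B).card = r - 1)

include hr hAB hE in
lemma extend_step (hv : Valid r A B E a0 M X Y) (p : ℕ) (hp : 1 ≤ p)
    {g : Finset V} (hgE : g ∈ E) (hgM : g ∉ M)
    (hanchor : g ∩ A ⊆ AVerts A (Y (p-1)))
    (hgB : ∀ j, g ∩ BVerts B (X j ∪ Y j) = ∅)
    (hbl : ∀ f ∈ M, (f ∩ g ∩ B).Nonempty → ∀ j, f ∉ Y j) :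
    ∃ X1 Y1, Valid r A B E a0 M X1 Y1 ∧ meas E X1 Y1 < meas E X Y := by
  classical
  set Bl : Finset (Finset V) := M.filter (fun f => (f ∩ g ∩ B).Nonempty) with hBldef
  set X1 : ℕ → Finset (Finset V) := fun j => if j = p then insert g (X p) else X j with hX1def
  set Y1 : ℕ → Finset (Finset V) := fun j => if j = p then Y p ∪ Bl else Y j with hY1def
  have hX1p : X1 p = insert g (X p) := by simp [hX1def]
  have hX1n : ∀ j, j ≠ p → X1 j = X j := by intro j hj; simp [hX1def, hj]
  have hY1p : Y1 p = Y p ∪ Bl := by simp [hY1def]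
  have hY1n : ∀ j, j ≠ p → Y1 j = Y j := by intro j hj; simp [hY1def, hj]
  -- auxiliary facts
  have hgBj : ∀ j x, x ∈ X j ∪ Y j → g ∩ x ∩ B = ∅ := by
    intro j x hx
    rw [Finset.eq_empty_iff_forall_notMem]
    intro b hb
    simp only [Finset.mem_inter] at hb
    have : b ∈ g ∩ BVerts B (X j ∪ Y j) :=
      Finset.mem_inter.mpr ⟨hb.1.1, mem_BVerts.mpr ⟨x, hx, hb.1.2, hb.2⟩⟩
    rw [hgB j] at this
    exact Finset.notMem_empty b this
  have hgX : ∀ j, g ∉ X j := by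
    intro j hgXj
    obtain ⟨b, hb⟩ := edge_B_nonempty hr hE hgE
    rw [Finset.mem_inter] at hb
    have : b ∈ g ∩ g ∩ B := by
      simp only [Finset.mem_inter]; exact ⟨⟨hb.1, hb.1⟩, hb.2⟩
    rw [hgBj j g (Finset.mem_union_left _ hgXj)] at this
    exact Finset.notMem_empty b this
  have hBlM : Bl ⊆ M := Finset.filter_subset _ _
  have hBlY : ∀ f ∈ Bl, ∀ j, f ∉ Y j := by
    intro f hf j
    rw [hBldef, Finset.mem_filter] at hf
    exact hbl f hf.1 hf.2 j
  have hBlX : ∀ f ∈ Bl, ∀ j, 1 ≤ j → f ∩ BVerts B (X j) = ∅ := by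
    intro f hf j hj
    by_contra h
    have hne : (f ∩ BVerts B (X j)).Nonempty := Finset.nonempty_iff_ne_empty.mpr h
    have : f ∈ Y j := by
      rw [hv.ydef j hj, Finset.mem_filter]
      exact ⟨hBlM hf, hne⟩
    exact hBlY f hf j this
  refine ⟨X1, Y1, ?_, ?_⟩
  · constructor
    case msub => exact hv.msub
    case mdisj => exact hv.mdisj
    case root => exact hv.root
    case rootfree => exact hv.rootfree
    case x0 => rw [hX1n 0 (by omega)]; exact hv.x0
    case y0 => rw [hY1n 0 (by omega)]; exact hv.y0
    case xsub =>
      intro j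
      by_cases hj : j = p
      · rw [hj, hX1p]; exact Finset.insert_subset hgE (hv.xsub p)
      · rw [hX1n j hj]; exact hv.xsub j
    case xnm =>
      intro j x hx
      by_cases hj : j = p
      · rw [hj, hX1p] at hx
        rcases Finset.mem_insert.mp hx with h | h
        · rw [h]; exact hgM
        · exact hv.xnm p x h
      · rw [hX1n j hj] at hx; exact hv.xnm j x hx
    case xbdisj =>
      intro j x hx x' hx' hne
      by_cases hj : j = p
      · rw [hj, hX1p] at hx hx'
        rcases Finset.mem_insert.mp hx with h | h
        · rcases Finset.mem_insert.mp hx' with h' | h'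
          · exact absurd (h.trans h'.symm) hne
          · rw [h]; exact hgBj p x' (Finset.mem_union_left _ h')
        · rcases Finset.mem_insert.mp hx' with h' | h'
          · rw [h']
            rw [Finset.eq_empty_iff_forall_notMem]
            intro b hb
            simp only [Finset.mem_inter] at hb
            have hmem : b ∈ g ∩ x ∩ B := by
              simp only [Finset.mem_inter]; exact ⟨⟨hb.1.2, hb.1.1⟩, hb.2⟩
            rw [hgBj p x (Finset.mem_union_left _ h)] at hmem
            exact Finset.notMem_empty b hmem
          · exact hv.xbdisj p x h x' h' hne
      · rw [hX1n j hj] at hx hx'; exact hv.xbdisj j x hx x' hx' hne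
    case ydef =>
      intro j hj
      by_cases hjp : j = p
      · subst hjp
        rw [hY1p, hX1p]
        ext f
        simp only [Finset.mem_union, Finset.mem_filter, BVerts_insert]
        rw [hv.ydef j hj]
        simp only [Finset.mem_filter, hBldef]
        constructor
        · rintro (⟨hfM, hne⟩ | ⟨hfM, hne⟩)
          · refine ⟨hfM, ?_⟩
            obtain ⟨b, hb⟩ := hne
            rw [Finset.mem_inter] at hb
            exact ⟨b, by simp only [Finset.mem_inter, Finset.mem_union]; exact ⟨hb.1, Or.inr hb.2⟩⟩
          · refine ⟨hfM, ?_⟩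
            obtain ⟨b, hb⟩ := hne
            simp only [Finset.mem_inter] at hb
            exact ⟨b, by simp only [Finset.mem_inter, Finset.mem_union]
                         exact ⟨hb.1.1, Or.inl ⟨hb.1.2, hb.2⟩⟩⟩
        · rintro ⟨hfM, b, hb⟩
          simp only [Finset.mem_inter, Finset.mem_union] at hb
          rcases hb.2 with h | h
          · right
            exact ⟨hfM, ⟨b, by simp only [Finset.mem_inter]; exact ⟨⟨hb.1, h.1⟩, h.2⟩⟩⟩
          · left; exact ⟨hfM, ⟨b, Finset.mem_inter.mpr ⟨hb.1, h⟩⟩⟩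
      · rw [hY1n j hjp, hX1n j hjp]; exact hv.ydef j hj
    case yuniq =>
      intro j hj f hf x hx x' hx' h1 h2
      by_cases hjp : j = p
      · rw [hjp, hY1p] at hf
        rw [hjp, hX1p] at hx hx'
        rcases Finset.mem_union.mp hf with hfY | hfBl
        · have hfg : ¬ (f ∩ g ∩ B).Nonempty := by
            intro hne
            have : f ∈ Bl := by
              rw [hBldef, Finset.mem_filter]
              exact ⟨ysubM hv (by omega : 1 ≤ p) hfY, hne⟩
            exact hBlY f this p hfY
          have hxX : x ∈ X p := by
            rcases Finset.mem_insert.mp hx with h | h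
            · rw [h] at h1; exact absurd h1 hfg
            · exact h
          have hx'X : x' ∈ X p := by
            rcases Finset.mem_insert.mp hx' with h | h
            · rw [h] at h2; exact absurd h2 hfg
            · exact h
          exact hv.yuniq p (by omega) f hfY x hxX x' hx'X h1 h2
        · have hxg : ∀ z, z ∈ insert g (X p) → (f ∩ z ∩ B).Nonempty → z = g := by
            intro z hz hnez
            rcases Finset.mem_insert.mp hz with h | h
            · exact h
            · exfalso
              obtain ⟨b, hb⟩ := hnez
              simp only [Finset.mem_inter] at hb
              have : b ∈ f ∩ BVerts B (X p) :=
                Finset.mem_inter.mpr ⟨hb.1.1, mem_BVerts.mpr ⟨z, h, hb.1.2, hb.2⟩⟩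
              rw [hBlX f hfBl p (by omega)] at this
              exact Finset.notMem_empty b this
          rw [hxg x hx h1, hxg x' hx' h2]
      · rw [hY1n j hjp] at hf
        rw [hX1n j hjp] at hx hx'
        exact hv.yuniq j hj f hf x hx x' hx' h1 h2
    case xanchor =>
      intro j hj
      by_cases hjp : j = p
      · rw [hjp, hX1p, hY1n (p-1) (by omega), AVerts_insert, ← hjp]
        rw [hjp]
        exact Finset.union_subset hanchor (hv.xanchor p (by omega))
      · rw [hX1n j hjp]
        by_cases hjp1 : j - 1 = p
        · rw [hjp1, hY1p]
          have h0 := hv.xanchor j hj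
          rw [hjp1] at h0
          exact h0.trans (AVerts_mono Finset.subset_union_left)
        · rw [hY1n (j-1) hjp1]; exact hv.xanchor j hj
    case cross =>
      have key : ∀ j, j ≠ p →
          Disjoint (BVerts B (insert g (X p) ∪ (Y p ∪ Bl))) (BVerts B (X j ∪ Y j)) := by
        intro j hj
        rw [Finset.disjoint_left]
        intro b hb hbj
        rw [mem_BVerts] at hb
        obtain ⟨z, hz, hbz, hbB⟩ := hb
        have hbj' := hbj
        rw [mem_BVerts] at hbj'
        obtain ⟨w, hw, hbw, _⟩ := hbj'
        rcases Finset.mem_union.mp hz with hz1 | hz2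
        · rcases Finset.mem_insert.mp hz1 with h | h
          · rw [h] at hbz
            have : b ∈ g ∩ BVerts B (X j ∪ Y j) := Finset.mem_inter.mpr ⟨hbz, hbj⟩
            rw [hgB j] at this
            exact Finset.notMem_empty b this
          · have : b ∈ BVerts B (X p ∪ Y p) :=
              mem_BVerts.mpr ⟨z, Finset.mem_union_left _ h, hbz, hbB⟩
            exact Finset.disjoint_left.mp (hv.cross p j (Ne.symm hj)) this hbj
        · rcases Finset.mem_union.mp hz2 with h | h
          · have : b ∈ BVerts B (X p ∪ Y p) :=
              mem_BVerts.mpr ⟨z, Finset.mem_union_right _ h, hbz, hbB⟩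
            exact Finset.disjoint_left.mp (hv.cross p j (Ne.symm hj)) this hbj
          · by_cases hj0 : j = 0
            · rw [hj0, BV_layer0 hAB hv] at hbj
              exact Finset.notMem_empty b hbj
            · have hj1 : 1 ≤ j := by omega
              rcases Finset.mem_union.mp hw with hw1 | hw2
              · have hzX : z ∩ BVerts B (X j) = ∅ := hBlX z h j hj1
                have : b ∈ z ∩ BVerts B (X j) :=
                  Finset.mem_inter.mpr ⟨hbz, mem_BVerts.mpr ⟨w, hw1, hbw, hbB⟩⟩
                rw [hzX] at this
                exact Finset.notMem_empty b this
              · have hzM : z ∈ M := hBlM h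
                have hwM : w ∈ M := ysubM hv hj1 hw2
                have hzw : z = w := matching_eq_of_shared hv hzM hwM hbz hbw
                rw [hzw] at h
                exact hBlY w h j hw2
      intro i j hij
      by_cases hip : i = p
      · rw [hip, hX1p, hY1p, hX1n j (by omega : j ≠ p), hY1n j (by omega : j ≠ p)]
        exact key j (by omega)
      · rw [hX1n i hip, hY1n i hip]
        by_cases hjp : j = p
        · rw [hjp, hX1p, hY1p]
          exact (key i hip).symm
        · rw [hX1n j hjp, hY1n j hjp]
          exact hv.cross i j hij
  · -- measure decrease
    have hYpne : (Y (p-1)).Nonempty := by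
      obtain ⟨a, ha⟩ := edge_A_singleton hE hgE
      have : a ∈ AVerts A (Y (p-1)) := hanchor (ha ▸ Finset.mem_singleton_self a)
      obtain ⟨f, hf, _⟩ := mem_AVerts.mp this
      exact ⟨f, hf⟩
    have hpN : p ≤ NN E - 1 := by
      by_cases hp1 : p = 1
      · unfold NN; omega
      · have := y_layer_bound hr hE hv (by omega : 1 ≤ p - 1) hYpne
        have hM : M.card ≤ E.card := Finset.card_le_card hv.msub
        unfold NN; omega
    have hY1card : ∀ m, 1 ≤ m → (Y1 m).card ≤ E.card := by
      intro m hm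
      by_cases hmp : m = p
      · rw [hmp, hY1p]
        apply Finset.card_le_card
        apply Finset.union_subset (fun f hf => hv.msub (ysubM hv hp hf))
        exact fun f hf => hv.msub (Finset.filter_subset _ _ hf)
      · rw [hY1n m hmp]
        exact yb_card hr hE hv m hm
    apply meas_decrease p hp hpN
    · intro m hm1 hm2
      exact ⟨hX1n m (by omega), hY1n m (by omega)⟩
    · exact hY1card
    · have hNp : NN E - (NN E - p) = p := by unfold NN at *; omega
      unfold coordF
      rw [hNp, hX1p, hY1p]
      rw [Finset.card_insert_of_notMem (hgX p)]
      have hxE : (X p).card ≤ E.card := Finset.card_le_card (hv.xsub p)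
      have hyE : (Y p ∪ Bl).card ≤ E.card := by
        have := hY1card p hp
        rw [hY1p] at this
        exact this
      have hCC : CC E = E.card + 2 := rfl
      set a := E.card + 1 - (X p).card with ha
      have ha1 : 1 ≤ a := by omega
      have hstep : E.card + 1 - ((X p).card + 1) = a - 1 := by omega
      rw [hstep]
      calc (a - 1) * CC E + (Y p ∪ Bl).card
          < (a - 1) * CC E + CC E := by
            apply Nat.add_lt_add_left
            omega
        _ = a * CC E := by
            have h5 : a - 1 + 1 = a := by omega
            have h6 : (a - 1 + 1) * CC E = (a - 1) * CC E + CC E := Nat.succ_mul _ _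
            rw [h5] at h6
            exact h6.symm
        _ ≤ a * CC E + (Y p).card := Nat.le_add_right _ _
end
end Haxell
namespace Haxell

variable {V : Type*} [DecidableEq V]

open Finset

section
variable {r : ℕ} {A B : Finset V} {E : Finset (Finset V)} {a0 : V}
  {M : Finset (Finset V)} {X Y : ℕ → Finset (Finset V)}
variable (hr : 2 ≤ r) (hAB : Disjoint A B)
  (hE : ∀ e ∈ E, e ⊆ A ∪ B ∧ (e ∩ A).card = 1 ∧ (e ∩ B).card = r - 1)

include hr hAB hE in
lemma swap_step (hv : Valid r A B E a0 M X Y) (i : ℕ) (hi : 2 ≤ i)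
    {e : Finset V} (he : e ∈ X i) (hfree : ∀ f ∈ M, f ∩ e ∩ B = ∅) :
    ∃ M1 X1 Y1, Valid r A B E a0 M1 X1 Y1 ∧ AVerts A M ⊆ AVerts A M1 ∧
      meas E X1 Y1 < meas E X Y := by
  classical
  have heE : e ∈ E := hv.xsub i he
  have heM : e ∉ M := hv.xnm i e he
  obtain ⟨ae, hae⟩ := edge_A_singleton hE heE
  have haee : ae ∈ e := by
    have : ae ∈ e ∩ A := hae ▸ Finset.mem_singleton_self ae
    exact (Finset.mem_inter.mp this).1
  have haeA : ae ∈ A := by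
    have : ae ∈ e ∩ A := hae ▸ Finset.mem_singleton_self ae
    exact (Finset.mem_inter.mp this).2
  have haeXi : ae ∈ AVerts A (X i) := mem_AVerts.mpr ⟨e, he, haee, haeA⟩
  obtain ⟨f2, hf2Y, haef2, _⟩ := mem_AVerts.mp (hv.xanchor i (by omega) haeXi)
  have hf2M : f2 ∈ M := ysubM hv (by omega : 1 ≤ i - 1) hf2Y
  have hf2A : f2 ∩ A = {ae} := by
    obtain ⟨a2, ha2⟩ := edge_A_singleton hE (hv.msub hf2M)
    have : ae ∈ f2 ∩ A := Finset.mem_inter.mpr ⟨haef2, haeA⟩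
    rw [ha2] at this ⊢
    rw [Finset.mem_singleton] at this
    rw [this]
  set M1 : Finset (Finset V) := insert e (M.erase f2) with hM1def
  have hM1sub : M1 ⊆ E := by
    intro f hf
    rcases Finset.mem_insert.mp hf with h | h
    · rw [h]; exact heE
    · exact hv.msub (Finset.mem_of_mem_erase h)
  -- cross-layer helper
  have hBVd : ∀ j k, j ≠ k → ∀ z, z ∈ X j ∪ Y j → z ∩ BVerts B (X k) = ∅ := by
    intro j k hjk z hz
    rw [Finset.eq_empty_iff_forall_notMem]
    intro b hb
    rw [Finset.mem_inter] at hb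
    have hbB : b ∈ B := BVerts_subset_B hb.2
    have h1 : b ∈ BVerts B (X j ∪ Y j) := mem_BVerts.mpr ⟨z, hz, hb.1, hbB⟩
    have h2 : b ∈ BVerts B (X k ∪ Y k) := BVerts_mono Finset.subset_union_left hb.2
    exact Finset.disjoint_left.mp (hv.cross j k hjk) h1 h2
  -- the cascade
  set casc : ℕ → Finset (Finset V) := fun k => Nat.rec ((X i).filter (fun x => ae ∉ x))
    (fun k prev => (X (i+k+1)).filter
      (fun x => x ∩ A ⊆ AVerts A (M1.filter (fun f => (f ∩ BVerts B prev).Nonempty)))) k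
    with hcasdef
  have hcas0 : casc 0 = (X i).filter (fun x => ae ∉ x) := rfl
  have hcasS : ∀ k, casc (k+1) = (X (i+k+1)).filter
      (fun x => x ∩ A ⊆ AVerts A (M1.filter (fun f => (f ∩ BVerts B (casc k)).Nonempty))) :=
    fun k => rfl
  set X1 : ℕ → Finset (Finset V) := fun j => if j < i then X j else casc (j - i) with hX1def
  set Y1 : ℕ → Finset (Finset V) := fun j => if j = 0 then Y 0 else
    M1.filter (fun f => (f ∩ BVerts B (X1 j)).Nonempty) with hY1def
  have hX1lt : ∀ j, j < i → X1 j = X j := by intro j hj; simp [hX1def, hj]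
  have hX1i : X1 i = (X i).filter (fun x => ae ∉ x) := by
    simp only [hX1def, if_neg (by omega : ¬ i < i), Nat.sub_self]
    exact hcas0
  have hX1succ : ∀ j, i ≤ j → X1 (j+1) = (X (j+1)).filter
      (fun x => x ∩ A ⊆ AVerts A (M1.filter (fun f => (f ∩ BVerts B (X1 j)).Nonempty))) := by
    intro j hj
    have h1 : ¬ (j + 1 < i) := by omega
    have h2 : ¬ (j < i) := by omega
    have h3 : j + 1 - i = (j - i) + 1 := by omega
    have h4 : i + (j - i) + 1 = j + 1 := by omega
    simp only [hX1def, if_neg h1, if_neg h2, h3]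
    rw [hcasS (j - i), h4]
  have hX1sub : ∀ j, X1 j ⊆ X j := by
    intro j
    rcases lt_trichotomy j i with h | h | h
    · rw [hX1lt j h]
    · rw [h, hX1i]; exact Finset.filter_subset _ _
    · have hj1 : j = (j - 1) + 1 := by omega
      rw [hj1, hX1succ (j-1) (by omega)]
      exact Finset.filter_subset _ _
  have heX1 : ∀ j, e ∉ X1 j := by
    intro j hej
    by_cases hji : j = i
    · rw [hji, hX1i, Finset.mem_filter] at hej
      exact hej.2 haee
    · exact x_layers_disjoint hr hE hv hji (hX1sub j hej) he
  have heBX1 : ∀ j, e ∩ BVerts B (X1 j) = ∅ := by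
    intro j
    by_cases hji : j = i
    · rw [hji]
      rw [Finset.eq_empty_iff_forall_notMem]
      intro b hb
      rw [Finset.mem_inter] at hb
      obtain ⟨x, hx, hbx, hbB⟩ := mem_BVerts.mp hb.2
      have hxe : x ≠ e := fun hcon => heX1 i (hcon ▸ hx)
      have := hv.xbdisj i e he x (hX1sub i hx) (Ne.symm hxe)
      have hmem : b ∈ e ∩ x ∩ B := by
        simp only [Finset.mem_inter]; exact ⟨⟨hb.1, hbx⟩, hbB⟩
      rw [this] at hmem
      exact Finset.notMem_empty b hmem
    · have h1 : e ∩ BVerts B (X j) = ∅ := hBVd i j (Ne.symm hji) e (Finset.mem_union_left _ he)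
      rw [Finset.eq_empty_iff_forall_notMem]
      intro b hb
      rw [Finset.mem_inter] at hb
      have : b ∈ e ∩ BVerts B (X j) :=
        Finset.mem_inter.mpr ⟨hb.1, BVerts_mono (hX1sub j) hb.2⟩
      rw [h1] at this
      exact Finset.notMem_empty b this
  have hY1zero : Y1 0 = Y 0 := by simp [hY1def]
  have hY1pos : ∀ j, 1 ≤ j → Y1 j = M1.filter (fun f => (f ∩ BVerts B (X1 j)).Nonempty) := by
    intro j hj
    simp only [hY1def]
    rw [if_neg (by omega : ¬ j = 0)]
  have hY1sub : ∀ j, 1 ≤ j → Y1 j ⊆ Y j := by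
    intro j hj f hf
    rw [hY1pos j hj, Finset.mem_filter] at hf
    obtain ⟨hfM1, hne⟩ := hf
    have hfe : f ≠ e := by
      intro hcon
      obtain ⟨b, hb⟩ := hne
      rw [hcon] at hb
      rw [heBX1 j] at hb
      exact Finset.notMem_empty b hb
    have hfM : f ∈ M := by
      rcases Finset.mem_insert.mp hfM1 with h | h
      · exact absurd h hfe
      · exact Finset.mem_of_mem_erase h
    rw [hv.ydef j hj, Finset.mem_filter]
    refine ⟨hfM, ?_⟩
    obtain ⟨b, hb⟩ := hne
    rw [Finset.mem_inter] at hb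
    exact ⟨b, Finset.mem_inter.mpr ⟨hb.1, BVerts_mono (hX1sub j) hb.2⟩⟩
  have hf2BX : ∀ j, j ≠ i - 1 → f2 ∩ BVerts B (X j) = ∅ :=
    fun j hj => hBVd (i-1) j (Ne.symm hj) f2 (Finset.mem_union_right _ hf2Y)
  have hY1lt : ∀ j, 1 ≤ j → j < i - 1 → Y1 j = Y j := by
    intro j hj hji
    apply Finset.Subset.antisymm (hY1sub j hj)
    intro f hf
    have hfY := hf
    rw [hv.ydef j hj, Finset.mem_filter] at hf
    rw [hY1pos j hj, Finset.mem_filter]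
    have hff2 : f ≠ f2 := by
      intro hcon
      exact y_layers_disjoint hr hE hv hj (by omega : 1 ≤ i - 1) (by omega) (hcon ▸ hfY) hf2Y
    have hX1j : X1 j = X j := hX1lt j (by omega)
    refine ⟨Finset.mem_insert_of_mem (Finset.mem_erase.mpr ⟨hff2, hf.1⟩), ?_⟩
    rw [hX1j]
    exact hf.2
  have hY1im1 : Y1 (i-1) = (Y (i-1)).erase f2 := by
    ext f
    rw [hY1pos (i-1) (by omega), Finset.mem_filter, Finset.mem_erase]
    have hX1im1 : X1 (i-1) = X (i-1) := hX1lt (i-1) (by omega)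
    rw [hX1im1]
    constructor
    · rintro ⟨hfM1, hne⟩
      have hfe : f ≠ e := by
        intro hcon
        obtain ⟨b, hb⟩ := hne
        have heB : e ∩ BVerts B (X (i-1)) = ∅ :=
          hBVd i (i-1) (by omega) e (Finset.mem_union_left _ he)
        rw [hcon, heB] at hb
        exact Finset.notMem_empty b hb
      have hf' : f ∈ M.erase f2 := by
        rcases Finset.mem_insert.mp hfM1 with h | h
        · exact absurd h hfe
        · exact h
      rw [Finset.mem_erase] at hf'
      refine ⟨hf'.1, ?_⟩
      rw [hv.ydef (i-1) (by omega), Finset.mem_filter]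
      exact ⟨hf'.2, hne⟩
    · rintro ⟨hff2, hfY⟩
      have hfY' := hfY
      rw [hv.ydef (i-1) (by omega), Finset.mem_filter] at hfY'
      exact ⟨Finset.mem_insert_of_mem (Finset.mem_erase.mpr ⟨hff2, hfY'.1⟩), hfY'.2⟩
  refine ⟨M1, X1, Y1, ?_, ?_, ?_⟩
  · constructor
    case msub => exact hM1sub
    case mdisj =>
      have hkey : ∀ f ∈ M.erase f2, Disjoint e f := by
        intro f hf
        rw [Finset.mem_erase] at hf
        apply disjoint_of_parts hE heE
        · rw [Finset.eq_empty_iff_forall_notMem]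
          intro b hb
          simp only [Finset.mem_inter] at hb
          have : b ∈ e ∩ A := Finset.mem_inter.mpr ⟨hb.1.1, hb.2⟩
          rw [hae, Finset.mem_singleton] at this
          rw [this] at hb
          exact hf.1 (matching_eq_of_shared hv hf.2 hf2M hb.1.2 haef2)
        · rw [Finset.eq_empty_iff_forall_notMem]
          intro b hb
          simp only [Finset.mem_inter] at hb
          have := hfree f hf.2
          have hmem : b ∈ f ∩ e ∩ B := by
            simp only [Finset.mem_inter]; exact ⟨⟨hb.1.2, hb.1.1⟩, hb.2⟩
          rw [this] at hmem
          exact Finset.notMem_empty b hmem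
      intro f hf f' hf' hne
      rcases Finset.mem_insert.mp hf with h | h
      · rcases Finset.mem_insert.mp hf' with h' | h'
        · exact absurd (h.trans h'.symm) hne
        · rw [h]; exact hkey f' h'
      · rcases Finset.mem_insert.mp hf' with h' | h'
        · rw [h']; exact (hkey f h).symm
        · exact hv.mdisj f (Finset.mem_of_mem_erase h) f' (Finset.mem_of_mem_erase h') hne
    case root => exact hv.root
    case rootfree =>
      intro f hf ha0
      rcases Finset.mem_insert.mp hf with h | h
      · rw [h] at ha0
        have : a0 ∈ e ∩ A := Finset.mem_inter.mpr ⟨ha0, hv.root⟩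
        rw [hae, Finset.mem_singleton] at this
        rw [← this] at haef2
        exact hv.rootfree f2 hf2M haef2
      · exact hv.rootfree f (Finset.mem_of_mem_erase h) ha0
    case x0 => rw [hX1lt 0 (by omega)]; exact hv.x0
    case y0 => exact hY1zero.trans hv.y0
    case xsub => intro j; exact (hX1sub j).trans (hv.xsub j)
    case xnm =>
      intro j x hx hxM1
      rcases Finset.mem_insert.mp hxM1 with h | h
      · exact heX1 j (h ▸ hx)
      · exact hv.xnm j x (hX1sub j hx) (Finset.mem_of_mem_erase h)
    case xbdisj =>
      intro j x hx x' hx' hne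
      exact hv.xbdisj j x (hX1sub j hx) x' (hX1sub j hx') hne
    case ydef => intro j hj; exact hY1pos j hj
    case yuniq =>
      intro j hj f hf x hx x' hx' h1 h2
      exact hv.yuniq j hj f (hY1sub j hj hf) x (hX1sub j hx) x' (hX1sub j hx') h1 h2
    case xanchor =>
      intro j hj
      rcases lt_trichotomy j i with hcase | hcase | hcase
      · -- j < i
        rw [hX1lt j hcase]
        have hYeq : Y1 (j-1) = Y (j-1) := by
          by_cases hz : j - 1 = 0
          · rw [hz]; exact hY1zero
          · exact hY1lt (j-1) (by omega) (by omega)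
        rw [hYeq]
        exact hv.xanchor j hj
      · -- j = i
        rw [hcase, hX1i, hY1im1]
        intro a ha
        rw [mem_AVerts] at ha
        obtain ⟨x, hx, hax, haA'⟩ := ha
        rw [Finset.mem_filter] at hx
        have : a ∈ AVerts A (X i) := mem_AVerts.mpr ⟨x, hx.1, hax, haA'⟩
        have ha2 := hv.xanchor i (by omega) this
        rw [mem_AVerts] at ha2
        obtain ⟨f3, hf3, haf3, _⟩ := ha2
        have hf32 : f3 ≠ f2 := by
          intro hcon
          rw [hcon] at haf3
          have : a ∈ f2 ∩ A := Finset.mem_inter.mpr ⟨haf3, haA'⟩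
          rw [hf2A, Finset.mem_singleton] at this
          rw [this] at hax
          exact hx.2 hax
        exact mem_AVerts.mpr ⟨f3, Finset.mem_erase.mpr ⟨hf32, hf3⟩, haf3, haA'⟩
      · -- j > i
        have hj1 : j = (j - 1) + 1 := by omega
        rw [hj1, hX1succ (j-1) (by omega)]
        intro a ha
        rw [mem_AVerts] at ha
        obtain ⟨x, hx, hax, haA'⟩ := ha
        rw [Finset.mem_filter] at hx
        have := hx.2 (Finset.mem_inter.mpr ⟨hax, haA'⟩)
        rw [← hY1pos (j-1) (by omega)] at this
        exact this
    case cross =>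
      intro j k hjk
      have hmono : ∀ m, BVerts B (X1 m ∪ Y1 m) ⊆ BVerts B (X m ∪ Y m) := by
        intro m
        apply BVerts_mono
        by_cases hm : m = 0
        · rw [hm, hX1lt 0 (by omega), hY1zero]
        · exact Finset.union_subset_union (hX1sub m) (hY1sub m (by omega))
      exact Finset.disjoint_of_subset_left (hmono j)
        (Finset.disjoint_of_subset_right (hmono k) (hv.cross j k hjk))
  · -- A-coverage preserved
    intro a ha
    rw [mem_AVerts] at ha ⊢
    obtain ⟨f, hf, haf, haA'⟩ := ha
    by_cases hff2 : f = f2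
    · rw [hff2] at haf
      have : a ∈ f2 ∩ A := Finset.mem_inter.mpr ⟨haf, haA'⟩
      rw [hf2A, Finset.mem_singleton] at this
      rw [this]
      exact ⟨e, Finset.mem_insert_self _ _, haee, haeA⟩
    · exact ⟨f, Finset.mem_insert_of_mem (Finset.mem_erase.mpr ⟨hff2, hf⟩), haf, haA'⟩
  · -- measure decrease
    have hiN : i ≤ NN E - 1 := by
      by_contra hcon
      have : X i = ∅ := support_X hr hE hv (by omega)
      rw [this] at he
      exact Finset.notMem_empty e he
    apply meas_decrease (i-1) (by omega) (by omega)
    · intro m hm1 hm2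
      exact ⟨hX1lt m (by omega), hY1lt m hm1 (by omega)⟩
    · intro m hm
      rw [hY1pos m hm]
      exact Finset.card_le_card ((Finset.filter_subset _ _).trans hM1sub)
    · have hNp : NN E - (NN E - (i-1)) = i - 1 := by unfold NN at *; omega
      unfold coordF
      rw [hNp, hX1lt (i-1) (by omega), hY1im1]
      apply Nat.add_lt_add_left
      rw [Finset.card_erase_of_mem hf2Y]
      have : 0 < (Y (i-1)).card := Finset.card_pos.mpr ⟨f2, hf2Y⟩
      omega
end
end Haxell
namespace Haxell

variable {V : Type*} [DecidableEq V]

open Finset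

section
variable {r : ℕ} {A B : Finset V} {E : Finset (Finset V)} {a0 : V}
  {M : Finset (Finset V)} {X Y : ℕ → Finset (Finset V)}
variable (hr : 2 ≤ r) (hAB : Disjoint A B)
  (hE : ∀ e ∈ E, e ⊆ A ∪ B ∧ (e ∩ A).card = 1 ∧ (e ∩ B).card = r - 1)

include hE in
lemma augment_step (hv : Valid r A B E a0 M X Y)
    {e : Finset V} (he : e ∈ X 1) (hfree : ∀ f ∈ M, f ∩ e ∩ B = ∅) :
    ∃ M', M' ⊆ E ∧ (∀ f ∈ M', ∀ f' ∈ M', f ≠ f' → Disjoint f f') ∧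
      insert a0 (AVerts A M) ⊆ AVerts A M' := by
  have heE : e ∈ E := hv.xsub 1 he
  obtain ⟨ae, hae⟩ := edge_A_singleton hE heE
  have haee : ae ∈ e := by
    have : ae ∈ e ∩ A := hae ▸ Finset.mem_singleton_self ae
    exact (Finset.mem_inter.mp this).1
  have haeA : ae ∈ A := by
    have : ae ∈ e ∩ A := hae ▸ Finset.mem_singleton_self ae
    exact (Finset.mem_inter.mp this).2
  have haeXi : ae ∈ AVerts A (X 1) := mem_AVerts.mpr ⟨e, he, haee, haeA⟩
  have h0 := hv.xanchor 1 (by omega) haeXi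
  have hae0 : ae = a0 := by
    have : AVerts A (Y 0) = {a0} := by rw [hv.y0]; exact AVerts_singleton_root hv.root
    rw [this, Finset.mem_singleton] at h0
    exact h0
  have hkey : ∀ f ∈ M, Disjoint e f := by
    intro f hf
    apply disjoint_of_parts hE heE
    · rw [Finset.eq_empty_iff_forall_notMem]
      intro b hb
      simp only [Finset.mem_inter] at hb
      have : b ∈ e ∩ A := Finset.mem_inter.mpr ⟨hb.1.1, hb.2⟩
      rw [hae, Finset.mem_singleton] at this
      rw [this, hae0] at hb
      exact hv.rootfree f hf hb.1.2
    · rw [Finset.eq_empty_iff_forall_notMem]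
      intro b hb
      simp only [Finset.mem_inter] at hb
      have hmem : b ∈ f ∩ e ∩ B := by
        simp only [Finset.mem_inter]; exact ⟨⟨hb.1.2, hb.1.1⟩, hb.2⟩
      rw [hfree f hf] at hmem
      exact Finset.notMem_empty b hmem
  refine ⟨insert e M, ?_, ?_, ?_⟩
  · exact Finset.insert_subset heE hv.msub
  · intro f hf f' hf' hne
    rcases Finset.mem_insert.mp hf with h | h
    · rcases Finset.mem_insert.mp hf' with h' | h'
      · exact absurd (h.trans h'.symm) hne
      · rw [h]; exact hkey f' h'
    · rcases Finset.mem_insert.mp hf' with h' | h'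
      · rw [h']; exact (hkey f h).symm
      · exact hv.mdisj f h f' h' hne
  · intro a ha
    rcases Finset.mem_insert.mp ha with h | h
    · rw [h]
      exact mem_AVerts.mpr ⟨e, Finset.mem_insert_self _ _, hae0 ▸ haee, hv.root⟩
    · exact AVerts_mono (Finset.subset_insert _ _) h

include hr hE in
lemma layer_bound (hv : Valid r A B E a0 M X Y) (j : ℕ) (hj : 1 ≤ j)
    (hbl : ∀ e ∈ X j, ∃ f ∈ M, (f ∩ e ∩ B).Nonempty) :
    (BVerts B (X j ∪ Y j)).card ≤ (2*r - 3) * (Y j).card := by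
  classical
  -- |X j| ≤ |Y j|
  have hXY : (X j).card ≤ (Y j).card := by
    apply Finset.card_le_card_of_injOn
      (fun e => if h : ∃ f ∈ M, (f ∩ e ∩ B).Nonempty then h.choose else ∅)
    · intro e heX
      have h := hbl e heX
      show (if h : ∃ f ∈ M, (f ∩ e ∩ B).Nonempty then h.choose else ∅) ∈ Y j
      rw [dif_pos h]
      obtain ⟨hM, hne⟩ := h.choose_spec
      rw [hv.ydef j hj, Finset.mem_filter]
      refine ⟨hM, ?_⟩
      obtain ⟨b, hb⟩ := hne
      simp only [Finset.mem_inter] at hb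
      exact ⟨b, Finset.mem_inter.mpr ⟨hb.1.1, mem_BVerts.mpr ⟨e, heX, hb.1.2, hb.2⟩⟩⟩
    · intro e1 h1 e2 h2 heq
      simp only [Finset.mem_coe] at h1 h2
      have hh1 := hbl e1 h1
      have hh2 := hbl e2 h2
      have heq' : hh1.choose = hh2.choose := by
        simpa only [dif_pos hh1, dif_pos hh2] using heq
      obtain ⟨hM1, hne1⟩ := hh1.choose_spec
      obtain ⟨hM2, hne2⟩ := hh2.choose_spec
      rw [heq'] at hne1 hM1
      have hfY : hh2.choose ∈ Y j := by
        rw [hv.ydef j hj, Finset.mem_filter]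
        refine ⟨hM2, ?_⟩
        obtain ⟨b, hb⟩ := hne2
        simp only [Finset.mem_inter] at hb
        exact ⟨b, Finset.mem_inter.mpr ⟨hb.1.1, mem_BVerts.mpr ⟨e2, h2, hb.1.2, hb.2⟩⟩⟩
      exact hv.yuniq j hj hh2.choose hfY e1 h1 e2 h2 hne1 hne2
  -- |BV(X j)| ≤ |X j| * (r-1)
  have hBX : (BVerts B (X j)).card ≤ (X j).card * (r-1) := by
    unfold BVerts
    calc ((X j).biUnion (fun e => e ∩ B)).card ≤ ∑ e ∈ X j, (e ∩ B).card :=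
          Finset.card_biUnion_le
    _ = ∑ _e ∈ X j, (r-1) := by
          apply Finset.sum_congr rfl
          intro e heX
          exact (hE e (hv.xsub j heX)).2.2
    _ = (X j).card * (r-1) := by rw [Finset.sum_const, smul_eq_mul]
  -- covering of the layer's B-vertices
  have hsplit : BVerts B (X j ∪ Y j) ⊆
      BVerts B (X j) ∪ (Y j).biUnion (fun f => (f ∩ B) \ BVerts B (X j)) := by
    intro b hb
    obtain ⟨z, hz, hbz, hbB⟩ := mem_BVerts.mp hb
    rcases Finset.mem_union.mp hz with h | h
    · exact Finset.mem_union_left _ (mem_BVerts.mpr ⟨z, h, hbz, hbB⟩)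
    · by_cases hbX : b ∈ BVerts B (X j)
      · exact Finset.mem_union_left _ hbX
      · apply Finset.mem_union_right
        exact Finset.mem_biUnion.mpr ⟨z, h, Finset.mem_sdiff.mpr
          ⟨Finset.mem_inter.mpr ⟨hbz, hbB⟩, hbX⟩⟩
  have hYpart : ∀ f ∈ Y j, ((f ∩ B) \ BVerts B (X j)).card ≤ r - 2 := by
    intro f hf
    have hfY := hf
    rw [hv.ydef j hj, Finset.mem_filter] at hf
    obtain ⟨b0, hb0⟩ := hf.2
    rw [Finset.mem_inter] at hb0
    have hb0B : b0 ∈ f ∩ B := Finset.mem_inter.mpr ⟨hb0.1, BVerts_subset_B hb0.2⟩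
    have hsub : (f ∩ B) \ BVerts B (X j) ⊆ (f ∩ B).erase b0 := by
      intro b hb
      rw [Finset.mem_sdiff] at hb
      rw [Finset.mem_erase]
      exact ⟨fun hcon => hb.2 (hcon ▸ hb0.2), hb.1⟩
    calc ((f ∩ B) \ BVerts B (X j)).card ≤ ((f ∩ B).erase b0).card :=
          Finset.card_le_card hsub
    _ = (f ∩ B).card - 1 := Finset.card_erase_of_mem hb0B
    _ = r - 2 := by rw [(hE f (hv.msub hf.1)).2.2]; omega
  calc (BVerts B (X j ∪ Y j)).card
      ≤ (BVerts B (X j)).card + ((Y j).biUnion (fun f => (f ∩ B) \ BVerts B (X j))).card := by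
        refine (Finset.card_le_card hsplit).trans ?_
        exact Finset.card_union_le _ _
    _ ≤ (X j).card * (r-1) + ∑ f ∈ Y j, ((f ∩ B) \ BVerts B (X j)).card :=
        Nat.add_le_add hBX Finset.card_biUnion_le
    _ ≤ (Y j).card * (r-1) + ∑ _f ∈ Y j, (r-2) :=
        Nat.add_le_add (Nat.mul_le_mul_right _ hXY) (Finset.sum_le_sum hYpart)
    _ = (Y j).card * (r-1) + (Y j).card * (r-2) := by rw [Finset.sum_const, smul_eq_mul]
    _ = (Y j).card * ((r-1) + (r-2)) := (Nat.mul_add _ _ _).symm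
    _ = (2*r - 3) * (Y j).card := by
        have : (r-1) + (r-2) = 2*r - 3 := by omega
        rw [this, Nat.mul_comm]

include hr hAB hE in
lemma stuck_cover (hv : Valid r A B E a0 M X Y)
    (h1 : ∀ j, ∀ e ∈ X j, ∃ f ∈ M, (f ∩ e ∩ B).Nonempty)
    (h2 : ∀ p, 1 ≤ p → ∀ g ∈ E, g ∉ M → g ∩ A ⊆ AVerts A (Y (p-1)) →
          (∀ j, g ∩ BVerts B (X j ∪ Y j) = ∅) →
          ∃ f ∈ M, (f ∩ g ∩ B).Nonempty ∧ ∃ j, f ∈ Y j) :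
    ∃ S, S ⊆ A ∧ S.Nonempty ∧ ∃ T, T ⊆ B ∧
      (∀ g ∈ edgesOn E S, (g ∩ T).Nonempty) ∧ T.card ≤ (2*r - 3) * (S.card - 1) := by
  classical
  set S : Finset V := (Finset.range (NN E)).biUnion (fun j => AVerts A (Y j)) with hSdef
  set filt : Finset ℕ := (Finset.range (NN E)).filter (fun j => 1 ≤ j) with hfiltdef
  set T : Finset V := filt.biUnion (fun j => BVerts B (X j ∪ Y j)) with hTdef
  have hSA : S ⊆ A := by
    intro a ha
    obtain ⟨j, _, haj⟩ := Finset.mem_biUnion.mp ha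
    exact (mem_AVerts.mp haj).choose_spec.2.2
  have ha0S : a0 ∈ S := by
    apply Finset.mem_biUnion.mpr
    refine ⟨0, Finset.mem_range.mpr (by unfold NN; omega), ?_⟩
    rw [hv.y0, AVerts_singleton_root hv.root]
    exact Finset.mem_singleton_self a0
  have hTB : T ⊆ B := by
    intro b hb
    obtain ⟨j, _, hbj⟩ := Finset.mem_biUnion.mp hb
    exact BVerts_subset_B hbj
  have hTmem : ∀ j, 1 ≤ j → j < NN E → ∀ b ∈ BVerts B (X j ∪ Y j), b ∈ T := by
    intro j hj1 hj2 b hb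
    apply Finset.mem_biUnion.mpr
    exact ⟨j, Finset.mem_filter.mpr ⟨Finset.mem_range.mpr hj2, hj1⟩, hb⟩
  have hYne0 : ∀ j, ∀ f ∈ Y j, f ∈ M → 1 ≤ j := by
    intro j f hf hfM
    by_contra hcon
    have hj0 : j = 0 := by omega
    rw [hj0, hv.y0, Finset.mem_singleton] at hf
    apply hv.rootfree f hfM
    rw [hf]
    exact Finset.mem_singleton_self a0
  refine ⟨S, hSA, ⟨a0, ha0S⟩, T, hTB, ?_, ?_⟩
  · -- covering
    intro g hg
    rw [edgesOn, Finset.mem_filter] at hg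
    obtain ⟨hgE, hgS⟩ := hg
    obtain ⟨ag, hag⟩ := edge_A_singleton hE hgE
    have hagg : ag ∈ g := by
      have : ag ∈ g ∩ A := hag ▸ Finset.mem_singleton_self ag
      exact (Finset.mem_inter.mp this).1
    have hagS : ag ∈ S := by
      obtain ⟨b, hb⟩ := Finset.card_pos.mp (by omega : 0 < (g ∩ S).card)
      rw [Finset.mem_inter] at hb
      have : b ∈ g ∩ A := Finset.mem_inter.mpr ⟨hb.1, hSA hb.2⟩
      rw [hag, Finset.mem_singleton] at this
      rw [← this]
      exact hb.2
    obtain ⟨j0, hj0r, hagY⟩ := Finset.mem_biUnion.mp hagS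
    rw [Finset.mem_range] at hj0r
    by_cases hgM : g ∈ M
    · -- g is a matching edge: it lies in Y j0 and meets B(X j0)
      obtain ⟨f, hfY, hagf, _⟩ := mem_AVerts.mp hagY
      have hj01 : 1 ≤ j0 := hYne0 j0 f hfY (by
        by_cases h : 1 ≤ j0
        · exact ysubM hv h hfY
        · have hj00 : j0 = 0 := by omega
          rw [hj00, hv.y0, Finset.mem_singleton] at hfY
          exfalso
          rw [hj00, hv.y0, AVerts_singleton_root hv.root, Finset.mem_singleton] at hagY
          rw [hagY] at hagg
          exact hv.rootfree g hgM hagg)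
      have hfM : f ∈ M := ysubM hv hj01 hfY
      have hfg : f = g := matching_eq_of_shared hv hfM hgM hagf hagg
      rw [hfg] at hfY
      have := hfY
      rw [hv.ydef j0 hj01, Finset.mem_filter] at this
      obtain ⟨b, hb⟩ := this.2
      rw [Finset.mem_inter] at hb
      refine ⟨b, Finset.mem_inter.mpr ⟨hb.1, hTmem j0 hj01 hj0r b ?_⟩⟩
      exact BVerts_mono Finset.subset_union_left hb.2
    · -- g not a matching edge
      by_cases hgT : (g ∩ T).Nonempty
      · exact hgT
      · exfalso
        have hgBall : ∀ j, g ∩ BVerts B (X j ∪ Y j) = ∅ := by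
          intro j
          by_cases hj0 : j = 0
          · rw [hj0, BV_layer0 hAB hv, Finset.inter_empty]
          · by_cases hjN : j < NN E
            · rw [Finset.eq_empty_iff_forall_notMem]
              intro b hb
              rw [Finset.mem_inter] at hb
              exact hgT ⟨b, Finset.mem_inter.mpr ⟨hb.1, hTmem j (by omega) hjN b hb.2⟩⟩
            · rw [support_X hr hE hv (by omega), support_Y hr hE hv (by omega)]
              rw [Finset.empty_union, BVerts_empty, Finset.inter_empty]
        obtain ⟨f, hfM, hfg, j1, hfY⟩ := h2 (j0+1) (by omega) g hgE hgM
          (by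
            intro a ha
            have : a ∈ g ∩ A := ha
            rw [hag, Finset.mem_singleton] at this
            rw [this]
            simpa using hagY) hgBall
        have hj11 : 1 ≤ j1 := hYne0 j1 f hfY hfM
        have hj1N : j1 < NN E := by
          by_contra hcon
          rw [support_Y hr hE hv (by omega)] at hfY
          exact Finset.notMem_empty f hfY
        obtain ⟨b, hb⟩ := hfg
        simp only [Finset.mem_inter] at hb
        apply hgT
        refine ⟨b, Finset.mem_inter.mpr ⟨hb.1.2, hTmem j1 hj11 hj1N b ?_⟩⟩
        exact mem_BVerts.mpr ⟨f, Finset.mem_union_right _ hfY, hb.1.1, hb.2⟩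
  · -- cardinality bound
    have hUcard : (filt.biUnion (fun j => AVerts A (Y j))).card = ∑ j ∈ filt, (AVerts A (Y j)).card := by
      apply Finset.card_biUnion
      intro j hj k hk hjk
      rw [hfiltdef, Finset.mem_coe, Finset.mem_filter] at hj hk
      rw [Function.onFun, Finset.disjoint_left]
      intro a haj hak
      obtain ⟨f, hf, haf, haA⟩ := mem_AVerts.mp haj
      obtain ⟨f', hf', haf', _⟩ := mem_AVerts.mp hak
      have : f = f' := matching_eq_of_shared hv (ysubM hv hj.2 hf) (ysubM hv hk.2 hf') haf haf'
      rw [this] at hf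
      exact y_layers_disjoint hr hE hv hj.2 hk.2 hjk hf hf'
    have hAY : ∀ j ∈ filt, (AVerts A (Y j)).card = (Y j).card := by
      intro j hj
      rw [hfiltdef, Finset.mem_filter] at hj
      unfold AVerts
      rw [Finset.card_biUnion]
      · calc ∑ f ∈ Y j, (f ∩ A).card = ∑ _f ∈ Y j, 1 := by
              apply Finset.sum_congr rfl
              intro f hf
              exact (hE f (hv.msub (ysubM hv hj.2 hf))).2.1
        _ = (Y j).card := by simp
      · intro f hf f' hf' hne
        have hd := hv.mdisj f (ysubM hv hj.2 hf) f' (ysubM hv hj.2 hf') hne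
        exact Finset.disjoint_of_subset_left Finset.inter_subset_left
          (Finset.disjoint_of_subset_right Finset.inter_subset_left hd)
    have ha0U : a0 ∉ filt.biUnion (fun j => AVerts A (Y j)) := by
      intro hcon
      obtain ⟨j, hj, haj⟩ := Finset.mem_biUnion.mp hcon
      rw [hfiltdef, Finset.mem_filter] at hj
      obtain ⟨f, hf, haf, _⟩ := mem_AVerts.mp haj
      exact hv.rootfree f (ysubM hv hj.2 hf) haf
    have hUS : insert a0 (filt.biUnion (fun j => AVerts A (Y j))) ⊆ S := by
      apply Finset.insert_subset ha0S
      intro a ha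
      obtain ⟨j, hj, haj⟩ := Finset.mem_biUnion.mp ha
      rw [hfiltdef, Finset.mem_filter] at hj
      exact Finset.mem_biUnion.mpr ⟨j, hj.1, haj⟩
    have hsum_le : ∑ j ∈ filt, (Y j).card ≤ S.card - 1 := by
      have h5 : (insert a0 (filt.biUnion (fun j => AVerts A (Y j)))).card =
          (filt.biUnion (fun j => AVerts A (Y j))).card + 1 :=
        Finset.card_insert_of_notMem ha0U
      have h6 := Finset.card_le_card hUS
      rw [h5, hUcard] at h6
      have h7 : ∑ j ∈ filt, (AVerts A (Y j)).card = ∑ j ∈ filt, (Y j).card :=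
        Finset.sum_congr rfl hAY
      omega
    calc T.card ≤ ∑ j ∈ filt, (BVerts B (X j ∪ Y j)).card := Finset.card_biUnion_le
      _ ≤ ∑ j ∈ filt, (2*r - 3) * (Y j).card := by
          apply Finset.sum_le_sum
          intro j hj
          rw [hfiltdef, Finset.mem_filter] at hj
          exact layer_bound hr hE hv j hj.2 (h1 j)
      _ = (2*r - 3) * ∑ j ∈ filt, (Y j).card := (Finset.mul_sum _ _ _).symm
      _ ≤ (2*r - 3) * (S.card - 1) := Nat.mul_le_mul_left _ hsum_le
end
end Haxell
namespace Haxell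

variable {V : Type*} [DecidableEq V]

open Finset

section
variable {r : ℕ} {A B : Finset V} {E : Finset (Finset V)} {a0 : V}
variable (hr : 2 ≤ r) (hAB : Disjoint A B)
  (hE : ∀ e ∈ E, e ⊆ A ∪ B ∧ (e ∩ A).card = 1 ∧ (e ∩ B).card = r - 1)

include hr hAB hE in
lemma aug_main
    (hyp : ∀ S, S ⊆ A → S.Nonempty → ∀ T, T ⊆ B →
      (∀ g ∈ edgesOn E S, (g ∩ T).Nonempty) → ¬ (T.card ≤ (2*r - 3) * (S.card - 1))) :
    ∀ n : ℕ, ∀ M X Y, Valid r A B E a0 M X Y → meas E X Y < n →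
      ∃ M', M' ⊆ E ∧ (∀ f ∈ M', ∀ f' ∈ M', f ≠ f' → Disjoint f f') ∧
        insert a0 (AVerts A M) ⊆ AVerts A M' := by
  intro n
  induction n with
  | zero => intro M X Y _ h; omega
  | succ n ih =>
    intro M X Y hv hm
    by_cases hsw : ∃ j, ∃ e ∈ X j, ∀ f ∈ M, f ∩ e ∩ B = ∅
    · obtain ⟨j, e, he, hfree⟩ := hsw
      have hj0 : j ≠ 0 := by
        intro h; rw [h, hv.x0] at he; exact absurd he (Finset.notMem_empty e)
      by_cases hj1 : j = 1
      · exact augment_step hE hv (hj1 ▸ he) hfree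
      · obtain ⟨M1, X1, Y1, hv1, hcov, hlt⟩ := swap_step hr hAB hE hv j (by omega) he hfree
        obtain ⟨M', h1, h2, h3⟩ := ih M1 X1 Y1 hv1 (by omega)
        refine ⟨M', h1, h2, ?_⟩
        intro a ha
        apply h3
        rcases Finset.mem_insert.mp ha with h | h
        · rw [h]; exact Finset.mem_insert_self _ _
        · exact Finset.mem_insert_of_mem (hcov h)
    · by_cases hex : ∃ p, 1 ≤ p ∧ ∃ g ∈ E, g ∉ M ∧ g ∩ A ⊆ AVerts A (Y (p-1)) ∧
          (∀ j, g ∩ BVerts B (X j ∪ Y j) = ∅) ∧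
          ∀ f ∈ M, (f ∩ g ∩ B).Nonempty → ∀ j, f ∉ Y j
      · obtain ⟨p, hp, g, hgE, hgM, hanch, hgB, hbl⟩ := hex
        obtain ⟨X1, Y1, hv1, hlt⟩ := extend_step hr hAB hE hv p hp hgE hgM hanch hgB hbl
        exact ih M X1 Y1 hv1 (by omega)
      · exfalso
        have h1 : ∀ j, ∀ e ∈ X j, ∃ f ∈ M, (f ∩ e ∩ B).Nonempty := by
          intro j e he
          by_contra hcon
          push_neg at hcon
          apply hsw
          refine ⟨j, e, he, ?_⟩
          intro f hf
          have := hcon f hf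
          exact this
        have h2 : ∀ p, 1 ≤ p → ∀ g ∈ E, g ∉ M → g ∩ A ⊆ AVerts A (Y (p-1)) →
            (∀ j, g ∩ BVerts B (X j ∪ Y j) = ∅) →
            ∃ f ∈ M, (f ∩ g ∩ B).Nonempty ∧ ∃ j, f ∈ Y j := by
          intro p hp g hgE hgM hanch hgB
          by_contra hcon
          push_neg at hcon
          apply hex
          refine ⟨p, hp, g, hgE, hgM, hanch, hgB, ?_⟩
          intro f hf hne j hfY
          exact hcon f hf hne j hfY
        obtain ⟨S, hS, hSne, T, hTB, hcov, hcard⟩ := stuck_cover hr hAB hE hv h1 h2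
        exact hyp S hS hSne T hTB hcov hcard

include hr hAB hE in
lemma matching_on
    (hyp : ∀ S, S ⊆ A → S.Nonempty → ∀ T, T ⊆ B →
      (∀ g ∈ edgesOn E S, (g ∩ T).Nonempty) → ¬ (T.card ≤ (2*r - 3) * (S.card - 1))) :
    ∀ A' : Finset V, A' ⊆ A → ∃ M, M ⊆ E ∧ (∀ f ∈ M, ∀ f' ∈ M, f ≠ f' → Disjoint f f') ∧
      ∀ a ∈ A', ∃ e ∈ M, a ∈ e := by
  classical
  intro A'
  induction A' using Finset.induction_on with
  | empty =>
      intro _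
      exact ⟨∅, by simp, by simp, by simp⟩
  | @insert b A'' hb ih =>
      intro hsub
      obtain ⟨M0, hM0E, hM0d, hM0cov⟩ := ih ((Finset.subset_insert _ _).trans hsub)
      have hbA : b ∈ A := hsub (Finset.mem_insert_self _ _)
      set M' : Finset (Finset V) := M0.filter (fun e => (e ∩ A'').Nonempty) with hM'def
      have hM'E : M' ⊆ E := (Finset.filter_subset _ _).trans hM0E
      have hbM' : ∀ f ∈ M', b ∉ f := by
        intro f hf hbf
        rw [hM'def, Finset.mem_filter] at hf
        obtain ⟨a2, ha2⟩ := hf.2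
        rw [Finset.mem_inter] at ha2
        obtain ⟨af, haf⟩ := edge_A_singleton hE (hM0E hf.1)
        have h1 : a2 ∈ f ∩ A := Finset.mem_inter.mpr ⟨ha2.1, (Finset.subset_insert _ _).trans hsub ha2.2⟩
        have h2 : b ∈ f ∩ A := Finset.mem_inter.mpr ⟨hbf, hbA⟩
        rw [haf, Finset.mem_singleton] at h1 h2
        rw [← h2] at h1
        rw [← h1] at hb
        exact hb ha2.2
      set X0 : ℕ → Finset (Finset V) := fun _ => (∅ : Finset (Finset V)) with hX0def
      set Y0 : ℕ → Finset (Finset V) := fun j => if j = 0 then {({b} : Finset V)} else ∅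
        with hY0def
      have hv : Valid r A B E b M' X0 Y0 := by
        have hBV0 : ∀ i, BVerts B (X0 i ∪ Y0 i) = ∅ := by
          intro i
          rw [Finset.eq_empty_iff_forall_notMem]
          intro x hx
          obtain ⟨z, hz, hxz, hxB⟩ := mem_BVerts.mp hx
          have hzb : z = {b} := by
            rcases Finset.mem_union.mp hz with h | h
            · simp [hX0def] at h
            · rw [hY0def] at h
              by_cases hi : i = 0
              · simpa [hi] using h
              · simp [hi] at h
          rw [hzb, Finset.mem_singleton] at hxz
          rw [hxz] at hxB
          exact Finset.disjoint_left.mp hAB hbA hxB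
        constructor
        case msub => exact hM'E
        case mdisj =>
          intro f hf f' hf' hne
          exact hM0d f (Finset.filter_subset _ _ hf) f' (Finset.filter_subset _ _ hf') hne
        case root => exact hbA
        case rootfree => exact hbM'
        case x0 => rfl
        case y0 => simp [hY0def]
        case xsub => intro j; simp [hX0def]
        case xnm => intro j x hx; simp [hX0def] at hx
        case xbdisj => intro j x hx; simp [hX0def] at hx
        case ydef =>
          intro j hj
          rw [hY0def]
          simp only [if_neg (by omega : ¬ j = 0)]
          rw [hX0def]
          simp only [BVerts_empty, Finset.inter_empty]
          rw [eq_comm, Finset.filter_eq_empty_iff]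
          intro f _
          simp
        case yuniq =>
          intro j hj f hf
          rw [hY0def] at hf
          simp only [if_neg (by omega : ¬ j = 0)] at hf
          exact absurd hf (Finset.notMem_empty f)
        case xanchor =>
          intro j hj
          rw [hX0def]
          intro a ha
          rw [mem_AVerts] at ha
          obtain ⟨e, he, _⟩ := ha
          exact absurd he (Finset.notMem_empty e)
        case cross =>
          intro i j hij
          rw [hBV0 i]
          exact Finset.disjoint_empty_left _
      obtain ⟨M'', h1, h2, h3⟩ :=
        aug_main hr hAB hE hyp (meas E X0 Y0 + 1) M' X0 Y0 hv (by omega)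
      refine ⟨M'', h1, h2, ?_⟩
      intro a ha
      rcases Finset.mem_insert.mp ha with h | h
      · have : a ∈ AVerts A M'' := by
          apply h3
          rw [h]
          exact Finset.mem_insert_self _ _
        obtain ⟨e, he, hae, _⟩ := mem_AVerts.mp this
        exact ⟨e, he, hae⟩
      · obtain ⟨e0, he0, hae0⟩ := hM0cov a h
        have he0M' : e0 ∈ M' := by
          rw [hM'def, Finset.mem_filter]
          exact ⟨he0, ⟨a, Finset.mem_inter.mpr ⟨hae0, h⟩⟩⟩
        have haM' : a ∈ AVerts A M' :=
          mem_AVerts.mpr ⟨e0, he0M', hae0, (Finset.subset_insert _ _).trans hsub h⟩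
        have : a ∈ AVerts A M'' := h3 (Finset.mem_insert_of_mem haM')
        obtain ⟨e, he, hae, _⟩ := mem_AVerts.mp this
        exact ⟨e, he, hae⟩
end
end Haxell
/-- For every `ε > 0`, `r ≥ 2` and `r`-uniform bipartite hypergraph `H = (A, B, E)`:
either `H` admits a perfect matching, or there is `S ⊆ A` with
`τ(E_S) ≤ (2r − 3 + ε)(|S| − 1)`. -/
theorem perfect_matching_or_small_cover {V : Type*} [DecidableEq V]
    (ε : ℝ) (hε : 0 < ε) (r : ℕ) (hr : 2 ≤ r)
    (A B : Finset V) (E : Finset (Finset V))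
    (hH : IsBipHypergraph r A B E) :
    (∃ M, IsPerfectMatching A E M) ∨
    (∃ S ⊆ A, (tau B (edgesOn E S) : ℝ) ≤
      (2 * (r : ℝ) - 3 + ε) * ((S.card : ℝ) - 1)) := by
  classical
  obtain ⟨hAB, hE⟩ := hH
  by_cases hS : ∃ S ⊆ A, (tau B (edgesOn E S) : ℝ) ≤ (2 * (r : ℝ) - 3 + ε) * ((S.card : ℝ) - 1)
  · exact Or.inr hS
  · left
    push_neg at hS
    have hyp : ∀ S, S ⊆ A → S.Nonempty → ∀ T, T ⊆ B →
        (∀ g ∈ edgesOn E S, (g ∩ T).Nonempty) → ¬ (T.card ≤ (2*r - 3) * (S.card - 1)) := by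
      intro S hSA hSne T hTB hcov hle
      have htau : tau B (edgesOn E S) ≤ T.card := Nat.sInf_le ⟨T, hTB, rfl, hcov⟩
      have h3r : 3 ≤ 2*r := by omega
      have h1S : 1 ≤ S.card := Finset.card_pos.mpr hSne
      have hcast : (((2*r - 3) * (S.card - 1) : ℕ) : ℝ) = (2*(r:ℝ) - 3) * ((S.card:ℝ) - 1) := by
        push_cast [Nat.cast_sub h3r, Nat.cast_sub h1S]
        ring
      have hreal : (tau B (edgesOn E S) : ℝ) ≤ (2*(r:ℝ) - 3) * ((S.card:ℝ) - 1) := by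
        calc (tau B (edgesOn E S) : ℝ) ≤ (T.card : ℝ) := by exact_mod_cast htau
        _ ≤ (((2*r - 3) * (S.card - 1) : ℕ) : ℝ) := by exact_mod_cast hle
        _ = (2*(r:ℝ) - 3) * ((S.card:ℝ) - 1) := hcast
      have hlt := hS S hSA
      have hcard1 : (1:ℝ) ≤ (S.card:ℝ) := by exact_mod_cast h1S
      have hmono : (2*(r:ℝ) - 3) * ((S.card:ℝ) - 1) ≤ (2*(r:ℝ) - 3 + ε) * ((S.card:ℝ) - 1) :=
        mul_le_mul_of_nonneg_right (by linarith) (by linarith)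
      linarith
    obtain ⟨M, hME, hMd, hMcov⟩ := Haxell.matching_on hr hAB hE hyp A (Finset.Subset.refl A)
    exact ⟨M, ⟨hME, hMd⟩, hMcov⟩
end

section
/- Let r ≥ 2 and let H = (A, B, E) be an r-uniform bipartite hypergraph satisfying τ(E_S) > (2r − 3)(|S| − 1) for every S ⊆ A. Then for every partial matching M in H and every vertex a_0 ∈ A not matched by M, there exists a partial matching M' in H whose edges match exactly the set of vertices A(M) ∪ {a_0}. -/
open Finset

variable {V : Type*} [DecidableEq V]

namespace HaxellAux

lemma mem_AVerts {A : Finset V} {F : Finset (Finset V)} {a : V} :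
    a ∈ AVerts A F ↔ ∃ e ∈ F, a ∈ e ∧ a ∈ A := by
  simp [AVerts, Finset.mem_biUnion, Finset.mem_inter]
lemma mem_BVerts {B : Finset V} {F : Finset (Finset V)} {b : V} :
    b ∈ BVerts B F ↔ ∃ e ∈ F, b ∈ e ∧ b ∈ B := by
  simp [BVerts, Finset.mem_biUnion, Finset.mem_inter]
lemma BVerts_mono {B : Finset V} {F G : Finset (Finset V)} (h : F ⊆ G) :
    BVerts B F ⊆ BVerts B G := Finset.biUnion_subset_biUnion_of_subset_left _ h
lemma matching_eq {E M : Finset (Finset V)} (hM : IsPartialMatching E M)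
    {f g : Finset V} (hf : f ∈ M) (hg : g ∈ M) {x : V} (hxf : x ∈ f) (hxg : x ∈ g) :
    f = g := by
  by_contra h
  exact (Finset.disjoint_left.mp (hM.2 f hf g hg h) hxf) hxg
lemma edge_aVert {r : ℕ} {A B : Finset V} {E : Finset (Finset V)}
    (hH : IsBipHypergraph r A B E) {e : Finset V} (he : e ∈ E) : ∃ a, e ∩ A = {a} :=
  Finset.card_eq_one.mp (hH.2 e he).2.1
lemma edge_bNonempty {r : ℕ} (hr : 2 ≤ r) {A B : Finset V} {E : Finset (Finset V)}
    (hH : IsBipHypergraph r A B E) {e : Finset V} (he : e ∈ E) : (e ∩ B).Nonempty := by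
  rw [← Finset.card_pos, (hH.2 e he).2.2]; omega
lemma disjoint_of_parts {r : ℕ} {A B : Finset V} {E : Finset (Finset V)}
    (hH : IsBipHypergraph r A B E) {e f : Finset V}
    (he : e ∈ E) (hf : f ∈ E)
    (hA' : e ∩ f ∩ A = ∅) (hB' : e ∩ f ∩ B = ∅) : Disjoint e f := by
  rw [Finset.disjoint_left]; intro x hxe hxf
  rcases Finset.mem_union.mp ((hH.2 e he).1 hxe) with h | h
  · have : x ∈ e ∩ f ∩ A := by simp [Finset.mem_inter, hxe, hxf, h]
    simp [hA'] at this
  · have : x ∈ e ∩ f ∩ B := by simp [Finset.mem_inter, hxe, hxf, h]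
    simp [hB'] at this
lemma AVerts_erase {E M : Finset (Finset V)} (hM : IsPartialMatching E M)
    {A : Finset V} {f : Finset V} (hf : f ∈ M) :
    AVerts A (M.erase f) = AVerts A M \ (f ∩ A) := by
  ext x
  simp only [mem_AVerts, Finset.mem_sdiff, Finset.mem_erase, Finset.mem_inter]
  constructor
  · rintro ⟨g, ⟨hgf, hg⟩, hxg, hxA⟩
    exact ⟨⟨g, hg, hxg, hxA⟩, fun hx => hgf (matching_eq hM hg hf hxg hx.1)⟩
  · rintro ⟨⟨g, hg, hxg, hxA⟩, hnx⟩
    exact ⟨g, ⟨fun h => hnx ⟨h ▸ hxg, hxA⟩, hg⟩, hxg, hxA⟩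

structure St (r : ℕ) (A B : Finset V) (E : Finset (Finset V)) (A₀ : Finset V) (a0 : V)
    (M' : Finset (Finset V)) (ℓ : ℕ) (Xe : ℕ → Finset V) (Yb : ℕ → Finset (Finset V)) :
    Prop where
  hM : IsPartialMatching E M'
  hA : AVerts A M' = A₀
  hXE : ∀ k, 1 ≤ k → k ≤ ℓ → Xe k ∈ E
  hXM : ∀ k, 1 ≤ k → k ≤ ℓ → Xe k ∉ M'
  hYdef : ∀ k, 1 ≤ k → k ≤ ℓ → Yb k = M'.filter fun f => (f ∩ Xe k ∩ B).Nonempty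
  hHang : ∀ k, 1 ≤ k → k ≤ ℓ →
    Xe k ∩ A ⊆ insert a0 ((Finset.Icc 1 (k - 1)).biUnion fun j => AVerts A (Yb j))
  hDisj : ∀ j k, 1 ≤ j → j ≤ ℓ → 1 ≤ k → k ≤ ℓ → j ≠ k →
    Disjoint (Xe j ∩ B ∪ BVerts B (Yb j)) (Xe k ∩ B ∪ BVerts B (Yb k))
  hNe : ∀ k, 1 ≤ k → k < ℓ → (Yb k).Nonempty

namespace St
variable {r : ℕ} {A B : Finset V} {E : Finset (Finset V)} {A₀ : Finset V} {a0 : V}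
  {M' : Finset (Finset V)} {ℓ : ℕ} {Xe : ℕ → Finset V} {Yb : ℕ → Finset (Finset V)}

lemma Ysub (hS : St r A B E A₀ a0 M' ℓ Xe Yb) {k : ℕ} (h1 : 1 ≤ k) (h2 : k ≤ ℓ) :
    Yb k ⊆ M' := by
  rw [hS.hYdef k h1 h2]; exact Finset.filter_subset _ _

lemma Y_disj_layers (hr : 2 ≤ r) (hH : IsBipHypergraph r A B E)
    (hS : St r A B E A₀ a0 M' ℓ Xe Yb) {j k : ℕ}
    (hj1 : 1 ≤ j) (hjl : j ≤ ℓ) (hk1 : 1 ≤ k) (hkl : k ≤ ℓ) (hjk : j ≠ k)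
    {f : Finset V} (hfj : f ∈ Yb j) : f ∉ Yb k := by
  intro hfk
  have hfE : f ∈ E := hS.hM.1 (hS.Ysub hj1 hjl hfj)
  obtain ⟨v, hv⟩ := edge_bNonempty hr hH hfE
  have hv1 : v ∈ BVerts B (Yb j) := mem_BVerts.mpr ⟨f, hfj, (Finset.mem_inter.mp hv).1, (Finset.mem_inter.mp hv).2⟩
  have hv2 : v ∈ BVerts B (Yb k) := mem_BVerts.mpr ⟨f, hfk, (Finset.mem_inter.mp hv).1, (Finset.mem_inter.mp hv).2⟩
  exact Finset.disjoint_left.mp (hS.hDisj j k hj1 hjl hk1 hkl hjk)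
    (Finset.mem_union_right _ hv1) (Finset.mem_union_right _ hv2)

lemma mem_Y_of_meet (hS : St r A B E A₀ a0 M' ℓ Xe Yb) {k : ℕ}
    (h1 : 1 ≤ k) (h2 : k ≤ ℓ) {f : Finset V} (hf : f ∈ M')
    (hmeet : (f ∩ Xe k ∩ B).Nonempty) : f ∈ Yb k := by
  rw [hS.hYdef k h1 h2]; exact Finset.mem_filter.mpr ⟨hf, hmeet⟩

end St
variable {r : ℕ} {A B : Finset V} {E : Finset (Finset V)} {A₀ : Finset V} {a0 : V}
  {M' : Finset (Finset V)} {ℓ : ℕ} {Xe : ℕ → Finset V} {Yb : ℕ → Finset (Finset V)}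

lemma final_augment (hH : IsBipHypergraph r A B E)
    (hM' : IsPartialMatching E M') (hA : AVerts A M' = A₀) (ha0A₀ : a0 ∉ A₀)
    {e : Finset V} (heE : e ∈ E) (heA : e ∩ A = {a0})
    (hunb : ∀ f ∈ M', f ∩ e ∩ B = ∅) :
    ∃ N, IsPartialMatching E N ∧ AVerts A N = A₀ ∪ {a0} := by
  have hd : ∀ h ∈ M', Disjoint e h := by
    intro h hh'
    refine disjoint_of_parts hH heE (hM'.1 hh') ?_ ?_
    · rw [Finset.eq_empty_iff_forall_notMem]
      intro x hx
      simp only [Finset.mem_inter] at hx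
      have hxa : x ∈ e ∩ A := Finset.mem_inter.mpr ⟨hx.1.1, hx.2⟩
      rw [heA, Finset.mem_singleton] at hxa
      subst hxa
      exact ha0A₀ (hA ▸ mem_AVerts.mpr ⟨h, hh', hx.1.2, hx.2⟩)
    · rw [Finset.eq_empty_iff_forall_notMem]
      intro x hx
      simp only [Finset.mem_inter] at hx
      have := hunb h hh'
      rw [Finset.eq_empty_iff_forall_notMem] at this
      exact this x (by simp only [Finset.mem_inter]; tauto)
  refine ⟨insert e M', ⟨Finset.insert_subset heE hM'.1, ?_⟩, ?_⟩
  · intro g hg h hh hgh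
    rcases Finset.mem_insert.mp hg with rfl | hg'
    · rcases Finset.mem_insert.mp hh with rfl | hh'
      · exact absurd rfl hgh
      · exact hd h hh'
    · rcases Finset.mem_insert.mp hh with rfl | hh'
      · exact (hd g hg').symm
      · exact hM'.2 g hg' h hh' hgh
  · rw [AVerts, Finset.biUnion_insert, ← AVerts, hA, heA, Finset.union_comm]

lemma inter3_comm_empty {e g B : Finset V} (h : g ∩ e ∩ B = ∅) : e ∩ g ∩ B = ∅ := by
  rw [Finset.eq_empty_iff_forall_notMem] at h ⊢
  intro x hx
  simp only [Finset.mem_inter] at hx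
  exact h x (by simp only [Finset.mem_inter]; tauto)

lemma swap_step (hr : 2 ≤ r) (hH : IsBipHypergraph r A B E)
    (hS : St r A B E A₀ a0 M' ℓ Xe Yb) (ha0A₀ : a0 ∉ A₀)
    {j : ℕ} (hj1 : 1 ≤ j) (hjl : j ≤ ℓ)
    {e : Finset V} (heE : e ∈ E) (heM : e ∉ M')
    {a : V} (haY : a ∈ AVerts A (Yb j)) (hae : a ∈ e)
    (hunb : ∀ f ∈ M', f ∩ e ∩ B = ∅)
    (havoid : ∀ k, 1 ≤ k → k ≤ j → Disjoint (e ∩ B) (Xe k ∩ B ∪ BVerts B (Yb k))) :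
    ∃ f ∈ Yb j,
      St r A B E A₀ a0 (insert e (M'.erase f)) j Xe
        (Function.update Yb j ((Yb j).erase f)) := by
  obtain ⟨f, hfY, haf, haA⟩ := mem_AVerts.mp haY
  have hfM : f ∈ M' := hS.Ysub hj1 hjl hfY
  have hfE : f ∈ E := hS.hM.1 hfM
  have heA : e ∩ A = {a} := by
    obtain ⟨a', ha'⟩ := edge_aVert hH heE
    have : a ∈ e ∩ A := Finset.mem_inter.mpr ⟨hae, haA⟩
    rw [ha', Finset.mem_singleton] at this
    rw [ha', this]
  have hfA : f ∩ A = {a} := by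
    obtain ⟨a', ha'⟩ := edge_aVert hH hfE
    have : a ∈ f ∩ A := Finset.mem_inter.mpr ⟨haf, haA⟩
    rw [ha', Finset.mem_singleton] at this
    rw [ha', this]
  have hdall : ∀ g ∈ M', g ≠ f → Disjoint e g := by
    intro g hg hgf
    refine disjoint_of_parts hH heE (hS.hM.1 hg) ?_ ?_
    · rw [Finset.eq_empty_iff_forall_notMem]
      intro x hx
      simp only [Finset.mem_inter] at hx
      have hxa : x ∈ e ∩ A := Finset.mem_inter.mpr ⟨hx.1.1, hx.2⟩
      rw [heA, Finset.mem_singleton] at hxa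
      subst hxa
      exact hgf (matching_eq hS.hM hg hfM hx.1.2 haf)
    · exact inter3_comm_empty (hunb g hg)
  have hXneq : ∀ k, 1 ≤ k → k ≤ j → Xe k ≠ e := by
    intro k h1 h2 hEq
    obtain ⟨v, hv⟩ := edge_bNonempty hr hH (hS.hXE k h1 (h2.trans hjl))
    exact Finset.disjoint_left.mp (havoid k h1 h2) (hEq ▸ hv)
      (Finset.mem_union_left _ hv)
  have hYb'sub : ∀ i, Function.update Yb j ((Yb j).erase f) i ⊆ Yb i := by
    intro i
    rcases eq_or_ne i j with rfl | hne
    · rw [Function.update_self]; exact Finset.erase_subset _ _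
    · rw [Function.update_of_ne hne]
  refine ⟨f, hfY, ?_⟩
  constructor
  · constructor
    · exact Finset.insert_subset heE ((Finset.erase_subset _ _).trans hS.hM.1)
    · intro g hg h hh hgh
      rcases Finset.mem_insert.mp hg with rfl | hg'
      · rcases Finset.mem_insert.mp hh with rfl | hh'
        · exact absurd rfl hgh
        · exact hdall h (Finset.mem_of_mem_erase hh') (Finset.ne_of_mem_erase hh')
      · rcases Finset.mem_insert.mp hh with rfl | hh'
        · exact (hdall g (Finset.mem_of_mem_erase hg') (Finset.ne_of_mem_erase hg')).symm
        · exact hS.hM.2 g (Finset.mem_of_mem_erase hg') h (Finset.mem_of_mem_erase hh') hgh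
  · rw [AVerts, Finset.biUnion_insert, ← AVerts, AVerts_erase hS.hM hfM, hS.hA, heA, hfA]
    have haA₀ : a ∈ A₀ := hS.hA ▸ mem_AVerts.mpr ⟨f, hfM, haf, haA⟩
    exact Finset.union_sdiff_of_subset (Finset.singleton_subset_iff.mpr haA₀)
  · intro k h1 h2; exact hS.hXE k h1 (h2.trans hjl)
  · intro k h1 h2 hmem
    rcases Finset.mem_insert.mp hmem with hEq | hmem'
    · exact hXneq k h1 h2 hEq
    · exact hS.hXM k h1 (h2.trans hjl) (Finset.mem_of_mem_erase hmem')
  · intro k h1 h2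
    have hPe : ¬ (e ∩ Xe k ∩ B).Nonempty := by
      rintro ⟨v, hv⟩
      simp only [Finset.mem_inter] at hv
      exact Finset.disjoint_left.mp (havoid k h1 h2)
        (Finset.mem_inter.mpr ⟨hv.1.1, hv.2⟩)
        (Finset.mem_union_left _ (Finset.mem_inter.mpr ⟨hv.1.2, hv.2⟩))
    have hfilter : (insert e (M'.erase f)).filter (fun g => (g ∩ Xe k ∩ B).Nonempty)
        = (Yb k).erase f := by
      rw [Finset.filter_insert, if_neg hPe, Finset.filter_erase,
        ← hS.hYdef k h1 (h2.trans hjl)]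
    rcases eq_or_ne k j with rfl | hne
    · rw [Function.update_self, hfilter]
    · rw [Function.update_of_ne hne, hfilter,
        Finset.erase_eq_of_notMem
          (fun hfk => hS.Y_disj_layers hr hH hj1 hjl h1 (h2.trans hjl)
            (fun h => hne h.symm) hfY hfk)]
  · intro k h1 h2
    have hcong : ((Finset.Icc 1 (k - 1)).biUnion fun i =>
          AVerts A (Function.update Yb j ((Yb j).erase f) i))
        = (Finset.Icc 1 (k - 1)).biUnion fun i => AVerts A (Yb i) := by
      apply Finset.biUnion_congr rfl
      intro i hi
      rw [Function.update_of_ne]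
      have := Finset.mem_Icc.mp hi
      omega
    rw [hcong]
    exact hS.hHang k h1 (h2.trans hjl)
  · intro j' k' h1 h2 h3 h4 hne
    refine (hS.hDisj j' k' h1 (h2.trans hjl) h3 (h4.trans hjl) hne).mono ?_ ?_
    · exact Finset.union_subset_union_right (BVerts_mono (hYb'sub j'))
    · exact Finset.union_subset_union_right (BVerts_mono (hYb'sub k'))
  · intro k h1 h2
    rw [Function.update_of_ne (by omega)]
    exact hS.hNe k h1 (lt_of_lt_of_le h2 hjl)

lemma grow_step (hr : 2 ≤ r) (hH : IsBipHypergraph r A B E)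
    (hS : St r A B E A₀ a0 M' ℓ Xe Yb)
    {e : Finset V} (heE : e ∈ E) (heM : e ∉ M')
    (hhang : e ∩ A ⊆ insert a0 ((Finset.Icc 1 ℓ).biUnion fun k => AVerts A (Yb k)))
    (havoid : ∀ k, 1 ≤ k → k ≤ ℓ → Disjoint (e ∩ B) (Xe k ∩ B ∪ BVerts B (Yb k)))
    (hNeLast : ∀ k, 1 ≤ k → k ≤ ℓ → (Yb k).Nonempty) :
    St r A B E A₀ a0 M' (ℓ + 1) (Function.update Xe (ℓ + 1) e)
      (Function.update Yb (ℓ + 1) (M'.filter fun f => (f ∩ e ∩ B).Nonempty)) := by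
  set Ynew := M'.filter fun f => (f ∩ e ∩ B).Nonempty with hYnew
  have hno : ∀ k, 1 ≤ k → k ≤ ℓ → ∀ f ∈ Ynew, f ∉ Yb k := by
    intro k h1 h2 f hf hfk
    have hfM : f ∈ M' := Finset.mem_filter.mp hf |>.1
    obtain ⟨w, hw⟩ := Finset.mem_filter.mp hf |>.2
    simp only [Finset.mem_inter] at hw
    have hw1 : w ∈ e ∩ B := Finset.mem_inter.mpr ⟨hw.1.2, hw.2⟩
    have hw2 : w ∈ BVerts B (Yb k) := mem_BVerts.mpr ⟨f, hfk, hw.1.1, hw.2⟩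
    exact Finset.disjoint_left.mp (havoid k h1 h2) hw1 (Finset.mem_union_right _ hw2)
  constructor
  · exact hS.hM
  · exact hS.hA
  · intro k h1 h2
    rcases eq_or_ne k (ℓ + 1) with rfl | hne
    · rw [Function.update_self]; exact heE
    · rw [Function.update_of_ne hne]; exact hS.hXE k h1 (by omega)
  · intro k h1 h2
    rcases eq_or_ne k (ℓ + 1) with rfl | hne
    · rw [Function.update_self]; exact heM
    · rw [Function.update_of_ne hne]; exact hS.hXM k h1 (by omega)
  · intro k h1 h2
    rcases eq_or_ne k (ℓ + 1) with rfl | hne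
    · rw [Function.update_self, Function.update_self]
    · rw [Function.update_of_ne hne, Function.update_of_ne hne]
      exact hS.hYdef k h1 (by omega)
  · intro k h1 h2
    rcases eq_or_ne k (ℓ + 1) with rfl | hne
    · rw [Function.update_self]
      have hcong : ((Finset.Icc 1 (ℓ + 1 - 1)).biUnion fun i =>
            AVerts A (Function.update Yb (ℓ + 1) Ynew i))
          = (Finset.Icc 1 ℓ).biUnion fun i => AVerts A (Yb i) := by
        have : ℓ + 1 - 1 = ℓ := by omega
        rw [this]
        apply Finset.biUnion_congr rfl
        intro i hi
        rw [Function.update_of_ne]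
        have := Finset.mem_Icc.mp hi
        omega
      rw [hcong]
      exact hhang
    · rw [Function.update_of_ne hne]
      have hcong : ((Finset.Icc 1 (k - 1)).biUnion fun i =>
            AVerts A (Function.update Yb (ℓ + 1) Ynew i))
          = (Finset.Icc 1 (k - 1)).biUnion fun i => AVerts A (Yb i) := by
        apply Finset.biUnion_congr rfl
        intro i hi
        rw [Function.update_of_ne]
        have := Finset.mem_Icc.mp hi
        have hk : k ≤ ℓ := by omega
        omega
      rw [hcong]
      exact hS.hHang k h1 (by omega)
  · intro j k hj1 hjl hk1 hkl hjk
    have key : ∀ k, 1 ≤ k → k ≤ ℓ →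
        Disjoint (Xe k ∩ B ∪ BVerts B (Yb k)) (e ∩ B ∪ BVerts B Ynew) := by
      intro k h1 h2
      rw [Finset.disjoint_left]
      intro v hv hv'
      rcases Finset.mem_union.mp hv' with hve | hvY
      · exact Finset.disjoint_left.mp (havoid k h1 h2) hve hv
      · obtain ⟨f, hfY, hvf, hvB⟩ := mem_BVerts.mp hvY
        have hfM : f ∈ M' := Finset.mem_filter.mp hfY |>.1
        rcases Finset.mem_union.mp hv with hvX | hvBY
        · have : f ∈ Yb k := hS.mem_Y_of_meet h1 h2 hfM
            ⟨v, by simp only [Finset.mem_inter] at hvX ⊢; tauto⟩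
          exact hno k h1 h2 f hfY this
        · obtain ⟨g, hgY, hvg, _⟩ := mem_BVerts.mp hvBY
          have hgM : g ∈ M' := hS.Ysub h1 h2 hgY
          have : f = g := matching_eq hS.hM hfM hgM hvf hvg
          exact hno k h1 h2 f hfY (this ▸ hgY)
    rcases eq_or_ne j (ℓ + 1) with rfl | hjne
    · have hkl' : k ≤ ℓ := by omega
      rw [Function.update_self, Function.update_self,
        Function.update_of_ne hjk.symm, Function.update_of_ne hjk.symm]
      exact (key k hk1 hkl').symm
    · rcases eq_or_ne k (ℓ + 1) with rfl | hkne
      · have hjl' : j ≤ ℓ := by omega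
        rw [Function.update_self, Function.update_self,
          Function.update_of_ne hjne, Function.update_of_ne hjne]
        exact key j hj1 hjl'
      · rw [Function.update_of_ne hjne, Function.update_of_ne hjne,
          Function.update_of_ne hkne, Function.update_of_ne hkne]
        exact hS.hDisj j k hj1 (by omega) hk1 (by omega) hjk
  · intro k h1 h2
    rw [Function.update_of_ne (by omega)]
    exact hNeLast k h1 (by omega)


lemma card_AVerts_matching (hH : IsBipHypergraph r A B E) {F : Finset (Finset V)}
    (hsub : F ⊆ E) (hdisj : ∀ e ∈ F, ∀ f ∈ F, e ≠ f → Disjoint e f) :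
    (AVerts A F).card = F.card := by
  rw [AVerts, Finset.card_biUnion]
  · rw [Finset.sum_congr rfl (fun e he => (hH.2 e (hsub he)).2.1)]
    simp
  · intro x hx y hy hxy
    exact Finset.disjoint_of_subset_left Finset.inter_subset_left
      (Finset.disjoint_of_subset_right Finset.inter_subset_left (hdisj x hx y hy hxy))

lemma card_BVerts_le (hH : IsBipHypergraph r A B E) {F : Finset (Finset V)}
    (hsub : F ⊆ E) : (BVerts B F).card ≤ (r - 1) * F.card := by
  calc (BVerts B F).card ≤ ∑ f ∈ F, (f ∩ B).card := Finset.card_biUnion_le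
    _ = ∑ _f ∈ F, (r - 1) := Finset.sum_congr rfl (fun f hf => (hH.2 f (hsub hf)).2.2)
    _ = (r - 1) * F.card := by rw [Finset.sum_const, smul_eq_mul, mul_comm]

lemma final_step (hr : 2 ≤ r) (hH : IsBipHypergraph r A B E)
    (hS : St r A B E A₀ a0 M' ℓ Xe Yb) (ha0A : a0 ∈ A) (ha0A₀ : a0 ∉ A₀)
    (hHax : ∀ S ⊆ A,
      (2 * (r : ℤ) - 3) * ((S.card : ℤ) - 1) < (tau B (edgesOn E S) : ℤ))
    (hNeAll : ∀ k, 1 ≤ k → k ≤ ℓ → (Yb k).Nonempty)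
    (hcov : ∀ e ∈ E, e ∉ M' →
      e ∩ A ⊆ insert a0 ((Finset.Icc 1 ℓ).biUnion fun k => AVerts A (Yb k)) →
      ¬ Disjoint (e ∩ B) ((Finset.Icc 1 ℓ).biUnion fun k => Xe k ∩ B ∪ BVerts B (Yb k))) :
    False := by
  set S : Finset V := insert a0 ((Finset.Icc 1 ℓ).biUnion fun k => AVerts A (Yb k)) with hSdef
  set T : Finset V := (Finset.Icc 1 ℓ).biUnion (fun k => Xe k ∩ B ∪ BVerts B (Yb k)) with hTdef
  have hSA : S ⊆ A := by
    refine Finset.insert_subset ha0A (Finset.biUnion_subset.mpr fun k _ => ?_)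
    intro a ha; exact (mem_AVerts.mp ha).choose_spec.2.2
  have hTB : T ⊆ B := by
    refine Finset.biUnion_subset.mpr fun k _ => Finset.union_subset Finset.inter_subset_right ?_
    intro v hv; exact (mem_BVerts.mp hv).choose_spec.2.2
  have hcover : ∀ e ∈ edgesOn E S, (e ∩ T).Nonempty := by
    intro e he
    obtain ⟨heE, hcard⟩ := Finset.mem_filter.mp he
    obtain ⟨a, haA⟩ := edge_aVert hH heE
    have hae : a ∈ e := by
      have : a ∈ e ∩ A := haA ▸ Finset.mem_singleton_self a
      exact (Finset.mem_inter.mp this).1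
    have hsub : e ∩ S ⊆ {a} := by
      rw [← haA]; intro x hx
      exact Finset.mem_inter.mpr ⟨(Finset.mem_inter.mp hx).1, hSA (Finset.mem_inter.mp hx).2⟩
    have hne : (e ∩ S).Nonempty := Finset.card_pos.mp (by rw [hcard]; norm_num)
    have haS : a ∈ S := by
      obtain ⟨x, hx⟩ := hne
      have hx' := hsub hx
      rw [Finset.mem_singleton] at hx'
      subst hx'
      exact (Finset.mem_inter.mp hx).2
    by_cases heM : e ∈ M'
    · have haa0 : a ≠ a0 := by
        intro h; subst h
        refine ha0A₀ ?_
        rw [← hS.hA]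
        exact mem_AVerts.mpr ⟨e, heM, hae, hSA haS⟩
      have hamem : a ∈ (Finset.Icc 1 ℓ).biUnion fun k => AVerts A (Yb k) := by
        rcases Finset.mem_insert.mp haS with h | h
        · exact absurd h haa0
        · exact h
      obtain ⟨k, hk, haY⟩ := Finset.mem_biUnion.mp hamem
      have hk' := Finset.mem_Icc.mp hk
      obtain ⟨f, hfY, haf, _⟩ := mem_AVerts.mp haY
      have hef : e = f := matching_eq hS.hM heM (hS.Ysub hk'.1 hk'.2 hfY) hae haf
      subst hef
      obtain ⟨v, hv⟩ := edge_bNonempty hr hH heE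
      refine ⟨v, Finset.mem_inter.mpr ⟨(Finset.mem_inter.mp hv).1, ?_⟩⟩
      exact Finset.mem_biUnion.mpr ⟨k, hk, Finset.mem_union_right _
        (mem_BVerts.mpr ⟨e, hfY, (Finset.mem_inter.mp hv).1, (Finset.mem_inter.mp hv).2⟩)⟩
    · have hhang : e ∩ A ⊆ S := by rw [haA]; exact Finset.singleton_subset_iff.mpr haS
      obtain ⟨v, hv1, hv2⟩ := Finset.not_disjoint_iff.mp (hcov e heE heM hhang)
      exact ⟨v, Finset.mem_inter.mpr ⟨(Finset.mem_inter.mp hv1).1, hv2⟩⟩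
  have htau : tau B (edgesOn E S) ≤ T.card := Nat.sInf_le ⟨T, hTB, rfl, hcover⟩
  have hYpair : ∀ j ∈ Finset.Icc 1 ℓ, ∀ k ∈ Finset.Icc 1 ℓ, j ≠ k →
      Disjoint (AVerts A (Yb j)) (AVerts A (Yb k)) := by
    intro j hj k hk hjk
    have hj' := Finset.mem_Icc.mp hj
    have hk' := Finset.mem_Icc.mp hk
    rw [Finset.disjoint_left]
    intro x hxj hxk
    obtain ⟨f, hfY, hxf, _⟩ := mem_AVerts.mp hxj
    obtain ⟨g, hgY, hxg, _⟩ := mem_AVerts.mp hxk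
    have : f = g := matching_eq hS.hM (hS.Ysub hj'.1 hj'.2 hfY) (hS.Ysub hk'.1 hk'.2 hgY) hxf hxg
    exact hS.Y_disj_layers hr hH hj'.1 hj'.2 hk'.1 hk'.2 hjk hfY (this ▸ hgY)
  have ha0not : a0 ∉ (Finset.Icc 1 ℓ).biUnion fun k => AVerts A (Yb k) := by
    intro h
    obtain ⟨k, hk, haY⟩ := Finset.mem_biUnion.mp h
    have hk' := Finset.mem_Icc.mp hk
    obtain ⟨f, hfY, haf, haA'⟩ := mem_AVerts.mp haY
    exact ha0A₀ (hS.hA ▸ mem_AVerts.mpr ⟨f, hS.Ysub hk'.1 hk'.2 hfY, haf, haA'⟩)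
  have hterm : ∀ k ∈ Finset.Icc 1 ℓ, (AVerts A (Yb k)).card = (Yb k).card := by
    intro k hk
    have hk' := Finset.mem_Icc.mp hk
    exact card_AVerts_matching hH (fun f hf => hS.hM.1 (hS.Ysub hk'.1 hk'.2 hf))
      (fun e he f hf hef => hS.hM.2 e (hS.Ysub hk'.1 hk'.2 he) f (hS.Ysub hk'.1 hk'.2 hf) hef)
  have hcardS : S.card = 1 + ∑ k ∈ Finset.Icc 1 ℓ, (Yb k).card := by
    rw [hSdef, Finset.card_insert_of_notMem ha0not, Finset.card_biUnion hYpair,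
      Finset.sum_congr rfl hterm]
    omega
  have hcardT : T.card ≤ (2 * r - 3) * ∑ k ∈ Finset.Icc 1 ℓ, (Yb k).card := by
    calc T.card ≤ ∑ k ∈ Finset.Icc 1 ℓ, (Xe k ∩ B ∪ BVerts B (Yb k)).card :=
          Finset.card_biUnion_le
      _ ≤ ∑ k ∈ Finset.Icc 1 ℓ, (2 * r - 3) * (Yb k).card := by
          refine Finset.sum_le_sum fun k hk => ?_
          have hk' := Finset.mem_Icc.mp hk
          obtain ⟨f, hfY⟩ := hNeAll k hk'.1 hk'.2
          have hfY' := hfY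
          rw [hS.hYdef k hk'.1 hk'.2, Finset.mem_filter] at hfY'
          obtain ⟨v, hv⟩ := hfY'.2
          simp only [Finset.mem_inter] at hv
          have hvX : v ∈ Xe k ∩ B := Finset.mem_inter.mpr ⟨hv.1.2, hv.2⟩
          have hvBY : v ∈ BVerts B (Yb k) := mem_BVerts.mpr ⟨f, hfY, hv.1.1, hv.2⟩
          have hsub2 : Xe k ∩ B ∪ BVerts B (Yb k) ⊆ (Xe k ∩ B).erase v ∪ BVerts B (Yb k) := by
            intro x hx
            rcases Finset.mem_union.mp hx with hxX | hxY
            · rcases eq_or_ne x v with rfl | hxv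
              · exact Finset.mem_union_right _ hvBY
              · exact Finset.mem_union_left _ (Finset.mem_erase.mpr ⟨hxv, hxX⟩)
            · exact Finset.mem_union_right _ hxY
          have hYsubE : Yb k ⊆ E := fun g hg => hS.hM.1 (hS.Ysub hk'.1 hk'.2 hg)
          have h1 : ((Xe k ∩ B).erase v).card = r - 2 := by
            rw [Finset.card_erase_of_mem hvX, (hH.2 (Xe k) (hS.hXE k hk'.1 hk'.2)).2.2]
            omega
          have h2 := card_BVerts_le hH hYsubE
          have hy : 1 ≤ (Yb k).card := Finset.card_pos.mpr ⟨f, hfY⟩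
          calc (Xe k ∩ B ∪ BVerts B (Yb k)).card
              ≤ ((Xe k ∩ B).erase v ∪ BVerts B (Yb k)).card := Finset.card_le_card hsub2
            _ ≤ ((Xe k ∩ B).erase v).card + (BVerts B (Yb k)).card := Finset.card_union_le _ _
            _ ≤ (r - 2) + (r - 1) * (Yb k).card := by rw [h1]; omega
            _ ≤ (2 * r - 3) * (Yb k).card := by
                have e1 : (2 * r - 3) * (Yb k).card = (r - 2) * (Yb k).card + (r - 1) * (Yb k).card := by
                  rw [← Nat.add_mul]; congr 1; omega
                have e2 : r - 2 ≤ (r - 2) * (Yb k).card := Nat.le_mul_of_pos_right _ (by omega)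
                omega
      _ = (2 * r - 3) * ∑ k ∈ Finset.Icc 1 ℓ, (Yb k).card := by rw [Finset.mul_sum]
  have hfin := hHax S hSA
  have e1 : ((2 * r - 3 : ℕ) : ℤ) = 2 * (r : ℤ) - 3 := by omega
  have e2 : ((∑ k ∈ Finset.Icc 1 ℓ, (Yb k).card : ℕ) : ℤ) = (S.card : ℤ) - 1 := by
    rw [hcardS]; push_cast; ring
  have h3 : (tau B (edgesOn E S) : ℤ) ≤ ((2 * r - 3 : ℕ) : ℤ) * ((∑ k ∈ Finset.Icc 1 ℓ, (Yb k).card : ℕ) : ℤ) := by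
    have := le_trans htau hcardT
    exact_mod_cast this
  rw [e1, e2] at h3
  linarith

def phi (C K ℓ : ℕ) (Yb : ℕ → Finset (Finset V)) : ℕ :=
  (∑ k ∈ Finset.Icc 1 ℓ, (Yb k).card * C ^ (K - k)) + (C ^ (K - ℓ) - 1)

lemma phi_swap {C K ℓ j : ℕ} {Yb Yb' : ℕ → Finset (Finset V)}
    (hC : 1 ≤ C) (hj1 : 1 ≤ j) (hjl : j ≤ ℓ)
    (h : ∀ k ∈ Finset.Icc 1 j, k ≠ j → Yb' k = Yb k)
    (hj : (Yb' j).card + 1 = (Yb j).card) :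
    phi C K j Yb' < phi C K ℓ Yb := by
  have hjmem : j ∈ Finset.Icc 1 j := by simp [hj1]
  have hsum' : ∑ k ∈ Finset.Icc 1 j, (Yb' k).card * C ^ (K - k)
      = (∑ k ∈ (Finset.Icc 1 j).erase j, (Yb k).card * C ^ (K - k))
        + (Yb' j).card * C ^ (K - j) := by
    rw [← Finset.sum_erase_add _ _ hjmem]
    congr 1
    exact Finset.sum_congr rfl (fun k hk => by
      rw [h k (Finset.mem_of_mem_erase hk) (Finset.ne_of_mem_erase hk)])
  have hsum : ∑ k ∈ Finset.Icc 1 j, (Yb k).card * C ^ (K - k)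
      = (∑ k ∈ (Finset.Icc 1 j).erase j, (Yb k).card * C ^ (K - k))
        + (Yb j).card * C ^ (K - j) := by
    rw [← Finset.sum_erase_add _ _ hjmem]
  have hmono : ∑ k ∈ Finset.Icc 1 j, (Yb k).card * C ^ (K - k)
      ≤ ∑ k ∈ Finset.Icc 1 ℓ, (Yb k).card * C ^ (K - k) :=
    Finset.sum_le_sum_of_subset (Finset.Icc_subset_Icc_right hjl)
  have hcpos : 1 ≤ C ^ (K - j) := Nat.one_le_pow _ _ hC
  have hcpos' : 1 ≤ C ^ (K - ℓ) := Nat.one_le_pow _ _ hC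
  have hprod : (Yb' j).card * C ^ (K - j) + C ^ (K - j) = (Yb j).card * C ^ (K - j) := by
    rw [← hj, add_mul, one_mul]
  unfold phi
  omega

lemma phi_grow {C K ℓ : ℕ} {Yb Yb' : ℕ → Finset (Finset V)}
    (hC : 1 ≤ C) (hlK : ℓ < K)
    (h : ∀ k ∈ Finset.Icc 1 ℓ, Yb' k = Yb k)
    (hy : (Yb' (ℓ + 1)).card + 2 ≤ C) :
    phi C K (ℓ + 1) Yb' < phi C K ℓ Yb := by
  have hKl : K - ℓ = (K - (ℓ + 1)) + 1 := by omega
  have hsum' : ∑ k ∈ Finset.Icc 1 (ℓ + 1), (Yb' k).card * C ^ (K - k)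
      = (∑ k ∈ Finset.Icc 1 ℓ, (Yb k).card * C ^ (K - k))
        + (Yb' (ℓ+1)).card * C ^ (K - (ℓ+1)) := by
    rw [Finset.sum_Icc_succ_top (by omega : 1 ≤ ℓ + 1)]
    congr 1
    exact Finset.sum_congr rfl (fun k hk => by rw [h k hk])
  have hcpos : 1 ≤ C ^ (K - (ℓ+1)) := Nat.one_le_pow _ _ hC
  have hpow : C ^ (K - ℓ) = C * C ^ (K - (ℓ+1)) := by
    rw [hKl, pow_succ, mul_comm]
  have hkey : (Yb' (ℓ+1)).card * C ^ (K - (ℓ+1)) + C ^ (K - (ℓ+1)) + C ^ (K - (ℓ+1))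
      ≤ C * C ^ (K - (ℓ+1)) := by
    have := Nat.mul_le_mul_right (C ^ (K - (ℓ+1))) hy
    nlinarith [hcpos]
  unfold phi
  omega

lemma AVerts_subset {F : Finset (Finset V)} : AVerts A F ⊆ A := by
  intro a ha; exact (mem_AVerts.mp ha).choose_spec.2.2

lemma matching_card_le (hH : IsBipHypergraph r A B E) {M1 : Finset (Finset V)}
    (hM1 : IsPartialMatching E M1) : M1.card ≤ A.card := by
  rw [← card_AVerts_matching hH hM1.1 hM1.2]
  exact Finset.card_le_card AVerts_subset

lemma depth_le (hr : 2 ≤ r) (hH : IsBipHypergraph r A B E)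
    (hS : St r A B E A₀ a0 M' ℓ Xe Yb)
    (hNeAll : ∀ k, 1 ≤ k → k ≤ ℓ → (Yb k).Nonempty) : ℓ ≤ A.card := by
  have hdisjY : ∀ j ∈ Finset.Icc 1 ℓ, ∀ k ∈ Finset.Icc 1 ℓ, j ≠ k →
      Disjoint (Yb j) (Yb k) := by
    intro j hj k hk hjk
    have hj' := Finset.mem_Icc.mp hj
    have hk' := Finset.mem_Icc.mp hk
    rw [Finset.disjoint_left]
    intro f hfj
    exact hS.Y_disj_layers hr hH hj'.1 hj'.2 hk'.1 hk'.2 hjk hfj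
  calc ℓ = ∑ _k ∈ Finset.Icc 1 ℓ, 1 := by
        rw [Finset.sum_const, smul_eq_mul, mul_one, Nat.card_Icc]
        omega
    _ ≤ ∑ k ∈ Finset.Icc 1 ℓ, (Yb k).card := by
        refine Finset.sum_le_sum fun k hk => ?_
        have hk' := Finset.mem_Icc.mp hk
        exact Finset.card_pos.mpr (hNeAll k hk'.1 hk'.2)
    _ = ((Finset.Icc 1 ℓ).biUnion Yb).card := (Finset.card_biUnion hdisjY).symm
    _ ≤ M'.card := by
        refine Finset.card_le_card (Finset.biUnion_subset.mpr fun k hk => ?_)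
        have hk' := Finset.mem_Icc.mp hk
        exact hS.Ysub hk'.1 hk'.2
    _ ≤ A.card := matching_card_le hH hS.hM

lemma rec_aux (hr : 2 ≤ r) (hH : IsBipHypergraph r A B E)
    (hHax : ∀ S ⊆ A,
      (2 * (r : ℤ) - 3) * ((S.card : ℤ) - 1) < (tau B (edgesOn E S) : ℤ))
    (ha0A : a0 ∈ A) (ha0A₀ : a0 ∉ A₀) :
    ∀ (n : ℕ) (M1 : Finset (Finset V)) (l1 : ℕ) (X1 : ℕ → Finset V)
      (Y1 : ℕ → Finset (Finset V)),
      St r A B E A₀ a0 M1 l1 X1 Y1 → phi (A.card + 2) (A.card + 2) l1 Y1 ≤ n →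
      ∃ N, IsPartialMatching E N ∧ AVerts A N = A₀ ∪ {a0} := by
  intro n
  induction n using Nat.strong_induction_on with
  | _ n IH =>
  intro M1 l1 X1 Y1 hst hphi
  set C : ℕ := A.card + 2 with hC
  have hC1 : 1 ≤ C := by omega
  by_cases hα : ∃ e, e ∈ E ∧ e ∉ M1 ∧
      e ∩ A ⊆ insert a0 ((Finset.Icc 1 l1).biUnion fun k => AVerts A (Y1 k)) ∧
      Disjoint (e ∩ B) ((Finset.Icc 1 l1).biUnion fun k => X1 k ∩ B ∪ BVerts B (Y1 k)) ∧
      ∀ f ∈ M1, f ∩ e ∩ B = ∅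
  · obtain ⟨e, heE, heM, hhang, hdisj, hunb⟩ := hα
    obtain ⟨a, haA⟩ := edge_aVert hH heE
    have haeA : a ∈ e ∩ A := by rw [haA]; exact Finset.mem_singleton_self a
    have hae : a ∈ e := (Finset.mem_inter.mp haeA).1
    have haS := hhang haeA
    rcases Finset.mem_insert.mp haS with h | hbi
    · subst h
      exact final_augment hH hst.hM hst.hA ha0A₀ heE haA hunb
    · obtain ⟨j, hj, haY⟩ := Finset.mem_biUnion.mp hbi
      have hj' := Finset.mem_Icc.mp hj
      have havoid : ∀ k, 1 ≤ k → k ≤ j →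
          Disjoint (e ∩ B) (X1 k ∩ B ∪ BVerts B (Y1 k)) := fun k h1 h2 =>
        hdisj.mono_right (Finset.subset_biUnion_of_mem
          (fun i => X1 i ∩ B ∪ BVerts B (Y1 i))
          (Finset.mem_Icc.mpr ⟨h1, le_trans h2 hj'.2⟩))
      obtain ⟨f, hfY, hSnew⟩ := swap_step hr hH hst ha0A₀ hj'.1 hj'.2 heE heM haY hae
        hunb havoid
      have hupd : ∀ k ∈ Finset.Icc 1 j, k ≠ j →
          Function.update Y1 j ((Y1 j).erase f) k = Y1 k := fun k _ hk =>
        Function.update_of_ne hk _ _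
      have hcard : (Function.update Y1 j ((Y1 j).erase f) j).card + 1 = (Y1 j).card := by
        rw [Function.update_self, Finset.card_erase_of_mem hfY]
        have : 1 ≤ (Y1 j).card := Finset.card_pos.mpr ⟨f, hfY⟩
        omega
      have hlt := phi_swap (K := C) hC1 hj'.1 hj'.2 hupd hcard
      exact IH _ (lt_of_lt_of_le hlt hphi) _ j X1 _ hSnew le_rfl
  · by_cases hβ : ∃ k, 1 ≤ k ∧ k ≤ l1 ∧ Y1 k = ∅
    · obtain ⟨k0, hk1, hk2, hk0⟩ := hβ
      have heE : X1 k0 ∈ E := hst.hXE k0 hk1 hk2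
      have heM : X1 k0 ∉ M1 := hst.hXM k0 hk1 hk2
      have hunb : ∀ f ∈ M1, f ∩ X1 k0 ∩ B = ∅ := by
        intro f hf
        by_contra h
        have := hst.mem_Y_of_meet hk1 hk2 hf (Finset.nonempty_iff_ne_empty.mpr h)
        rw [hk0] at this
        exact absurd this (Finset.notMem_empty f)
      obtain ⟨a, haA⟩ := edge_aVert hH heE
      have haeA : a ∈ X1 k0 ∩ A := by rw [haA]; exact Finset.mem_singleton_self a
      have hae : a ∈ X1 k0 := (Finset.mem_inter.mp haeA).1
      have haS := hst.hHang k0 hk1 hk2 haeA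
      rcases Finset.mem_insert.mp haS with h | hbi
      · subst h
        exact final_augment hH hst.hM hst.hA ha0A₀ heE haA hunb
      · obtain ⟨j, hj, haY⟩ := Finset.mem_biUnion.mp hbi
        have hj' := Finset.mem_Icc.mp hj
        have hjk0 : j < k0 := by omega
        have hjl : j ≤ l1 := by omega
        have havoid : ∀ k, 1 ≤ k → k ≤ j →
            Disjoint (X1 k0 ∩ B) (X1 k ∩ B ∪ BVerts B (Y1 k)) := by
          intro k h1 h2
          exact (hst.hDisj k0 k hk1 hk2 h1 (h2.trans hjl) (by omega)).mono_left
            Finset.subset_union_left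
        obtain ⟨f, hfY, hSnew⟩ := swap_step hr hH hst ha0A₀ hj'.1 hjl heE heM haY hae
          hunb havoid
        have hupd : ∀ k ∈ Finset.Icc 1 j, k ≠ j →
            Function.update Y1 j ((Y1 j).erase f) k = Y1 k := fun k _ hk =>
          Function.update_of_ne hk _ _
        have hcard : (Function.update Y1 j ((Y1 j).erase f) j).card + 1 = (Y1 j).card := by
          rw [Function.update_self, Finset.card_erase_of_mem hfY]
          have : 1 ≤ (Y1 j).card := Finset.card_pos.mpr ⟨f, hfY⟩
          omega
        have hlt := phi_swap (K := C) hC1 hj'.1 hjl hupd hcard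
        exact IH _ (lt_of_lt_of_le hlt hphi) _ j X1 _ hSnew le_rfl
    · have hNeAll : ∀ k, 1 ≤ k → k ≤ l1 → (Y1 k).Nonempty := by
        intro k h1 h2
        rcases Finset.eq_empty_or_nonempty (Y1 k) with h | h
        · exact absurd ⟨k, h1, h2, h⟩ hβ
        · exact h
      by_cases hγ : ∃ e, e ∈ E ∧ e ∉ M1 ∧
          e ∩ A ⊆ insert a0 ((Finset.Icc 1 l1).biUnion fun k => AVerts A (Y1 k)) ∧
          Disjoint (e ∩ B) ((Finset.Icc 1 l1).biUnion fun k => X1 k ∩ B ∪ BVerts B (Y1 k))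
      · obtain ⟨e, heE, heM, hhang, hdisj⟩ := hγ
        have havoid : ∀ k, 1 ≤ k → k ≤ l1 →
            Disjoint (e ∩ B) (X1 k ∩ B ∪ BVerts B (Y1 k)) := fun k h1 h2 =>
          hdisj.mono_right (Finset.subset_biUnion_of_mem
            (fun i => X1 i ∩ B ∪ BVerts B (Y1 i)) (Finset.mem_Icc.mpr ⟨h1, h2⟩))
        have hSnew := grow_step hr hH hst heE heM hhang havoid hNeAll
        have hupd : ∀ k ∈ Finset.Icc 1 l1,
            Function.update Y1 (l1 + 1) (M1.filter fun f => (f ∩ e ∩ B).Nonempty) k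
              = Y1 k := by
          intro k hk
          have := Finset.mem_Icc.mp hk
          exact Function.update_of_ne (by omega) _ _
        have hy : (Function.update Y1 (l1 + 1)
            (M1.filter fun f => (f ∩ e ∩ B).Nonempty) (l1 + 1)).card + 2 ≤ C := by
          rw [Function.update_self]
          have h1 : (M1.filter fun f => (f ∩ e ∩ B).Nonempty).card ≤ M1.card :=
            Finset.card_le_card (Finset.filter_subset _ _)
          have h2 := matching_card_le hH hst.hM
          omega
        have hlK : l1 < C := lt_of_le_of_lt (depth_le hr hH hst hNeAll) (by omega)
        have hlt := phi_grow (K := C) hC1 hlK hupd hy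
        exact IH _ (lt_of_lt_of_le hlt hphi) _ (l1 + 1) _ _ hSnew le_rfl
      · exfalso
        refine final_step hr hH hst ha0A ha0A₀ hHax hNeAll ?_
        intro e heE heM hhang hdisj
        exact hγ ⟨e, heE, heM, hhang, hdisj⟩

end HaxellAux

/-- Under Haxell's condition, any partial matching missing a vertex `a0 ∈ A` can be
augmented: there is a partial matching matching exactly `A(M) ∪ {a0}`. -/
theorem augment_partial_matching {V : Type*} [DecidableEq V]
    (r : ℕ) (hr : 2 ≤ r) (A B : Finset V) (E : Finset (Finset V))
    (hH : IsBipHypergraph r A B E)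
    (hHax : ∀ S ⊆ A,
      (2 * (r : ℤ) - 3) * ((S.card : ℤ) - 1) < (tau B (edgesOn E S) : ℤ))
    (M : Finset (Finset V)) (hM : IsPartialMatching E M)
    (a0 : V) (ha0 : a0 ∈ A) (hun : a0 ∉ AVerts A M) :
    ∃ M', IsPartialMatching E M' ∧ AVerts A M' = AVerts A M ∪ {a0} := by
  have hst : HaxellAux.St r A B E (AVerts A M) a0 M 0 (fun _ => ∅) (fun _ => ∅) := by
    constructor
    · exact hM
    · rfl
    · intro k h1 h2; omega
    · intro k h1 h2; omega
    · intro k h1 h2; omega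
    · intro k h1 h2; omega
    · intro j k h1 h2; omega
    · intro k h1 h2; omega
  exact HaxellAux.rec_aux hr hH hHax ha0 hun
    (HaxellAux.phi (A.card + 2) (A.card + 2) 0 (fun _ => ∅)) M 0 _ _ hst le_rfl
end

section
/- Let H = (A, B, E) be an r-uniform bipartite hypergraph (r ≥ 2), M a partial matching in H, and T = (L_0, …, L_ℓ) an alternating tree with respect to M, with layers L_i = (X_i, Y_i). If every edge of X_{≤ℓ} has at least one blocking edge with respect to M, then the total number of B-vertices in the tree satisfies |B(X_{≤ℓ} ∪ Y_{≤ℓ})| ≤ (2r − 3)·|Y_1 ∪ … ∪ Y_ℓ|. -/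
open Finset

variable {V : Type*} [DecidableEq V]

lemma BVerts_biUnion' (B : Finset V) (s : Finset ℕ) (F : ℕ → Finset (Finset V)) :
    BVerts B (s.biUnion F) = s.biUnion fun i => BVerts B (F i) := by
  ext v; simp [BVerts]; tauto

lemma layer_bound (r : ℕ) (hr : 2 ≤ r) (A B : Finset V) (E : Finset (Finset V))
    (hH : IsBipHypergraph r A B E) (M : Finset (Finset V)) (hM : IsPartialMatching E M)
    (Xi Yi : Finset (Finset V)) (hL : IsLayer B E M Xi Yi)
    (hb : ∀ e ∈ Xi, ∃ f ∈ M, (f ∩ e ∩ B).Nonempty) :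
    (BVerts B (Xi ∪ Yi)).card ≤ (2 * r - 3) * Yi.card := by
  obtain ⟨hXE, hXdisj, hYiff, hYuniq⟩ := hL
  -- |Xi| ≤ |Yi|
  have hXY : Xi.card ≤ Yi.card := by
    classical
    apply Finset.card_le_card_of_injOn
      (fun e => if h : ∃ f ∈ M, (f ∩ e ∩ B).Nonempty then h.choose else ∅)
    · intro e he
      have h := hb e he
      simp only [dif_pos h]
      have hc := h.choose_spec
      exact (hYiff _).2 ⟨hc.1, e, he, hc.2⟩
    · intro e1 h1 e2 h2 heq
      have hb1 := hb e1 h1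
      have hb2 := hb e2 h2
      simp only [dif_pos hb1, dif_pos hb2] at heq
      have hc1 := hb1.choose_spec
      have hc2 := hb2.choose_spec
      have hfY : hb1.choose ∈ Yi := (hYiff _).2 ⟨hc1.1, e1, h1, hc1.2⟩
      obtain ⟨e, _, huniq⟩ := hYuniq _ hfY
      have := huniq e1 ⟨h1, hc1.2⟩
      have h2' := huniq e2 ⟨h2, heq ▸ hc2.2⟩
      rw [this, h2']
  set S := BVerts B Xi with hS
  have hBU : BVerts B (Xi ∪ Yi) = S ∪ BVerts B Yi := by
    show BVerts B (Xi ∪ Yi) = BVerts B Xi ∪ BVerts B Yi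
    ext v
    simp only [BVerts, Finset.mem_biUnion, Finset.mem_union, or_and_right, exists_or]
  have hsplit : S ∪ BVerts B Yi = S ∪ (BVerts B Yi \ S) := by
    rw [Finset.union_sdiff_self_eq_union]
  have hdisj : Disjoint S (BVerts B Yi \ S) := Finset.disjoint_sdiff
  rw [hBU, hsplit, Finset.card_union_of_disjoint hdisj]
  -- |S| ≤ (r-1) * |Xi|
  have hScard : S.card ≤ (r - 1) * Xi.card := by
    calc S.card ≤ ∑ e ∈ Xi, (e ∩ B).card := Finset.card_biUnion_le
    _ ≤ ∑ _e ∈ Xi, (r - 1) := by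
        apply Finset.sum_le_sum
        intro e he
        have heE : e ∈ E := (Finset.mem_sdiff.1 (hXE he)).1
        exact le_of_eq (hH.2 e heE).2.2
    _ = (r - 1) * Xi.card := by rw [Finset.sum_const, smul_eq_mul, mul_comm]
  -- |BVerts Yi \ S| ≤ (r-2) * |Yi|
  have hYcard : (BVerts B Yi \ S).card ≤ (r - 2) * Yi.card := by
    have hsub : BVerts B Yi \ S = Yi.biUnion fun f => (f ∩ B) \ S := by
      ext v; simp [BVerts]; tauto
    rw [hsub]
    calc (Yi.biUnion fun f => (f ∩ B) \ S).card ≤ ∑ f ∈ Yi, ((f ∩ B) \ S).card :=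
          Finset.card_biUnion_le
    _ ≤ ∑ _f ∈ Yi, (r - 2) := by
        apply Finset.sum_le_sum
        intro f hf
        obtain ⟨hfM, e, heX, v, hv⟩ := (hYiff f).1 hf
        simp only [Finset.mem_inter] at hv
        have hvS : v ∈ (f ∩ B) ∩ S := by
          simp only [Finset.mem_inter]
          refine ⟨⟨hv.1.1, hv.2⟩, ?_⟩
          simp only [S, BVerts, Finset.mem_biUnion]
          exact ⟨e, heX, Finset.mem_inter.2 ⟨hv.1.2, hv.2⟩⟩
        have hfB : (f ∩ B).card = r - 1 := (hH.2 f (hM.1 hfM)).2.2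
        have h1 : 1 ≤ ((f ∩ B) ∩ S).card := Finset.card_pos.2 ⟨v, hvS⟩
        have := Finset.card_sdiff_add_card_inter (f ∩ B) S
        omega
    _ = (r - 2) * Yi.card := by rw [Finset.sum_const, smul_eq_mul, mul_comm]
  have : (r - 1) * Xi.card + (r - 2) * Yi.card ≤ (2 * r - 3) * Yi.card := by
    have h1 : (r - 1) * Xi.card ≤ (r - 1) * Yi.card := Nat.mul_le_mul_left _ hXY
    have h2 : (r - 1) * Yi.card + (r - 2) * Yi.card = (2 * r - 3) * Yi.card := by
      rw [← Nat.add_mul]; congr 1; omega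
    omega
  omega

/-- If every edge of `X_{≤ℓ}` has at least one blocking edge, then the number of
`B`-vertices in the alternating tree is at most `(2r − 3)·|Y_1 ∪ … ∪ Y_ℓ|`. -/
theorem tree_B_vertices_bound {V : Type*} [DecidableEq V]
    (r : ℕ) (hr : 2 ≤ r) (A B : Finset V) (E : Finset (Finset V))
    (hH : IsBipHypergraph r A B E)
    (M : Finset (Finset V)) (hM : IsPartialMatching E M)
    (a0 : V) (ℓ : ℕ) (X Y : ℕ → Finset (Finset V))
    (hT : IsAltTree A B E M a0 ℓ X Y)
    (hblock : ∀ e ∈ upTo X ℓ, ∃ f ∈ M, (f ∩ e ∩ B).Nonempty) :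
    (BVerts B (upTo X ℓ ∪ upTo Y ℓ)).card ≤ (2 * r - 3) * (unionIcc Y 1 ℓ).card := by
  classical
  obtain ⟨ha0A, ha0M, hX0, hY0, hLayer, _, hdis⟩ := hT
  -- rewrite the B-vertex set as a disjoint union over layers
  have hrw : upTo X ℓ ∪ upTo Y ℓ = (Finset.range (ℓ + 1)).biUnion fun i => X i ∪ Y i := by
    ext e
    simp only [upTo, Finset.mem_union, Finset.mem_biUnion, Finset.mem_range]
    constructor
    · rintro (⟨i, hi, h⟩ | ⟨i, hi, h⟩)
      · exact ⟨i, hi, Or.inl h⟩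
      · exact ⟨i, hi, Or.inr h⟩
    · rintro ⟨i, hi, h | h⟩
      · exact Or.inl ⟨i, hi, h⟩
      · exact Or.inr ⟨i, hi, h⟩
  rw [hrw, BVerts_biUnion']
  have hcard : ((Finset.range (ℓ + 1)).biUnion fun i => BVerts B (X i ∪ Y i)).card
      = ∑ i ∈ Finset.range (ℓ + 1), (BVerts B (X i ∪ Y i)).card := by
    apply Finset.card_biUnion
    intro i hi j hj hij
    exact hdis i j (by simp at hi; omega) (by simp at hj; omega) hij
  rw [hcard]
  have hrange : Finset.range (ℓ + 1) = insert 0 (Finset.Icc 1 ℓ) := by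
    ext i; simp; omega
  have h0 : (BVerts B (X 0 ∪ Y 0)).card = 0 := by
    have ha0B : a0 ∉ B := fun h => (Finset.disjoint_left.1 hH.1) ha0A h
    rw [hX0, hY0]
    simp [BVerts, Finset.singleton_inter_of_notMem ha0B]
  rw [hrange, Finset.sum_insert (by simp), h0, Nat.zero_add]
  -- per-layer bound
  have hle : ∑ i ∈ Finset.Icc 1 ℓ, (BVerts B (X i ∪ Y i)).card
      ≤ ∑ i ∈ Finset.Icc 1 ℓ, (2 * r - 3) * (Y i).card := by
    apply Finset.sum_le_sum
    intro i hi
    simp only [Finset.mem_Icc] at hi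
    apply layer_bound r hr A B E hH M hM _ _ (hLayer i hi.1 hi.2)
    intro e he
    apply hblock
    simp only [upTo, Finset.mem_biUnion]
    exact ⟨i, Finset.mem_range.2 (by omega), he⟩
  refine hle.trans ?_
  rw [← Finset.mul_sum]
  apply Nat.mul_le_mul_left
  -- ∑ |Y i| = |unionIcc Y 1 ℓ| since the Y i are pairwise disjoint
  have : (unionIcc Y 1 ℓ).card = ∑ i ∈ Finset.Icc 1 ℓ, (Y i).card := by
    apply Finset.card_biUnion
    intro i hi j hj hij
    simp only [Finset.mem_coe, Finset.mem_Icc] at hi hj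
    show Disjoint (Y i) (Y j)
    rw [Finset.disjoint_left]
    intro f hfi hfj
    obtain ⟨hfM, e, heX, v, hv⟩ := ((hLayer i hi.1 hi.2).2.2.1 f).1 hfi
    simp only [Finset.mem_inter] at hv
    have hvB : v ∈ BVerts B (X i ∪ Y i) := by
      simp only [BVerts, Finset.mem_biUnion]
      exact ⟨f, Finset.mem_union_right _ hfi, Finset.mem_inter.2 ⟨hv.1.1, hv.2⟩⟩
    have hvB' : v ∈ BVerts B (X j ∪ Y j) := by
      simp only [BVerts, Finset.mem_biUnion]
      exact ⟨f, Finset.mem_union_right _ hfj, Finset.mem_inter.2 ⟨hv.1.1, hv.2⟩⟩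
    exact Finset.disjoint_left.1 (hdis i j (by omega) (by omega) hij) hvB hvB'
  omega
end

section
/- Let H = (A, B, E) be an r-uniform bipartite hypergraph (r ≥ 2), M a partial matching in H, and T = (L_0, …, L_ℓ) an alternating tree with respect to M, with layers L_i = (X_i, Y_i). If every edge of X_{≤ℓ} has at least one blocking edge with respect to M, then |X_{≤ℓ}| ≤ |Y_1 ∪ … ∪ Y_ℓ|; in particular, every vertex a ∈ A is contained in at most |Y_1 ∪ … ∪ Y_ℓ| edges of X_{≤ℓ}. -/
open Finset

variable {V : Type*} [DecidableEq V]

/-- If every edge of `X_{≤ℓ}` has at least one blocking edge, then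
`|X_{≤ℓ}| ≤ |Y_1 ∪ … ∪ Y_ℓ|`; in particular every vertex `a ∈ A` lies in at most
`|Y_1 ∪ … ∪ Y_ℓ|` edges of `X_{≤ℓ}`. -/
theorem tree_X_edges_bound {V : Type*} [DecidableEq V]
    (r : ℕ) (hr : 2 ≤ r) (A B : Finset V) (E : Finset (Finset V))
    (hH : IsBipHypergraph r A B E)
    (M : Finset (Finset V)) (hM : IsPartialMatching E M)
    (a0 : V) (ℓ : ℕ) (X Y : ℕ → Finset (Finset V))
    (hT : IsAltTree A B E M a0 ℓ X Y)
    (hblock : ∀ e ∈ upTo X ℓ, ∃ f ∈ M, (f ∩ e ∩ B).Nonempty) :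
    (upTo X ℓ).card ≤ (unionIcc Y 1 ℓ).card ∧
    ∀ a ∈ A, ((upTo X ℓ).filter fun e => a ∈ e).card ≤ (unionIcc Y 1 ℓ).card := by
  classical
  obtain ⟨hD, hE⟩ := hH
  obtain ⟨ha0A, ha0M, hX0, hY0, hlay, hAsub, hdisj⟩ := hT
  have hmem : ∀ e ∈ upTo X ℓ, ∃ i, 1 ≤ i ∧ i ≤ ℓ ∧ e ∈ X i := by
    intro e he
    obtain ⟨i, hi, hei⟩ := Finset.mem_biUnion.mp he
    rw [Finset.mem_range] at hi
    rcases Nat.eq_zero_or_pos i with h0 | h1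
    · subst h0; rw [hX0] at hei; exact absurd hei (Finset.notMem_empty e)
    · exact ⟨i, h1, Nat.lt_succ_iff.mp hi, hei⟩
  have hcard : (upTo X ℓ).card ≤ (unionIcc Y 1 ℓ).card := by
    have hmapex : ∀ e ∈ upTo X ℓ, ∃ f, f ∈ M ∧ (f ∩ e ∩ B).Nonempty := by
      intro e he; obtain ⟨f, hf, h⟩ := hblock e he; exact ⟨f, hf, h⟩
    set g : Finset V → Finset V := fun e =>
      if h : ∃ f, f ∈ M ∧ (f ∩ e ∩ B).Nonempty then h.choose else ∅ with hg
    have hgspec : ∀ e ∈ upTo X ℓ, g e ∈ M ∧ (g e ∩ e ∩ B).Nonempty := by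
      intro e he
      have h := hmapex e he
      simp only [hg, dif_pos h]
      exact h.choose_spec
    have hgY : ∀ e ∈ upTo X ℓ, ∀ i, 1 ≤ i → i ≤ ℓ → e ∈ X i → g e ∈ Y i := by
      intro e he i h1 hℓ hei
      exact ((hlay i h1 hℓ).2.2.1 (g e)).mpr
        ⟨(hgspec e he).1, e, hei, (hgspec e he).2⟩
    apply Finset.card_le_card_of_injOn g
    · intro e he
      obtain ⟨i, h1, hℓ, hei⟩ := hmem e he
      exact Finset.mem_biUnion.mpr
        ⟨i, Finset.mem_Icc.mpr ⟨h1, hℓ⟩, hgY e he i h1 hℓ hei⟩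
    · intro e1 he1 e2 he2 hgeq
      obtain ⟨i, h1i, hiℓ, he1i⟩ := hmem e1 he1
      obtain ⟨j, h1j, hjℓ, he2j⟩ := hmem e2 he2
      have hfY1 := hgY e1 he1 i h1i hiℓ he1i
      have hfY2 := hgY e2 he2 j h1j hjℓ he2j
      rw [hgeq] at hfY1
      have hij : i = j := by
        by_contra hne
        obtain ⟨x, hx⟩ := (hgspec e2 he2).2
        have hxB : x ∈ g e2 ∩ B := by
          simp only [Finset.mem_inter] at hx ⊢
          exact ⟨hx.1.1, hx.2⟩
        have hxi : x ∈ BVerts B (X i ∪ Y i) :=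
          Finset.mem_biUnion.mpr ⟨g e2, Finset.mem_union_right _ hfY1, hxB⟩
        have hxj : x ∈ BVerts B (X j ∪ Y j) :=
          Finset.mem_biUnion.mpr ⟨g e2, Finset.mem_union_right _ hfY2, hxB⟩
        exact Finset.disjoint_left.mp (hdisj i j hiℓ hjℓ hne) hxi hxj
      subst hij
      obtain ⟨e, -, hu⟩ := (hlay i h1i hiℓ).2.2.2 (g e2) hfY2
      have h1 := hu e1 ⟨he1i, by rw [← hgeq]; exact (hgspec e1 he1).2⟩
      have h2 := hu e2 ⟨he2j, (hgspec e2 he2).2⟩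
      rw [h1, h2]
  refine ⟨hcard, fun a _ => le_trans ?_ hcard⟩
  exact Finset.card_le_card (Finset.filter_subset _ _)
end
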